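/- arXiv:2504.19817 — 5 statements merged into one kernel-verified Lean document; each statement's English description precedes it below -/
import Mathlib

section
/- Let N ≥ 3, α > −2, μ < 0 and λ ∈ ℝ. Then for every u ∈ C_c^∞(Ω) one has I(u) − (1/2*_α)·⟨I'(u),u⟩ ≥ ((α+2)/(2(N+α)))·∫_Ω|∇u|² + (μ(α+2)/(2(N+α)))·e^{(N+α)/(α+2) − λ/μ − 1}·|Ω|, where ⟨I'(u),u⟩ := ∫_Ω|∇u|² − ∫_Ω|x|^α (u₊)^{2*_α} − λ∫_Ω (u₊)² − μ∫_Ω (u₊)² log((u₊)²). -/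
open MeasureTheory Metric Set Filter

noncomputable section

abbrev Euc (N : ℕ) := EuclideanSpace ℝ (Fin N)

/-- The domain: unit ball if `0 ≤ α`, punctured unit ball if `α < 0`. -/
def Omega (N : ℕ) (α : ℝ) : Set (Euc N) :=
  if 0 ≤ α then Metric.ball 0 1 else Metric.ball 0 1 \ {0}

/-- The critical exponent `2*_α = 2(N+α)/(N-2)`. -/
def critExp (N : ℕ) (α : ℝ) : ℝ := 2 * ((N : ℝ) + α) / ((N : ℝ) - 2)

/-- A function is radial if it only depends on the norm. -/
def IsRadial {N : ℕ} (u : Euc N → ℝ) : Prop := ∀ x y : Euc N, ‖x‖ = ‖y‖ → u x = u y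

/-- The Laplacian, as the sum of the second derivatives in coordinate directions. -/
def laplacian {N : ℕ} (u : Euc N → ℝ) (x : Euc N) : ℝ :=
  ∑ i : Fin N, fderiv ℝ (fun y => fderiv ℝ u y (EuclideanSpace.single i 1)) x
    (EuclideanSpace.single i 1)

/-- The energy functional `I`. -/
def energy (N : ℕ) (α lam mu : ℝ) (u : Euc N → ℝ) : ℝ :=
  (1 / 2) * (∫ x in Omega N α, ‖fderiv ℝ u x‖ ^ 2)
    - (1 / critExp N α) * (∫ x in Omega N α, ‖x‖ ^ α * (max (u x) 0) ^ critExp N α)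
    - (lam / 2) * (∫ x in Omega N α, (max (u x) 0) ^ 2)
    - (mu / 2) * (∫ x in Omega N α, (max (u x) 0) ^ 2 * (Real.log ((max (u x) 0) ^ 2) - 1))

/-- Smooth compactly supported test functions in `Ω`. -/
def TestFun (N : ℕ) (α : ℝ) (v : Euc N → ℝ) : Prop :=
  ContDiff ℝ (⊤ : ℕ∞) v ∧ HasCompactSupport v ∧ tsupport v ⊆ Omega N α

/-- The first Dirichlet eigenvalue of `-Δ` on the unit ball. -/
def lambda1 (N : ℕ) : ℝ :=
  sInf ((fun v : Euc N → ℝ =>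
      (∫ x in Metric.ball (0 : Euc N) 1, ‖fderiv ℝ v x‖ ^ 2) /
        ∫ x in Metric.ball (0 : Euc N) 1, (v x) ^ 2) ''
    {v | ContDiff ℝ (⊤ : ℕ∞) v ∧ HasCompactSupport v ∧
      tsupport v ⊆ Metric.ball (0 : Euc N) 1 ∧ v ≠ 0})

/-- The best constant `S_α` in the Hardy–Sobolev inequality for radial functions. -/
def Sconst (N : ℕ) (α : ℝ) : ℝ :=
  sInf ((fun v : Euc N → ℝ =>
      (∫ x, ‖fderiv ℝ v x‖ ^ 2) /
        (∫ x, ‖x‖ ^ α * |v x| ^ critExp N α) ^ (2 / critExp N α)) ''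
    {v | ContDiff ℝ (⊤ : ℕ∞) v ∧ HasCompactSupport v ∧ IsRadial v ∧ v ≠ 0})

/-- The parameter region `B₀`. -/
def B0 (N : ℕ) (α : ℝ) : Set (ℝ × ℝ) :=
  {p | 0 ≤ p.1 ∧ p.1 < lambda1 N ∧ p.2 < 0 ∧
    0 < ((α + 2) / (2 * ((N : ℝ) + α))) *
        ((lambda1 N - p.1) / lambda1 N) ^ (((N : ℝ) + α) / (α + 2)) *
        Sconst N α ^ (((N : ℝ) + α) / (α + 2)) +
      (p.2 / 2) * (volume (Omega N α)).toReal}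

/-- The parameter region `C₀`. -/
def C0 (N : ℕ) (α : ℝ) : Set (ℝ × ℝ) :=
  {p | p.2 < 0 ∧
    0 < ((α + 2) / (2 * ((N : ℝ) + α))) * Sconst N α ^ (((N : ℝ) + α) / (α + 2)) +
      (p.2 / 2) * Real.exp (-(p.1 / p.2)) * (volume (Omega N α)).toReal}

/-- The extremal (Aubin–Talenti type) bubble `u_{ε,α}`. -/
def bubbleFn (N : ℕ) (α ε : ℝ) (x : Euc N) : ℝ :=
  (((N : ℝ) + α) * ((N : ℝ) - 2)) ^ (((N : ℝ) - 2) / (2 * (α + 2))) * ε ^ (((N : ℝ) - 2) / 2) *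
    (ε ^ (α + 2) + ‖x‖ ^ (α + 2)) ^ (-(((N : ℝ) - 2) / (α + 2)))

/-- The normalizing constant `C_{α,N}`. -/
def Cconst (N : ℕ) (α : ℝ) : ℝ := (((N : ℝ) + α) * ((N : ℝ) - 2)) ^ (((N : ℝ) - 2) / (2 * (α + 2)))

/-- Surface measure of the unit sphere in `ℝ^N`, as `N·vol(B₁)`. -/
def omegaN (N : ℕ) : ℝ := (N : ℝ) * (volume (Metric.ball (0 : Euc N) 1)).toReal

end

lemma key_ineq (c1 c2 s : ℝ) (hc2 : 0 < c2) (hs : 0 ≤ s) :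
    -c2 * Real.exp (-c1 / c2 - 1) ≤ c1 * s + c2 * (s * Real.log s) := by
  rcases eq_or_lt_of_le hs with h | h
  · rw [← h]
    simp only [mul_zero, zero_mul, Real.log_zero, add_zero]
    nlinarith [Real.exp_pos (-c1 / c2 - 1)]
  · set t : ℝ := -c1 / c2 - 1 with ht
    have hc1 : c1 = -(c2 * (t + 1)) := by rw [ht]; field_simp; ring
    have h1 : Real.exp (t - Real.log s) = Real.exp t / s := by
      rw [Real.exp_sub, Real.exp_log h]
    have h2 := Real.add_one_le_exp (t - Real.log s)
    rw [h1] at h2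
    have h3 : (t - Real.log s + 1) * s ≤ Real.exp t := (le_div_iff₀ h).1 h2
    have h4 : c2 * ((t - Real.log s + 1) * s) ≤ c2 * Real.exp t :=
      mul_le_mul_of_nonneg_left h3 hc2.le
    rw [hc1]
    nlinarith [h4]

lemma omega_meas (N : ℕ) (α : ℝ) : MeasurableSet (Omega N α) := by
  unfold Omega
  split
  · exact measurableSet_ball
  · exact measurableSet_ball.diff (measurableSet_singleton 0)

lemma omega_vol_lt_top (N : ℕ) (α : ℝ) : volume (Omega N α) < ⊤ := by
  have hsub : Omega N α ⊆ Metric.ball (0 : Euc N) 1 := by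
    unfold Omega; split
    · exact fun x hx => hx
    · exact fun x hx => hx.1
  exact lt_of_le_of_lt (measure_mono hsub) measure_ball_lt_top

lemma comp_integrableOn {N : ℕ} {α : ℝ} {u : Euc N → ℝ} (hu : TestFun N α u)
    {F : ℝ → ℝ} (hF : Continuous F) (hF0 : F 0 = 0) :
    IntegrableOn (fun x => F (u x)) (Omega N α) := by
  have hc : Continuous (F ∘ u) := hF.comp (hu.1.continuous)
  have hs : HasCompactSupport (F ∘ u) := hu.2.1.comp_left hF0
  exact (hc.integrable_of_hasCompactSupport hs).integrableOn


set_option maxHeartbeats 1000000 in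
/-- the lower bound for `I(u) - (1/2*_α)⟨I'(u),u⟩` when `μ < 0`. -/
theorem statement8 (N : ℕ) (hN : 3 ≤ N) (α lam mu : ℝ) (hα : -2 < α) (hmu : mu < 0) :
    ∀ u : Euc N → ℝ, TestFun N α u →
      ((α + 2) / (2 * ((N : ℝ) + α))) * (∫ x in Omega N α, ‖fderiv ℝ u x‖ ^ 2) +
        (mu * (α + 2) / (2 * ((N : ℝ) + α))) *
          Real.exp (((N : ℝ) + α) / (α + 2) - lam / mu - 1) * (volume (Omega N α)).toReal ≤
      energy N α lam mu u -
        (1 / critExp N α) *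
          ((∫ x in Omega N α, ‖fderiv ℝ u x‖ ^ 2)
            - (∫ x in Omega N α, ‖x‖ ^ α * (max (u x) 0) ^ critExp N α)
            - lam * (∫ x in Omega N α, (max (u x) 0) ^ 2)
            - mu * (∫ x in Omega N α, (max (u x) 0) ^ 2 * Real.log ((max (u x) 0) ^ 2))) := by
  intro u hu
  have hNR : (3 : ℝ) ≤ (N : ℝ) := by exact_mod_cast hN
  have hN2 : (0 : ℝ) < (N : ℝ) - 2 := by linarith
  have hNα : (0 : ℝ) < (N : ℝ) + α := by linarith
  have hα2 : (0 : ℝ) < α + 2 := by linarith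
  have hmu0 : mu ≠ 0 := ne_of_lt hmu
  -- abbreviations
  set A := ∫ x in Omega N α, ‖fderiv ℝ u x‖ ^ 2 with hA
  set B := ∫ x in Omega N α, ‖x‖ ^ α * (max (u x) 0) ^ critExp N α with hB
  set C := ∫ x in Omega N α, (max (u x) 0) ^ 2 with hC
  set E := ∫ x in Omega N α, (max (u x) 0) ^ 2 * Real.log ((max (u x) 0) ^ 2) with hE
  set vol := (volume (Omega N α)).toReal with hvol
  set ex := Real.exp (((N : ℝ) + α) / (α + 2) - lam / mu - 1) with hex
  -- continuity helpers
  have hcont1 : Continuous (fun t : ℝ => (max t 0) ^ 2) := by fun_prop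
  have hcont2 : Continuous (fun t : ℝ => (max t 0) ^ 2 * Real.log ((max t 0) ^ 2)) := by
    exact Real.continuous_mul_log.comp hcont1
  have hintC : IntegrableOn (fun x => (max (u x) 0) ^ 2) (Omega N α) :=
    comp_integrableOn (F := fun t => (max t 0) ^ 2) hu hcont1 (by norm_num)
  have hintE : IntegrableOn (fun x => (max (u x) 0) ^ 2 * Real.log ((max (u x) 0) ^ 2))
      (Omega N α) :=
    comp_integrableOn (F := fun t => (max t 0) ^ 2 * Real.log ((max t 0) ^ 2)) hu hcont2
      (by norm_num)
  -- split the D-integral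
  have hD : (∫ x in Omega N α, (max (u x) 0) ^ 2 * (Real.log ((max (u x) 0) ^ 2) - 1)) = E - C := by
    rw [hE, hC, ← integral_sub hintE hintC]
    congr 1; ext x; ring
  -- constants
  set c1 : ℝ := mu / 2 - lam * ((α + 2) / (2 * ((N : ℝ) + α))) with hc1
  set c2 : ℝ := -(mu * ((α + 2) / (2 * ((N : ℝ) + α)))) with hc2
  have hc2pos : 0 < c2 := by
    rw [hc2]
    have : 0 < (α + 2) / (2 * ((N : ℝ) + α)) := by positivity
    nlinarith
  have hθ : -c1 / c2 - 1 = ((N : ℝ) + α) / (α + 2) - lam / mu - 1 := by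
    rw [hc1, hc2]
    field_simp
  -- main integral inequality
  have hmain : -c2 * ex * vol ≤ c1 * C + c2 * E := by
    have hg : IntegrableOn
        (fun x => c1 * (max (u x) 0) ^ 2 + c2 * ((max (u x) 0) ^ 2 * Real.log ((max (u x) 0) ^ 2)))
        (Omega N α) := (hintC.const_mul c1).add (hintE.const_mul c2)
    have hpt : ∀ x ∈ Omega N α, -c2 * ex ≤
        c1 * (max (u x) 0) ^ 2 + c2 * ((max (u x) 0) ^ 2 * Real.log ((max (u x) 0) ^ 2)) := by
      intro x _
      have := key_ineq c1 c2 ((max (u x) 0) ^ 2) hc2pos (by positivity)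
      rw [hθ, ← hex] at this
      exact this
    have hle := setIntegral_mono_on
      (integrableOn_const (omega_vol_lt_top N α).ne) hg (omega_meas N α) hpt
    rw [setIntegral_const] at hle
    have hsplit : (∫ x in Omega N α,
        (c1 * (max (u x) 0) ^ 2 + c2 * ((max (u x) 0) ^ 2 * Real.log ((max (u x) 0) ^ 2))))
        = c1 * C + c2 * E := by
      rw [integral_add (hintC.const_mul c1) (hintE.const_mul c2),
        integral_const_mul, integral_const_mul, ← hC, ← hE]
    rw [hsplit] at hle
    calc -c2 * ex * vol = vol • (-c2 * ex) := by rw [smul_eq_mul]; ring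
    _ ≤ c1 * C + c2 * E := hle
  -- algebraic identity
  have hr : 1 / critExp N α = ((N : ℝ) - 2) / (2 * ((N : ℝ) + α)) := by
    rw [critExp]
    rw [one_div_div]
  rw [energy, hD, hr, ← hA, ← hB, ← hC]
  have heq : (1 / 2) * A - ((N : ℝ) - 2) / (2 * ((N : ℝ) + α)) * B - (lam / 2) * C
      - (mu / 2) * (E - C)
      - ((N : ℝ) - 2) / (2 * ((N : ℝ) + α)) * (A - B - lam * C - mu * E)
      = (α + 2) / (2 * ((N : ℝ) + α)) * A + (c1 * C + c2 * E) := by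
    rw [hc1, hc2]
    field_simp
    ring
  have hlhs : mu * (α + 2) / (2 * ((N : ℝ) + α)) * ex * vol = -c2 * ex * vol := by
    rw [hc2]; ring
  rw [hlhs, heq]
  exact add_le_add_right hmain _
end

section
/- Let a > 0, b > 0 and p > 2 be real numbers. Then the set {t ∈ (0,∞) : a·(1 − t^{p−2}) + b·log(t²) = 0} contains at most two elements. -/
open MeasureTheory Metric Set Filter

theorem aux_rolle (a b p : ℝ) (ha : 0 < a) (hb : 0 < b) (hp : 2 < p)
    (x y : ℝ) (hx : 0 < x) (hxy : x < y)
    (hfx : a * (1 - x ^ (p - 2)) + b * Real.log (x ^ 2) = 0)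
    (hfy : a * (1 - y ^ (p - 2)) + b * Real.log (y ^ 2) = 0) :
    ∃ c, x < c ∧ c < y ∧ c ^ (p - 2) = 2 * b / (a * (p - 2)) := by
  set f : ℝ → ℝ := fun t => a * (1 - t ^ (p - 2)) + b * Real.log (t ^ 2) with hf
  set f' : ℝ → ℝ := fun t => a * (0 - ((p - 2) * t ^ (p - 2 - 1))) + b * ((↑(2:ℕ) * t ^ (2-1)) / t ^ 2) with hf'
  have hderiv : ∀ c ∈ Ioo x y, HasDerivAt f (f' c) c := by
    intro c hc
    have hc0 : (0:ℝ) < c := hx.trans hc.1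
    have h1 : HasDerivAt (fun t : ℝ => t ^ (p - 2)) ((p - 2) * c ^ (p - 2 - 1)) c :=
      Real.hasDerivAt_rpow_const (Or.inl hc0.ne')
    have h2 : HasDerivAt (fun t : ℝ => a * (1 - t ^ (p - 2)))
        (a * (0 - (p - 2) * c ^ (p - 2 - 1))) c :=
      (((hasDerivAt_const c (1:ℝ)).sub h1)).const_mul a
    have h3 : HasDerivAt (fun t : ℝ => t ^ 2) (↑(2:ℕ) * c ^ (2-1)) c := hasDerivAt_pow 2 c
    have h4 : HasDerivAt (fun t : ℝ => b * Real.log (t ^ 2))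
        (b * ((↑(2:ℕ) * c ^ (2-1)) / c ^ 2)) c :=
      (h3.log (pow_ne_zero 2 hc0.ne')).const_mul b
    exact h2.add h4
  have hcont : ContinuousOn f (Icc x y) := by
    intro t ht
    have ht0 : t ≠ 0 := (hx.trans_le ht.1).ne'
    exact ContinuousWithinAt.add
      (((Real.continuousAt_rpow_const t _ (Or.inl ht0)).continuousWithinAt.const_sub 1).const_mul a)
      ((((continuous_pow 2).continuousWithinAt).log (pow_ne_zero 2 ht0)).const_mul b)
  obtain ⟨c, hc, hc0⟩ := exists_hasDerivAt_eq_zero hxy hcont (hfx.trans hfy.symm) hderiv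
  refine ⟨c, hc.1, hc.2, ?_⟩
  have hcpos : (0:ℝ) < c := hx.trans hc.1
  have hq : (0:ℝ) < p - 2 := by linarith
  have hrw : c ^ (p - 2) = c ^ (p - 2 - 1) * c := by
    rw [← Real.rpow_add_one hcpos.ne' (p - 2 - 1)]; ring_nf
  rw [hrw]
  simp only [hf'] at hc0
  set A := c ^ (p - 2 - 1) with hA
  clear_value A
  rw [eq_div_iff (by positivity)]
  have hc2 : c ^ (2:ℕ) = c * c := sq c
  rw [pow_one, hc2] at hc0
  push_cast at hc0
  field_simp at hc0
  nlinarith [hc0, hcpos, mul_pos ha hq]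

/-- the equation `a(1 - t^{p-2}) + b log t² = 0` has at most two positive roots. -/
theorem statement10 (a b p : ℝ) (ha : 0 < a) (hb : 0 < b) (hp : 2 < p) :
    {t : ℝ | 0 < t ∧ a * (1 - t ^ (p - 2)) + b * Real.log (t ^ 2) = 0}.encard ≤ 2 := by
  set S := {t : ℝ | 0 < t ∧ a * (1 - t ^ (p - 2)) + b * Real.log (t ^ 2) = 0} with hS
  by_contra h
  push_neg at h
  obtain ⟨u, v, hu, hv, huv⟩ := Set.one_lt_encard_iff.1 (lt_trans (by norm_num) h)
  have hns : ¬ S ⊆ {u, v} := by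
    intro hsub
    have h2 : S.encard ≤ 2 := by
      calc S.encard ≤ ({u, v} : Set ℝ).encard := Set.encard_mono hsub
        _ = 2 := Set.encard_pair huv
    exact absurd h2 (not_le.2 h)
  obtain ⟨w, hw, hwuv⟩ := not_subset.1 hns
  simp only [mem_insert_iff, mem_singleton_iff, not_or] at hwuv
  have key : ∀ x y z : ℝ, x ∈ S → y ∈ S → z ∈ S → x < y → y < z → False := by
    intro x y z hxS hyS hzS h1 h2
    obtain ⟨c1, hc1a, hc1b, hc1⟩ := aux_rolle a b p ha hb hp x y hxS.1 h1 hxS.2 hyS.2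
    obtain ⟨c2, hc2a, hc2b, hc2⟩ := aux_rolle a b p ha hb hp y z hyS.1 h2 hyS.2 hzS.2
    have hlt : c1 < c2 := hc1b.trans hc2a
    have hcon : c1 ^ (p - 2) < c2 ^ (p - 2) :=
      Real.rpow_lt_rpow (le_of_lt (hxS.1.trans hc1a)) hlt (by linarith)
    rw [hc1, hc2] at hcon; exact lt_irrefl _ hcon
  rcases lt_trichotomy u v with h1 | h1 | h1
  · rcases lt_trichotomy v w with h2 | h2 | h2
    · exact key u v w hu hv hw h1 h2
    · exact hwuv.2 h2.symm
    · rcases lt_trichotomy u w with h3 | h3 | h3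
      · exact key u w v hu hw hv h3 h2
      · exact hwuv.1 h3.symm
      · exact key w u v hw hu hv h3 h1
  · exact absurd h1 huv
  · rcases lt_trichotomy u w with h2 | h2 | h2
    · exact key v u w hv hu hw h1 h2
    · exact hwuv.1 h2.symm
    · rcases lt_trichotomy v w with h3 | h3 | h3
      · exact key v w u hv hw hu h3 h2
      · exact hwuv.2 h3.symm
      · exact key w v u hw hv hu h3 h1
end

section
/- Let N ≥ 3, α > −2 and 1 ≤ q < 2*_α. Then, as ε → 0⁺: (i) if q = (N+α)/(N−2), then ∫_Ω |x|^α U_{ε,α}^q = C_{α,N}^q·ω_N·ε^{(N+α)/2}·log(1/ε) + O(ε^{(N+α)/2}); (ii) if (N+α)/(N−2) < q < 2*_α, then there is a constant C₁ > 0 with ∫_Ω |x|^α U_{ε,α}^q = C₁·ε^{N+α−q(N−2)/2} + o(ε^{N+α−q(N−2)/2}); (iii) if 1 ≤ q < (N+α)/(N−2), then there is a constant C₂ > 0 with ∫_Ω |x|^α U_{ε,α}^q = C₂·ε^{q(N−2)/2} + o(ε^{q(N−2)/2}). -/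
open MeasureTheory Metric Set Filter

section helpers
open Asymptotics

lemma helper_littleO {f G : ℝ → ℝ} {C L γ : ℝ}
    (hf : ∀ᶠ ε in nhdsWithin (0:ℝ) (Set.Ioi 0), f ε = C * ε ^ γ * G ε)
    (hG : Tendsto G (nhdsWithin (0:ℝ) (Set.Ioi 0)) (nhds L)) :
    (fun ε => f ε - C * L * ε ^ γ) =o[nhdsWithin (0:ℝ) (Set.Ioi 0)] fun ε => ε ^ γ := by
  rw [isLittleO_iff]
  intro c hc
  have habs : 0 < |C| + 1 := by positivity
  have h2 : ∀ᶠ ε in nhdsWithin (0:ℝ) (Set.Ioi 0), |G ε - L| ≤ c / (|C| + 1) := by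
    have h0 := hG.sub_const L
    rw [show L - L = 0 by ring] at h0
    have h1 : Tendsto (fun ε => |G ε - L|) (nhdsWithin (0:ℝ) (Set.Ioi 0)) (nhds 0) := by
      simpa using h0.abs
    exact h1.eventually_le_const (by positivity)
  filter_upwards [hf, h2] with ε h1 h2
  rw [h1]
  have he : C * ε ^ γ * G ε - C * L * ε ^ γ = C * ε ^ γ * (G ε - L) := by ring
  rw [he, norm_mul, norm_mul]
  have hC : ‖C‖ ≤ |C| + 1 := by rw [Real.norm_eq_abs]; linarith
  calc ‖C‖ * ‖ε ^ γ‖ * ‖G ε - L‖ ≤ (|C| + 1) * ‖ε ^ γ‖ * (c / (|C| + 1)) := by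
        gcongr
        exact h2
    _ = c * ‖ε ^ γ‖ * ((|C|+1) / (|C|+1)) := by ring
    _ = c * ‖ε ^ γ‖ := by rw [div_self habs.ne', mul_one]

lemma helper_bigO {f H : ℝ → ℝ} {C γ M : ℝ}
    (hf : ∀ᶠ ε in nhdsWithin (0:ℝ) (Set.Ioi 0), f ε = C * ε ^ γ * H ε)
    (hH : ∀ᶠ ε in nhdsWithin (0:ℝ) (Set.Ioi 0), |H ε| ≤ M) :
    f =O[nhdsWithin (0:ℝ) (Set.Ioi 0)] fun ε => ε ^ γ := by
  rw [isBigO_iff]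
  refine ⟨|C| * M, ?_⟩
  filter_upwards [hf, hH] with ε h1 h2
  rw [h1, norm_mul, norm_mul]
  calc ‖C‖ * ‖ε ^ γ‖ * ‖H ε‖ ≤ |C| * ‖ε ^ γ‖ * M := by
        rw [Real.norm_eq_abs C, Real.norm_eq_abs (H ε)]
        gcongr
    _ = |C| * M * ‖ε ^ γ‖ := by ring

end helpers


-- MVT helper
lemma rpow_neg_sub_le {θ a b : ℝ} (hθ : 0 ≤ θ) (ha : 0 < a) (hab : a ≤ b) :
    a ^ (-θ) - b ^ (-θ) ≤ θ * a ^ (-(θ+1)) * (b - a) := by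
  have hderiv : ∀ x ∈ Icc a b, HasDerivWithinAt (fun t : ℝ => t ^ (-θ)) ((-θ) * x ^ (-θ - 1)) (Icc a b) x := by
    intro x hx
    exact (Real.hasDerivAt_rpow_const (Or.inl (ha.trans_le hx.1).ne')).hasDerivWithinAt
  have hbound : ∀ x ∈ Icc a b, ‖(-θ) * x ^ (-θ - 1)‖ ≤ θ * a ^ (-(θ+1)) := by
    intro x hx
    rw [norm_mul, Real.norm_eq_abs, Real.norm_eq_abs, abs_neg, abs_of_nonneg hθ,
      abs_of_nonneg (Real.rpow_nonneg (ha.trans_le hx.1).le _)]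
    gcongr
    calc x ^ (-θ - 1) ≤ a ^ (-θ - 1) :=
          Real.rpow_le_rpow_of_nonpos ha hx.1 (by linarith)
      _ = a ^ (-(θ+1)) := by ring_nf
  have := Convex.norm_image_sub_le_of_norm_hasDerivWithin_le hderiv hbound (convex_Icc a b)
    (left_mem_Icc.2 hab) (right_mem_Icc.2 hab)
  calc a ^ (-θ) - b ^ (-θ) ≤ |b ^ (-θ) - a ^ (-θ)| := by rw [abs_sub_comm]; exact le_abs_self _
    _ ≤ θ * a ^ (-(θ+1)) * |b - a| := this
    _ = θ * a ^ (-(θ+1)) * (b - a) := by rw [abs_of_nonneg (by linarith)]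

section OneD
variable {a s θ q ρ : ℝ} {Φ : ℝ → ℝ}

lemma measAux (hΦc : Continuous Φ) (a s θ q ε : ℝ) :
    Measurable (fun r : ℝ => r ^ a * Φ r ^ q * (ε ^ s + r ^ s) ^ (-θ)) :=
  ((measurable_id.pow_const a).mul (hΦc.measurable.pow_const q)).mul
    ((measurable_const.add (measurable_id.pow_const s)).pow_const (-θ))

lemma fnonneg (hΦ0 : ∀ r, 0 ≤ Φ r) (a s θ q : ℝ) {ε : ℝ} (hε : 0 ≤ ε) {r : ℝ} (hr : 0 ≤ r) :
    0 ≤ r ^ a * Φ r ^ q * (ε ^ s + r ^ s) ^ (-θ) := by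
  have h1 : (0:ℝ) ≤ r ^ a := Real.rpow_nonneg hr a
  have h2 : (0:ℝ) ≤ Φ r ^ q := Real.rpow_nonneg (hΦ0 r) q
  have h3 : (0:ℝ) ≤ (ε ^ s + r ^ s) ^ (-θ) :=
    Real.rpow_nonneg (add_nonneg (Real.rpow_nonneg hε s) (Real.rpow_nonneg hr s)) _
  exact mul_nonneg (mul_nonneg h1 h2) h3

lemma phi_pow_le_one (hΦ0 : ∀ r, 0 ≤ Φ r) (hΦ1le : ∀ r, Φ r ≤ 1) (hq : 0 < q) (r : ℝ) :
    Φ r ^ q ≤ 1 := Real.rpow_le_one (hΦ0 r) (hΦ1le r) hq.le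

/-- bound by the limit integrand -/
lemma fbound (hΦ0 : ∀ r, 0 ≤ Φ r) (hθ : 0 < θ) {ε : ℝ} (hε : 0 ≤ ε) {r : ℝ} (hr : 0 < r) :
    r ^ a * Φ r ^ q * (ε ^ s + r ^ s) ^ (-θ) ≤ r ^ a * Φ r ^ q * (r ^ s) ^ (-θ) := by
  have hrs : 0 < r ^ s := Real.rpow_pos_of_pos hr s
  have hle : r ^ s ≤ ε ^ s + r ^ s := by
    have := Real.rpow_nonneg hε s; linarith
  have h2 := Real.rpow_le_rpow_of_nonpos hrs hle (neg_nonpos.2 hθ.le)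
  have h3 : 0 ≤ r ^ a * Φ r ^ q :=
    mul_nonneg (Real.rpow_nonneg hr.le a) (Real.rpow_nonneg (hΦ0 r) q)
  exact mul_le_mul_of_nonneg_left h2 h3

/-- integrability of the limit integrand (case iii) -/
lemma intB (hΦc : Continuous Φ) (hΦ0 : ∀ r, 0 ≤ Φ r) (hΦ1le : ∀ r, Φ r ≤ 1)
    (hΦz : ∀ r, 2 * ρ ≤ r → Φ r = 0) (hρ : 0 < ρ) (hq : 0 < q) (hθ : 0 < θ)
    (hcond : -1 < a - s * θ) :
    IntegrableOn (fun r : ℝ => r ^ a * Φ r ^ q * (r ^ s) ^ (-θ)) (Ioi 0) := by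
  rw [← Ioc_union_Ioi_eq_Ioi (by linarith : (0:ℝ) ≤ 2 * ρ), integrableOn_union]
  constructor
  · have hmeas : Measurable (fun r : ℝ => r ^ a * Φ r ^ q * (r ^ s) ^ (-θ)) := by
      have := hΦc.measurable
      measurability
    have hint : IntegrableOn (fun r : ℝ => r ^ (a - s * θ)) (Ioc 0 (2 * ρ)) := by
      rw [integrableOn_Ioc_iff_integrableOn_Ioo]
      exact (intervalIntegral.integrableOn_Ioo_rpow_iff (by linarith)).2 hcond
    refine Integrable.mono' hint (hmeas.aestronglyMeasurable) ?_
    filter_upwards [ae_restrict_mem measurableSet_Ioc] with r hr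
    have hr0 : 0 < r := hr.1
    have hval : r ^ a * Φ r ^ q * (r ^ s) ^ (-θ) ≤ r ^ (a - s * θ) := by
      have he : (r ^ s) ^ (-θ) = r ^ (-(s * θ)) := by
        rw [← Real.rpow_mul hr0.le, mul_neg]
      calc r ^ a * Φ r ^ q * (r ^ s) ^ (-θ)
          ≤ r ^ a * 1 * (r ^ s) ^ (-θ) := by
            have h3 : 0 ≤ (r ^ s) ^ (-θ) := Real.rpow_nonneg (Real.rpow_nonneg hr0.le s) _
            have h6 := phi_pow_le_one hΦ0 hΦ1le hq r
            have h4 : 0 ≤ r ^ a := Real.rpow_nonneg hr0.le a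
            exact mul_le_mul_of_nonneg_right (mul_le_mul_of_nonneg_left h6 h4) h3
        _ = r ^ (a - s * θ) := by
            rw [mul_one, he, ← Real.rpow_add hr0]; ring_nf
    rw [Real.norm_eq_abs, abs_of_nonneg]
    · exact hval
    · exact mul_nonneg (mul_nonneg (Real.rpow_nonneg hr0.le a) (Real.rpow_nonneg (hΦ0 r) q))
        (Real.rpow_nonneg (Real.rpow_nonneg hr0.le s) (-θ))
  · refine (integrableOn_congr_fun (g := fun _ : ℝ => (0:ℝ)) ?_ measurableSet_Ioi).2
      (integrableOn_zero)
    intro r hr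
    simp only
    rw [hΦz r (le_of_lt hr), Real.zero_rpow hq.ne', mul_zero, zero_mul]

/-- integrability of f_ε (any ε > 0) -/
lemma intF (hΦc : Continuous Φ) (hΦ0 : ∀ r, 0 ≤ Φ r) (hΦ1le : ∀ r, Φ r ≤ 1)
    (hΦz : ∀ r, 2 * ρ ≤ r → Φ r = 0) (hρ : 0 < ρ) (hq : 0 < q) (hθ : 0 < θ)
    (ha : -1 < a) {ε : ℝ} (hε : 0 < ε) :
    IntegrableOn (fun r : ℝ => r ^ a * Φ r ^ q * (ε ^ s + r ^ s) ^ (-θ)) (Ioi 0) := by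
  have hεs : 0 < ε ^ s := Real.rpow_pos_of_pos hε s
  rw [← Ioc_union_Ioi_eq_Ioi (by linarith : (0:ℝ) ≤ 2 * ρ), integrableOn_union]
  constructor
  · have hint : IntegrableOn (fun r : ℝ => (ε ^ s) ^ (-θ) * r ^ a) (Ioc 0 (2 * ρ)) := by
      apply Integrable.const_mul
      show IntegrableOn _ _ _
      rw [integrableOn_Ioc_iff_integrableOn_Ioo]
      exact (intervalIntegral.integrableOn_Ioo_rpow_iff (by linarith)).2 ha
    refine Integrable.mono' hint ((measAux hΦc a s θ q ε).aestronglyMeasurable) ?_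
    filter_upwards [ae_restrict_mem measurableSet_Ioc] with r hr
    have hr0 : 0 < r := hr.1
    rw [Real.norm_eq_abs, abs_of_nonneg (fnonneg hΦ0 a s θ q hε.le hr0.le)]
    have h1 : (ε ^ s + r ^ s) ^ (-θ) ≤ (ε ^ s) ^ (-θ) :=
      Real.rpow_le_rpow_of_nonpos hεs
        (le_add_of_nonneg_right (Real.rpow_nonneg hr0.le s)) (neg_nonpos.2 hθ.le)
    calc r ^ a * Φ r ^ q * (ε ^ s + r ^ s) ^ (-θ)
        ≤ r ^ a * 1 * (ε ^ s) ^ (-θ) := by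
          apply mul_le_mul (by
            have := phi_pow_le_one hΦ0 hΦ1le hq r
            have h4 : 0 ≤ r ^ a := Real.rpow_nonneg hr0.le a
            exact mul_le_mul_of_nonneg_left this h4) h1
            (Real.rpow_nonneg (by positivity) _) (by
              rw [mul_one]; exact Real.rpow_nonneg hr0.le a)
      _ = (ε ^ s) ^ (-θ) * r ^ a := by ring
  · refine (integrableOn_congr_fun (g := fun _ : ℝ => (0:ℝ)) ?_ measurableSet_Ioi).2
      (integrableOn_zero)
    intro r hr
    simp only
    rw [hΦz r (le_of_lt hr), Real.zero_rpow hq.ne', mul_zero, zero_mul]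

/-- case (iii): convergence of J -/
lemma limitJ (hΦc : Continuous Φ) (hΦ0 : ∀ r, 0 ≤ Φ r) (hΦ1le : ∀ r, Φ r ≤ 1)
    (hΦz : ∀ r, 2 * ρ ≤ r → Φ r = 0) (hρ : 0 < ρ) (hq : 0 < q) (hθ : 0 < θ)
    (hs : 0 < s) (hcond : -1 < a - s * θ) :
    Tendsto (fun ε : ℝ => ∫ r in Ioi (0:ℝ), r ^ a * Φ r ^ q * (ε ^ s + r ^ s) ^ (-θ))
      (nhdsWithin 0 (Ioi 0))
      (nhds (∫ r in Ioi (0:ℝ), r ^ a * Φ r ^ q * (r ^ s) ^ (-θ))) := by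
  apply tendsto_integral_filter_of_dominated_convergence
    (fun r => r ^ a * Φ r ^ q * (r ^ s) ^ (-θ))
  · exact Eventually.of_forall fun ε => (measAux hΦc a s θ q ε).aestronglyMeasurable
  · filter_upwards [self_mem_nhdsWithin] with ε hε
    filter_upwards [ae_restrict_mem measurableSet_Ioi] with r hr
    rw [Real.norm_eq_abs, abs_of_nonneg (fnonneg hΦ0 a s θ q (le_of_lt hε) (le_of_lt hr))]
    exact fbound hΦ0 hθ (le_of_lt hε) hr
  · exact intB hΦc hΦ0 hΦ1le hΦz hρ hq hθ hcond
  · filter_upwards [ae_restrict_mem measurableSet_Ioi] with r hr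
    have hrs : 0 < r ^ s := Real.rpow_pos_of_pos hr s
    have h1 : Tendsto (fun ε : ℝ => ε ^ s) (nhdsWithin 0 (Ioi 0)) (nhds 0) := by
      have h := (Real.continuousAt_rpow_const 0 s (Or.inr hs.le)).tendsto
      rw [Real.zero_rpow hs.ne'] at h
      exact h.mono_left nhdsWithin_le_nhds
    have h2 : Tendsto (fun ε : ℝ => ε ^ s + r ^ s) (nhdsWithin 0 (Ioi 0)) (nhds (r ^ s)) := by
      have := h1.add_const (r ^ s)
      rwa [zero_add] at this
    have h3 : ContinuousAt (fun y : ℝ => y ^ (-θ)) (r ^ s) :=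
      Real.continuousAt_rpow_const _ _ (Or.inl hrs.ne')
    exact ((h3.tendsto.comp h2).const_mul (r ^ a * Φ r ^ q))

/-- positivity of J0 (case iii) -/
lemma posJ0 (hΦc : Continuous Φ) (hΦ0 : ∀ r, 0 ≤ Φ r) (hΦ1le : ∀ r, Φ r ≤ 1)
    (hΦone : ∀ r, 0 ≤ r → r ≤ ρ → Φ r = 1)
    (hΦz : ∀ r, 2 * ρ ≤ r → Φ r = 0) (hρ : 0 < ρ) (hq : 0 < q) (hθ : 0 < θ)
    (hcond : -1 < a - s * θ) :
    0 < ∫ r in Ioi (0:ℝ), r ^ a * Φ r ^ q * (r ^ s) ^ (-θ) := by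
  rw [setIntegral_pos_iff_support_of_nonneg_ae ?_ (intB hΦc hΦ0 hΦ1le hΦz hρ hq hθ hcond)]
  · refine lt_of_lt_of_le ?_ (measure_mono (?_ : Ioo 0 ρ ⊆ _))
    · simp [Real.volume_Ioo, hρ]
    · intro r hr
      refine ⟨?_, hr.1⟩
      rw [Function.mem_support, hΦone r hr.1.le hr.2.le, Real.one_rpow, mul_one]
      have h1 := Real.rpow_pos_of_pos hr.1 a
      have h2 := Real.rpow_pos_of_pos (Real.rpow_pos_of_pos hr.1 s) (-θ)
      exact ne_of_gt (mul_pos h1 h2)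
  · filter_upwards [ae_restrict_mem measurableSet_Ioi] with r hr
    exact mul_nonneg (mul_nonneg (Real.rpow_nonneg (le_of_lt hr) a)
      (Real.rpow_nonneg (hΦ0 r) q))
      (Real.rpow_nonneg (Real.rpow_nonneg (le_of_lt hr) s) (-θ))

/-- substitution r = ε t (case ii) -/
lemma subJ (hΦ0 : ∀ r, 0 ≤ Φ r) {ε : ℝ} (hε : 0 < ε) :
    ∫ r in Ioi (0:ℝ), r ^ a * Φ r ^ q * (ε ^ s + r ^ s) ^ (-θ)
      = ε ^ (a + 1 - s * θ) *
        ∫ t in Ioi (0:ℝ), t ^ a * Φ (ε * t) ^ q * (1 + t ^ s) ^ (-θ) := by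
  have h := integral_comp_mul_left_Ioi
    (fun r => r ^ a * Φ r ^ q * (ε ^ s + r ^ s) ^ (-θ)) 0 hε
  rw [mul_zero, smul_eq_mul] at h
  have h2 : ∫ x in Ioi (0:ℝ),
      (ε * x) ^ a * Φ (ε * x) ^ q * (ε ^ s + (ε * x) ^ s) ^ (-θ)
      = ε ^ (a - s * θ) * ∫ t in Ioi (0:ℝ), t ^ a * Φ (ε * t) ^ q * (1 + t ^ s) ^ (-θ) := by
    rw [← integral_const_mul]
    refine setIntegral_congr_fun measurableSet_Ioi fun t ht => ?_
    have ht0 : (0:ℝ) < t := ht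
    have hts : 0 ≤ t ^ s := Real.rpow_nonneg ht0.le s
    have h1ts : (0:ℝ) < 1 + t ^ s := by linarith
    have e1 : (ε * t) ^ a = ε ^ a * t ^ a := Real.mul_rpow hε.le ht0.le
    have e2 : (ε * t) ^ s = ε ^ s * t ^ s := Real.mul_rpow hε.le ht0.le
    have e3 : ε ^ s + ε ^ s * t ^ s = ε ^ s * (1 + t ^ s) := by ring
    have e4 : (ε ^ s * (1 + t ^ s)) ^ (-θ) = (ε ^ s) ^ (-θ) * (1 + t ^ s) ^ (-θ) :=
      Real.mul_rpow (Real.rpow_nonneg hε.le s) h1ts.le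
    have e5 : (ε ^ s) ^ (-θ) = ε ^ (s * (-θ)) := (Real.rpow_mul hε.le s (-θ)).symm
    have e6 : ε ^ a * ε ^ (s * (-θ)) = ε ^ (a - s * θ) := by
      rw [← Real.rpow_add hε]; ring_nf
    simp only [e1, e2, e3, e4, e5]
    calc ε ^ a * t ^ a * Φ (ε * t) ^ q * (ε ^ (s * (-θ)) * (1 + t ^ s) ^ (-θ))
        = (ε ^ a * ε ^ (s * (-θ))) * (t ^ a * Φ (ε * t) ^ q * (1 + t ^ s) ^ (-θ)) := by ring
      _ = ε ^ (a - s * θ) * (t ^ a * Φ (ε * t) ^ q * (1 + t ^ s) ^ (-θ)) := by rw [e6]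
  calc ∫ r in Ioi (0:ℝ), r ^ a * Φ r ^ q * (ε ^ s + r ^ s) ^ (-θ)
      = ε * ∫ x in Ioi (0:ℝ),
          (ε * x) ^ a * Φ (ε * x) ^ q * (ε ^ s + (ε * x) ^ s) ^ (-θ) := by
        rw [h, ← mul_assoc, mul_inv_cancel₀ hε.ne', one_mul]
    _ = ε * (ε ^ (a - s * θ) * ∫ t in Ioi (0:ℝ),
          t ^ a * Φ (ε * t) ^ q * (1 + t ^ s) ^ (-θ)) := by rw [h2]
    _ = ε ^ (a + 1 - s * θ) * ∫ t in Ioi (0:ℝ),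
          t ^ a * Φ (ε * t) ^ q * (1 + t ^ s) ^ (-θ) := by
        rw [← mul_assoc]
        congr 1
        rw [show ε * ε ^ (a - s * θ) = ε ^ (1:ℝ) * ε ^ (a - s * θ) by rw [Real.rpow_one],
          ← Real.rpow_add hε]
        ring_nf

/-- integrability of the bound for K (case ii) -/
lemma intKbound (hs : 0 < s) (hθ : 0 < θ) (ha : -1 < a) (hcond : a - s * θ < -1) :
    IntegrableOn (fun t : ℝ => t ^ a * (1 + t ^ s) ^ (-θ)) (Ioi 0) := by
  have hmeas : Measurable (fun t : ℝ => t ^ a * (1 + t ^ s) ^ (-θ)) :=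
    (measurable_id.pow_const a).mul
      ((measurable_const.add (measurable_id.pow_const s)).pow_const (-θ))
  rw [← Ioc_union_Ioi_eq_Ioi (zero_le_one), integrableOn_union]
  constructor
  · have hint : IntegrableOn (fun t : ℝ => t ^ a) (Ioc (0:ℝ) 1) := by
      rw [integrableOn_Ioc_iff_integrableOn_Ioo]
      exact (intervalIntegral.integrableOn_Ioo_rpow_iff one_pos).2 ha
    refine Integrable.mono' hint hmeas.aestronglyMeasurable ?_
    filter_upwards [ae_restrict_mem measurableSet_Ioc] with t ht
    have ht0 : 0 < t := ht.1
    have hts : 0 ≤ t ^ s := Real.rpow_nonneg ht0.le s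
    have h1ts : (1:ℝ) ≤ 1 + t ^ s := by linarith
    have hb : (1 + t ^ s) ^ (-θ) ≤ 1 :=
      Real.rpow_le_one_of_one_le_of_nonpos h1ts (neg_nonpos.2 hθ.le)
    rw [Real.norm_eq_abs, abs_of_nonneg (mul_nonneg (Real.rpow_nonneg ht0.le a)
      (Real.rpow_nonneg (by linarith) (-θ)))]
    calc t ^ a * (1 + t ^ s) ^ (-θ) ≤ t ^ a * 1 :=
          mul_le_mul_of_nonneg_left hb (Real.rpow_nonneg ht0.le a)
      _ = t ^ a := mul_one _
  · have hint : IntegrableOn (fun t : ℝ => t ^ (a - s * θ)) (Ioi (1:ℝ)) :=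
      integrableOn_Ioi_rpow_of_lt hcond one_pos
    refine Integrable.mono' hint hmeas.aestronglyMeasurable ?_
    filter_upwards [ae_restrict_mem measurableSet_Ioi] with t ht
    have ht0 : (0:ℝ) < t := lt_trans one_pos ht
    have hts : 0 < t ^ s := Real.rpow_pos_of_pos ht0 s
    have hb : (1 + t ^ s) ^ (-θ) ≤ (t ^ s) ^ (-θ) :=
      Real.rpow_le_rpow_of_nonpos hts (by linarith) (neg_nonpos.2 hθ.le)
    rw [Real.norm_eq_abs, abs_of_nonneg (mul_nonneg (Real.rpow_nonneg ht0.le a)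
      (Real.rpow_nonneg (by linarith) (-θ)))]
    calc t ^ a * (1 + t ^ s) ^ (-θ) ≤ t ^ a * (t ^ s) ^ (-θ) :=
          mul_le_mul_of_nonneg_left hb (Real.rpow_nonneg ht0.le a)
      _ = t ^ (a - s * θ) := by
          rw [← Real.rpow_mul ht0.le, ← Real.rpow_add ht0]; ring_nf

/-- case (ii): convergence of K -/
lemma limitK (hΦc : Continuous Φ) (hΦ0 : ∀ r, 0 ≤ Φ r) (hΦ1le : ∀ r, Φ r ≤ 1)
    (hΦone : ∀ r, 0 ≤ r → r ≤ ρ → Φ r = 1) (hρ : 0 < ρ)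
    (hq : 0 < q) (hθ : 0 < θ) (hs : 0 < s) (ha : -1 < a) (hcond : a - s * θ < -1) :
    Tendsto (fun ε : ℝ => ∫ t in Ioi (0:ℝ), t ^ a * Φ (ε * t) ^ q * (1 + t ^ s) ^ (-θ))
      (nhdsWithin 0 (Ioi 0))
      (nhds (∫ t in Ioi (0:ℝ), t ^ a * (1 + t ^ s) ^ (-θ))) := by
  apply tendsto_integral_filter_of_dominated_convergence
    (fun t => t ^ a * (1 + t ^ s) ^ (-θ))
  · refine Eventually.of_forall fun ε => Measurable.aestronglyMeasurable ?_
    exact ((measurable_id.pow_const a).mul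
      ((hΦc.measurable.comp (measurable_id.const_mul ε)).pow_const q)).mul
      ((measurable_const.add (measurable_id.pow_const s)).pow_const (-θ))
  · filter_upwards [self_mem_nhdsWithin] with ε hε
    filter_upwards [ae_restrict_mem measurableSet_Ioi] with t ht
    have ht0 : (0:ℝ) < t := ht
    have hts : 0 ≤ t ^ s := Real.rpow_nonneg ht0.le s
    have h1ts : (0:ℝ) < 1 + t ^ s := by linarith
    have hnn : 0 ≤ t ^ a * Φ (ε * t) ^ q * (1 + t ^ s) ^ (-θ) :=
      mul_nonneg (mul_nonneg (Real.rpow_nonneg ht0.le a)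
        (Real.rpow_nonneg (hΦ0 _) q)) (Real.rpow_nonneg h1ts.le (-θ))
    rw [Real.norm_eq_abs, abs_of_nonneg hnn]
    calc t ^ a * Φ (ε * t) ^ q * (1 + t ^ s) ^ (-θ)
        ≤ t ^ a * 1 * (1 + t ^ s) ^ (-θ) :=
          mul_le_mul_of_nonneg_right (mul_le_mul_of_nonneg_left
            (phi_pow_le_one hΦ0 hΦ1le hq _) (Real.rpow_nonneg ht0.le a))
            (Real.rpow_nonneg h1ts.le (-θ))
      _ = t ^ a * (1 + t ^ s) ^ (-θ) := by rw [mul_one]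
  · exact intKbound hs hθ ha hcond
  · filter_upwards [ae_restrict_mem measurableSet_Ioi] with t ht
    have ht0 : (0:ℝ) < t := ht
    have h1 : Tendsto (fun ε : ℝ => Φ (ε * t)) (nhdsWithin 0 (Ioi 0)) (nhds 1) := by
      have hΦ00 : Φ 0 = 1 := hΦone 0 le_rfl hρ.le
      have h2 : Tendsto (fun ε : ℝ => ε * t) (nhds 0) (nhds 0) := by
        have := (continuous_mul_right t).tendsto (0:ℝ)
        rwa [zero_mul] at this
      have := (hΦc.tendsto 0).comp h2
      rw [hΦ00] at this
      exact this.mono_left nhdsWithin_le_nhds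
    have h2 : Tendsto (fun ε : ℝ => Φ (ε * t) ^ q) (nhdsWithin 0 (Ioi 0)) (nhds 1) := by
      have hc : ContinuousAt (fun y : ℝ => y ^ q) 1 :=
        Real.continuousAt_rpow_const _ _ (Or.inl one_ne_zero)
      have := hc.tendsto.comp h1
      rwa [Real.one_rpow] at this
    have := (h2.const_mul (t ^ a)).mul_const ((1 + t ^ s) ^ (-θ))
    rwa [mul_one] at this

/-- positivity of K0 (case ii) -/
lemma posK0 (hs : 0 < s) (hθ : 0 < θ) (ha : -1 < a) (hcond : a - s * θ < -1) :
    0 < ∫ t in Ioi (0:ℝ), t ^ a * (1 + t ^ s) ^ (-θ) := by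
  rw [setIntegral_pos_iff_support_of_nonneg_ae ?_ (intKbound hs hθ ha hcond)]
  · refine lt_of_lt_of_le ?_ (measure_mono (show Ioo (0:ℝ) 1 ⊆
        (Function.support fun t => t ^ a * (1 + t ^ s) ^ (-θ)) ∩ Ioi 0 from ?_))
    · simp [Real.volume_Ioo]
    · intro t ht
      refine ⟨?_, ht.1⟩
      rw [Function.mem_support]
      have hts : 0 ≤ t ^ s := Real.rpow_nonneg ht.1.le s
      have h1 := Real.rpow_pos_of_pos ht.1 a
      have h2 := Real.rpow_pos_of_pos (by linarith : (0:ℝ) < 1 + t ^ s) (-θ)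
      exact ne_of_gt (mul_pos h1 h2)
  · filter_upwards [ae_restrict_mem measurableSet_Ioi] with t ht
    have hts : 0 ≤ t ^ s := Real.rpow_nonneg (le_of_lt ht) s
    exact mul_nonneg (Real.rpow_nonneg (le_of_lt ht) a)
      (Real.rpow_nonneg (by linarith) (-θ))

/-- case (i): uniform bound for J - log(1/ε) -/
lemma boundJ (hΦc : Continuous Φ) (hΦ0 : ∀ r, 0 ≤ Φ r) (hΦ1le : ∀ r, Φ r ≤ 1)
    (hΦone : ∀ r, 0 ≤ r → r ≤ ρ → Φ r = 1) (hΦz : ∀ r, 2 * ρ ≤ r → Φ r = 0)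
    (hρ : 0 < ρ) (hq : 0 < q) (hθ : 0 < θ) (hs : 0 < s) (ha : -1 < a)
    (hcond : s * θ = a + 1) {ε : ℝ} (hε : 0 < ε) (hερ : ε < ρ) :
    |(∫ r in Ioi (0:ℝ), r ^ a * Φ r ^ q * (ε ^ s + r ^ s) ^ (-θ)) - Real.log (1/ε)|
      ≤ 1/(a+1) + θ/s + Real.log 2 + |Real.log ρ| := by
  have ha1 : 0 < a + 1 := by nlinarith
  set f : ℝ → ℝ := fun r => r ^ a * Φ r ^ q * (ε ^ s + r ^ s) ^ (-θ) with hf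
  have hIf : IntegrableOn f (Ioi 0) := intF hΦc hΦ0 hΦ1le hΦz hρ hq hθ ha hε
  have hfle : ∀ r : ℝ, 0 < r → f r ≤ r⁻¹ := by
    intro r hr0
    have h1 : f r ≤ r ^ a * Φ r ^ q * (r ^ s) ^ (-θ) := fbound hΦ0 hθ hε.le hr0
    have h2 : r ^ a * Φ r ^ q * (r ^ s) ^ (-θ) ≤ r ^ a * 1 * (r ^ s) ^ (-θ) :=
      mul_le_mul_of_nonneg_right (mul_le_mul_of_nonneg_left
        (phi_pow_le_one hΦ0 hΦ1le hq r) (Real.rpow_nonneg hr0.le a))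
        (Real.rpow_nonneg (Real.rpow_nonneg hr0.le s) _)
    have h3 : r ^ a * 1 * (r ^ s) ^ (-θ) = r⁻¹ := by
      rw [mul_one, ← Real.rpow_mul hr0.le, ← Real.rpow_add hr0,
        show a + s * (-θ) = -1 by rw [mul_neg, hcond]; ring, Real.rpow_neg_one]
    linarith
  -- splitting
  have hsub1 : Ioc (0:ℝ) ε ⊆ Ioi 0 := Ioc_subset_Ioi_self
  have hsub2 : Ioc ε ρ ⊆ Ioi (0:ℝ) := fun r hr => lt_trans hε hr.1
  have hsub3 : Ioi ρ ⊆ Ioi (0:ℝ) := Ioi_subset_Ioi hρ.le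
  have hsub4 : Ioc ρ (2*ρ) ⊆ Ioi (0:ℝ) := fun r hr => lt_trans hρ hr.1
  have hJ : ∫ r in Ioi (0:ℝ), f r
      = (∫ r in Ioc 0 ε, f r) + ((∫ r in Ioc ε ρ, f r) + (∫ r in Ioi ρ, f r)) := by
    rw [← setIntegral_union (Ioc_disjoint_Ioi le_rfl) measurableSet_Ioi
      (hIf.mono_set hsub2) (hIf.mono_set hsub3), Ioc_union_Ioi_eq_Ioi hερ.le,
      ← setIntegral_union (Ioc_disjoint_Ioi le_rfl) measurableSet_Ioi
      (hIf.mono_set hsub1) (hIf.mono_set (Ioi_subset_Ioi hε.le)),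
      Ioc_union_Ioi_eq_Ioi hε.le]
  -- T1 bounds
  have hT1nn : 0 ≤ ∫ r in Ioc (0:ℝ) ε, f r :=
    setIntegral_nonneg measurableSet_Ioc fun r hr => fnonneg hΦ0 a s θ q hε.le hr.1.le
  have hT1le : (∫ r in Ioc (0:ℝ) ε, f r) ≤ 1/(a+1) := by
    have hg : IntegrableOn (fun r : ℝ => (ε ^ s) ^ (-θ) * r ^ a) (Ioc 0 ε) := by
      apply Integrable.const_mul
      show IntegrableOn _ _ _
      rw [integrableOn_Ioc_iff_integrableOn_Ioo]
      exact (intervalIntegral.integrableOn_Ioo_rpow_iff hε).2 ha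
    have hεs : 0 < ε ^ s := Real.rpow_pos_of_pos hε s
    have step : (∫ r in Ioc (0:ℝ) ε, f r) ≤ ∫ r in Ioc (0:ℝ) ε, (ε ^ s) ^ (-θ) * r ^ a := by
      refine setIntegral_mono_on (hIf.mono_set hsub1) hg measurableSet_Ioc fun r hr => ?_
      have hr0 : 0 < r := hr.1
      have h1 : (ε ^ s + r ^ s) ^ (-θ) ≤ (ε ^ s) ^ (-θ) :=
        Real.rpow_le_rpow_of_nonpos hεs
          (le_add_of_nonneg_right (Real.rpow_nonneg hr0.le s)) (neg_nonpos.2 hθ.le)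
      calc f r ≤ r ^ a * 1 * (ε ^ s) ^ (-θ) := by
            apply mul_le_mul (mul_le_mul_of_nonneg_left
              (phi_pow_le_one hΦ0 hΦ1le hq r) (Real.rpow_nonneg hr0.le a)) h1
              (Real.rpow_nonneg (by positivity) _)
              (by rw [mul_one]; exact Real.rpow_nonneg hr0.le a)
        _ = (ε ^ s) ^ (-θ) * r ^ a := by ring
    have hval : ∫ r in Ioc (0:ℝ) ε, (ε ^ s) ^ (-θ) * r ^ a
        = (ε ^ s) ^ (-θ) * (ε ^ (a+1) / (a+1)) := by
      rw [integral_const_mul, ← intervalIntegral.integral_of_le hε.le,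
        integral_rpow (Or.inl ha),
        Real.zero_rpow ha1.ne', sub_zero]
    have hone : (ε ^ s) ^ (-θ) * (ε ^ (a+1) / (a+1)) = 1/(a+1) := by
      rw [← Real.rpow_mul hε.le]
      have e : ε ^ (s * (-θ)) * ε ^ (a+1) = 1 := by
        rw [← Real.rpow_add hε, show s * (-θ) + (a+1) = 0 by rw [← hcond]; ring,
          Real.rpow_zero]
      calc ε ^ (s * (-θ)) * (ε ^ (a+1) / (a+1)) = (ε ^ (s * (-θ)) * ε ^ (a+1)) / (a+1) := by
            ring
        _ = 1/(a+1) := by rw [e]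
    linarith [hval ▸ step, hone ▸ (le_refl ((ε ^ s) ^ (-θ) * (ε ^ (a+1) / (a+1))))]
  -- T3 bounds
  have hT3nn : 0 ≤ ∫ r in Ioi ρ, f r :=
    setIntegral_nonneg measurableSet_Ioi fun r hr =>
      fnonneg hΦ0 a s θ q hε.le (le_of_lt (lt_trans hρ hr))
  have hT3le : (∫ r in Ioi ρ, f r) ≤ Real.log 2 := by
    have hzero : ∫ r in Ioi (2*ρ), f r = 0 := by
      rw [setIntegral_congr_fun measurableSet_Ioi
        (g := fun _ : ℝ => (0:ℝ)) ?_, integral_zero]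
      intro r hr
      simp only [hf]
      rw [hΦz r (le_of_lt hr), Real.zero_rpow hq.ne', mul_zero, zero_mul]
    have hsp : (∫ r in Ioi ρ, f r) = ∫ r in Ioc ρ (2*ρ), f r := by
      rw [← Ioc_union_Ioi_eq_Ioi (by linarith : ρ ≤ 2*ρ),
        setIntegral_union (Ioc_disjoint_Ioi le_rfl) measurableSet_Ioi
          (hIf.mono_set hsub4) (hIf.mono_set (Ioi_subset_Ioi (by linarith))), hzero, add_zero]
    have hinv : IntegrableOn (fun r : ℝ => r⁻¹) (Ioc ρ (2*ρ)) := by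
      rw [← intervalIntegrable_iff_integrableOn_Ioc_of_le (by linarith)]
      refine intervalIntegral.intervalIntegrable_inv (fun x hx => ?_) continuousOn_id
      rw [uIcc_of_le (by linarith)] at hx
      exact ne_of_gt (lt_of_lt_of_le hρ hx.1)
    have step : (∫ r in Ioc ρ (2*ρ), f r) ≤ ∫ r in Ioc ρ (2*ρ), r⁻¹ :=
      setIntegral_mono_on (hIf.mono_set hsub4) hinv measurableSet_Ioc
        fun r hr => hfle r (lt_trans hρ hr.1)
    have hval : ∫ r in Ioc ρ (2*ρ), (r:ℝ)⁻¹ = Real.log 2 := by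
      rw [← intervalIntegral.integral_of_le (by linarith),
        integral_inv (by
          rw [uIcc_of_le (by linarith)]
          intro h
          exact absurd h.1 (not_le.2 hρ)),
        show (2*ρ)/ρ = 2 by field_simp]
    rw [hsp]
    linarith [hval ▸ step]
  -- T2 : D = log(ρ/ε) - T2, 0 ≤ D ≤ θ/s
  have hfεeq : ∀ r ∈ Ioc ε ρ, f r = r ^ a * (ε ^ s + r ^ s) ^ (-θ) := by
    intro r hr
    simp only [hf]
    rw [hΦone r (le_of_lt (lt_trans hε hr.1)) hr.2, Real.one_rpow, mul_one]
  have hinv2 : IntegrableOn (fun r : ℝ => r⁻¹) (Ioc ε ρ) := by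
    rw [← intervalIntegrable_iff_integrableOn_Ioc_of_le hερ.le]
    refine intervalIntegral.intervalIntegrable_inv (fun x hx => ?_) continuousOn_id
    rw [uIcc_of_le hερ.le] at hx
    exact ne_of_gt (lt_of_lt_of_le hε hx.1)
  have h0uIcc : (0:ℝ) ∉ uIcc ε ρ := by
    rw [uIcc_of_le hερ.le]
    intro h
    exact absurd h.1 (not_le.2 hε)
  have hDnn : 0 ≤ ∫ r in Ioc ε ρ, (r⁻¹ - f r) := by
    refine setIntegral_nonneg measurableSet_Ioc fun r hr => ?_
    have := hfle r (lt_trans hε hr.1)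
    linarith
  have hDle : (∫ r in Ioc ε ρ, (r⁻¹ - f r)) ≤ θ/s := by
    have hbint : IntegrableOn (fun r : ℝ => θ * ε ^ s * r ^ (-1-s)) (Ioc ε ρ) := by
      apply Integrable.const_mul
      show IntegrableOn _ _ _
      rw [← intervalIntegrable_iff_integrableOn_Ioc_of_le hερ.le]
      exact intervalIntegral.intervalIntegrable_rpow (Or.inr h0uIcc)
    have step : (∫ r in Ioc ε ρ, (r⁻¹ - f r)) ≤ ∫ r in Ioc ε ρ, θ * ε ^ s * r ^ (-1-s) := by
      refine setIntegral_mono_on ((hinv2.sub (hIf.mono_set hsub2))) hbint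
        measurableSet_Ioc fun r hr => ?_
      have hr0 : 0 < r := lt_trans hε hr.1
      have hrs : 0 < r ^ s := Real.rpow_pos_of_pos hr0 s
      have hεs : 0 < ε ^ s := Real.rpow_pos_of_pos hε s
      have hmvt := rpow_neg_sub_le hθ.le hrs
        (le_add_of_nonneg_left hεs.le : r ^ s ≤ ε ^ s + r ^ s)
      rw [add_sub_cancel_right] at hmvt
      have hinveq : r⁻¹ = r ^ a * (r ^ s) ^ (-θ) := by
        rw [← Real.rpow_mul hr0.le, ← Real.rpow_add hr0,
          show a + s * (-θ) = -1 by rw [mul_neg, hcond]; ring, Real.rpow_neg_one]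
      have e2 : r ^ a * ((r ^ s) ^ (-(θ+1))) = r ^ (-1-s) := by
        rw [← Real.rpow_mul hr0.le, ← Real.rpow_add hr0]
        congr 1
        rw [mul_neg, mul_add, mul_one, hcond]; ring
      calc r⁻¹ - f r = r ^ a * ((r ^ s) ^ (-θ) - (ε ^ s + r ^ s) ^ (-θ)) := by
            rw [hfεeq r hr, hinveq]; ring
        _ ≤ r ^ a * (θ * (r ^ s) ^ (-(θ+1)) * (ε ^ s)) :=
            mul_le_mul_of_nonneg_left hmvt (Real.rpow_nonneg hr0.le a)
        _ = θ * ε ^ s * (r ^ a * ((r ^ s) ^ (-(θ+1)))) := by ring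
        _ = θ * ε ^ s * r ^ (-1-s) := by rw [e2]
    have hval : ∫ r in Ioc ε ρ, θ * ε ^ s * r ^ (-1-s)
        = θ * ε ^ s * ((ρ ^ (-s) - ε ^ (-s)) / (-s)) := by
      rw [integral_const_mul, ← intervalIntegral.integral_of_le hερ.le,
        integral_rpow (Or.inr ⟨by intro h; exact hs.ne' (by linarith), h0uIcc⟩)]
      rw [show (-1:ℝ) - s + 1 = -s by ring]
    have hfin : θ * ε ^ s * ((ρ ^ (-s) - ε ^ (-s)) / (-s)) ≤ θ/s := by
      have e1 : ε ^ s * ε ^ (-s) = 1 := by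
        rw [← Real.rpow_add hε]; simp
      have h4 : 0 ≤ ε ^ s * ρ ^ (-s) :=
        mul_nonneg (Real.rpow_nonneg hε.le s) (Real.rpow_nonneg hρ.le (-s))
      have e3 : θ * ε ^ s * ((ρ ^ (-s) - ε ^ (-s)) / (-s))
          = (θ / s) * (ε ^ s * ε ^ (-s)) - (θ/s) * (ε ^ s * ρ ^ (-s)) := by
        rw [div_neg]
        ring
      rw [e3, e1, mul_one]
      have : 0 ≤ (θ/s) * (ε ^ s * ρ ^ (-s)) := by positivity
      linarith
    linarith
  have hDeq : (∫ r in Ioc ε ρ, (r⁻¹ - f r))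
      = Real.log (ρ/ε) - ∫ r in Ioc ε ρ, f r := by
    rw [integral_sub hinv2 (hIf.mono_set hsub2)]
    congr 1
    rw [← intervalIntegral.integral_of_le hερ.le, integral_inv h0uIcc]
  have hlog : Real.log (ρ/ε) = Real.log ρ + Real.log (1/ε) := by
    rw [Real.log_div hρ.ne' hε.ne', Real.log_div one_ne_zero hε.ne', Real.log_one]
    ring
  have hlog2 : (0:ℝ) ≤ Real.log 2 := Real.log_nonneg one_le_two
  have habs1 := le_abs_self (Real.log ρ)
  have habs2 := neg_abs_le (Real.log ρ)
  have hθs : 0 ≤ θ/s := by positivity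
  have ha1' : 0 ≤ 1/(a+1) := by positivity
  rw [abs_le]
  constructor <;> [skip; skip] <;>
  · rw [hJ]
    linarith [hDeq, hDnn, hDle, hlog]
end OneD

open Asymptotics in
lemma reduction (N : ℕ) (hN : 3 ≤ N) (α : ℝ) (hα : -2 < α) (q : ℝ) (hq1 : 1 ≤ q)
    (Φ : ℝ → ℝ) (hΦzero : ∀ r : ℝ, 1 ≤ r → Φ r = 0)
    (φ : Euc N → ℝ) (hφΦ : ∀ x, φ x = Φ ‖x‖) (hΦ0 : ∀ r : ℝ, 0 ≤ r → 0 ≤ Φ r)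
    (ε : ℝ) (hε : 0 < ε) :
    ∫ x in Omega N α, ‖x‖ ^ α * (φ x * bubbleFn N α ε x) ^ q
      = Cconst N α ^ q * omegaN N * ε ^ (q * ((N:ℝ) - 2) / 2) *
        ∫ r in Ioi (0:ℝ), r ^ ((N:ℝ) - 1 + α) * Φ r ^ q *
          (ε ^ (α + 2) + r ^ (α + 2)) ^ (-(q * ((N:ℝ) - 2) / (α + 2))) := by
  have hN3 : (3:ℝ) ≤ (N:ℝ) := by exact_mod_cast hN
  have hN2 : (0:ℝ) < (N:ℝ) - 2 := by linarith
  have hNα : (0:ℝ) < (N:ℝ) + α := by linarith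
  have hs : (0:ℝ) < α + 2 := by linarith
  have hq0 : (0:ℝ) < q := by linarith
  have hC : 0 < Cconst N α := Real.rpow_pos_of_pos (by positivity) _
  set g : ℝ → ℝ := fun r => r ^ α * Φ r ^ q *
      (Cconst N α ^ q * ε ^ (q * ((N:ℝ) - 2) / 2)) *
      (ε ^ (α + 2) + r ^ (α + 2)) ^ (-(q * ((N:ℝ) - 2) / (α + 2))) with hg
  have stepA : ∀ x : Euc N, ‖x‖ ^ α * (φ x * bubbleFn N α ε x) ^ q = g ‖x‖ := by
    intro x
    have hr0 : (0:ℝ) ≤ ‖x‖ := norm_nonneg x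
    have hbase : (0:ℝ) < ε ^ (α + 2) + ‖x‖ ^ (α + 2) := by
      have := Real.rpow_pos_of_pos hε (α + 2)
      have := Real.rpow_nonneg hr0 (α + 2)
      linarith
    have hbub0 : 0 ≤ bubbleFn N α ε x := by
      unfold bubbleFn
      have := Real.rpow_pos_of_pos hε (((N:ℝ) - 2) / 2)
      positivity
    rw [hφΦ, Real.mul_rpow (hΦ0 _ hr0) hbub0]
    unfold bubbleFn
    rw [Real.mul_rpow (by positivity) (Real.rpow_nonneg hbase.le _),
      Real.mul_rpow (by positivity) (Real.rpow_pos_of_pos hε _).le,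
      ← Real.rpow_mul hε.le, ← Real.rpow_mul hbase.le,
      show ((N:ℝ) - 2) / 2 * q = q * ((N:ℝ) - 2) / 2 by ring,
      show -(((N:ℝ) - 2) / (α + 2)) * q = -(q * ((N:ℝ) - 2) / (α + 2)) by ring]
    simp only [hg, Cconst]
    ring
  have stepB : ∀ x ∉ Omega N α, ‖x‖ ^ α * (φ x * bubbleFn N α ε x) ^ q = 0 := by
    intro x hx
    by_cases hx1 : 1 ≤ ‖x‖
    · rw [hφΦ, hΦzero _ hx1, zero_mul, Real.zero_rpow hq0.ne', mul_zero]
    · have hxball : x ∈ Metric.ball (0 : Euc N) 1 := by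
        rw [mem_ball_zero_iff]; linarith [lt_of_not_ge hx1]
      unfold Omega at hx
      split_ifs at hx with h
      · exact absurd hxball hx
      · have hx0 : x = 0 := by
          by_contra h0
          exact hx ⟨hxball, h0⟩
        subst hx0
        rw [norm_zero, Real.zero_rpow (by push_neg at h; exact ne_of_lt h), zero_mul]
  haveI : Nontrivial (Euc N) := by
    refine nontrivial_of_ne (EuclideanSpace.single (⟨0, by omega⟩ : Fin N) (1:ℝ)) 0 ?_
    intro h
    have := congrArg (fun v : Euc N => v ⟨0, by omega⟩) h
    simp at this
  rw [setIntegral_eq_integral_of_forall_compl_eq_zero stepB]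
  have : (fun x : Euc N => ‖x‖ ^ α * (φ x * bubbleFn N α ε x) ^ q) = fun x => g ‖x‖ := by
    funext x; exact stepA x
  rw [show ∫ x : Euc N, ‖x‖ ^ α * (φ x * bubbleFn N α ε x) ^ q = ∫ x : Euc N, g ‖x‖ from by rw [this]]
  rw [integral_fun_norm_addHaar volume g, finrank_euclideanSpace_fin, nsmul_eq_mul, smul_eq_mul]
  have key : ∫ y in Ioi (0:ℝ), y ^ (N - 1) • g y
      = (Cconst N α ^ q * ε ^ (q * ((N:ℝ) - 2) / 2)) *
        ∫ r in Ioi (0:ℝ), r ^ ((N:ℝ) - 1 + α) * Φ r ^ q *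
          (ε ^ (α + 2) + r ^ (α + 2)) ^ (-(q * ((N:ℝ) - 2) / (α + 2))) := by
    rw [← integral_const_mul]
    refine setIntegral_congr_fun measurableSet_Ioi ?_
    intro r hr
    have hr0 : (0:ℝ) < r := hr
    have hcast : (r:ℝ) ^ (N - 1 : ℕ) = r ^ ((N:ℝ) - 1) := by
      rw [← Real.rpow_natCast r (N - 1)]
      congr 1
      rw [Nat.cast_sub (by omega : 1 ≤ N)]
      norm_num
    simp only [smul_eq_mul, hg]
    rw [hcast, Real.rpow_add hr0 ((N:ℝ) - 1) α]
    ring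
  rw [key, omegaN]
  rw [measureReal_def]
  ring

open Asymptotics in
/-- asymptotics of `∫_Ω |x|^α U_{ε,α}^q` as `ε → 0⁺`. -/
theorem statement11 (N : ℕ) (hN : 3 ≤ N) (α : ℝ) (hα : -2 < α)
    (ρ : ℝ) (hρ : ρ ∈ Set.Ioo (0 : ℝ) (1 / 2))
    (φ : Euc N → ℝ) (hφsmooth : ContDiff ℝ (⊤ : ℕ∞) φ) (hφcpt : HasCompactSupport φ)
    (hφrad : IsRadial φ) (hφ01 : ∀ x, φ x ∈ Set.Icc (0 : ℝ) 1)
    (hφ1 : ∀ x : Euc N, ‖x‖ ≤ ρ → φ x = 1) (hφ0 : ∀ x : Euc N, 2 * ρ ≤ ‖x‖ → φ x = 0)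
    (q : ℝ) (hq1 : 1 ≤ q) (hq2 : q < critExp N α) :
    (q = ((N : ℝ) + α) / ((N : ℝ) - 2) →
      (fun ε : ℝ =>
          (∫ x in Omega N α, ‖x‖ ^ α * (φ x * bubbleFn N α ε x) ^ q) -
            Cconst N α ^ q * omegaN N * ε ^ (((N : ℝ) + α) / 2) * Real.log (1 / ε))
        =O[nhdsWithin (0 : ℝ) (Set.Ioi 0)] fun ε : ℝ => ε ^ (((N : ℝ) + α) / 2)) ∧
    (((N : ℝ) + α) / ((N : ℝ) - 2) < q →
      ∃ C₁ > (0 : ℝ),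
        (fun ε : ℝ =>
            (∫ x in Omega N α, ‖x‖ ^ α * (φ x * bubbleFn N α ε x) ^ q) -
              C₁ * ε ^ ((N : ℝ) + α - q * ((N : ℝ) - 2) / 2))
          =o[nhdsWithin (0 : ℝ) (Set.Ioi 0)]
            fun ε : ℝ => ε ^ ((N : ℝ) + α - q * ((N : ℝ) - 2) / 2)) ∧
    (q < ((N : ℝ) + α) / ((N : ℝ) - 2) →
      ∃ C₂ > (0 : ℝ),
        (fun ε : ℝ =>
            (∫ x in Omega N α, ‖x‖ ^ α * (φ x * bubbleFn N α ε x) ^ q) -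
              C₂ * ε ^ (q * ((N : ℝ) - 2) / 2))
          =o[nhdsWithin (0 : ℝ) (Set.Ioi 0)]
            fun ε : ℝ => ε ^ (q * ((N : ℝ) - 2) / 2)) := by
  
  obtain ⟨hρ0, hρhalf⟩ := hρ
  have hN3 : (3:ℝ) ≤ (N:ℝ) := by exact_mod_cast hN
  have hN2 : (0:ℝ) < (N:ℝ) - 2 := by linarith
  have hNα : (0:ℝ) < (N:ℝ) + α := by linarith
  have hs : (0:ℝ) < α + 2 := by linarith
  have hq0 : (0:ℝ) < q := by linarith
  have hθpos : 0 < q * ((N:ℝ) - 2) / (α + 2) := by positivity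
  have ha : (-1:ℝ) < (N:ℝ) - 1 + α := by linarith
  have hsθ : (α + 2) * (q * ((N:ℝ) - 2) / (α + 2)) = q * ((N:ℝ) - 2) := by field_simp
  have hidx : 0 < N := by omega
  set e : Euc N := EuclideanSpace.single (⟨0, hidx⟩ : Fin N) (1:ℝ) with he
  have hnorme : ‖e‖ = 1 := by rw [he, EuclideanSpace.norm_single]; norm_num
  set Φ : ℝ → ℝ := fun r => φ (r • e) with hΦdef
  have hnorm : ∀ r : ℝ, 0 ≤ r → ‖r • e‖ = r := by
    intro r hr; rw [norm_smul, hnorme, mul_one, Real.norm_eq_abs, abs_of_nonneg hr]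
  have hφΦ : ∀ x : Euc N, φ x = Φ ‖x‖ := fun x =>
    hφrad x (‖x‖ • e) (by rw [hnorm _ (norm_nonneg x)])
  have hΦc : Continuous Φ := hφsmooth.continuous.comp (continuous_id.smul continuous_const)
  have hΦ0 : ∀ r, 0 ≤ Φ r := fun r => (hφ01 _).1
  have hΦ1le : ∀ r, Φ r ≤ 1 := fun r => (hφ01 _).2
  have hΦone : ∀ r : ℝ, 0 ≤ r → r ≤ ρ → Φ r = 1 := fun r h1 h2 =>
    hφ1 _ (by rw [hnorm r h1]; exact h2)
  have hΦz : ∀ r : ℝ, 2 * ρ ≤ r → Φ r = 0 := fun r h2 =>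
    hφ0 _ (by rw [hnorm r (by linarith)]; exact h2)
  have hΦz1 : ∀ r : ℝ, 1 ≤ r → Φ r = 0 := fun r h1 => hΦz r (by linarith)
  have hred : ∀ ε : ℝ, 0 < ε →
      (∫ x in Omega N α, ‖x‖ ^ α * (φ x * bubbleFn N α ε x) ^ q)
        = Cconst N α ^ q * omegaN N * ε ^ (q * ((N:ℝ) - 2) / 2) *
          ∫ r in Ioi (0:ℝ), r ^ ((N:ℝ) - 1 + α) * Φ r ^ q *
            (ε ^ (α + 2) + r ^ (α + 2)) ^ (-(q * ((N:ℝ) - 2) / (α + 2))) :=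
    fun ε hε => reduction N hN α hα q hq1 Φ hΦz1 φ hφΦ (fun r _ => hΦ0 r) ε hε
  have hCpos : 0 < Cconst N α ^ q :=
    Real.rpow_pos_of_pos (Real.rpow_pos_of_pos (by positivity) _) q
  have hωpos : 0 < omegaN N := by
    have h1 : 0 < (volume (Metric.ball (0:Euc N) 1)).toReal := by
      apply ENNReal.toReal_pos
      · exact (measure_ball_pos volume 0 one_pos).ne'
      · exact measure_ball_lt_top.ne
    have h2 : (0:ℝ) < (N:ℝ) := by linarith
    exact mul_pos h2 h1
  refine ⟨?_, ?_, ?_⟩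
  · -- case (i)
    intro heq
    have hqN : q * ((N:ℝ) - 2) = (N:ℝ) + α := by
      rw [heq]; field_simp
    have hcond : (α + 2) * (q * ((N:ℝ) - 2) / (α + 2)) = ((N:ℝ) - 1 + α) + 1 := by
      rw [hsθ, hqN]; ring
    apply helper_bigO (C := Cconst N α ^ q * omegaN N)
      (H := fun ε => (∫ r in Ioi (0:ℝ), r ^ ((N:ℝ) - 1 + α) * Φ r ^ q *
            (ε ^ (α + 2) + r ^ (α + 2)) ^ (-(q * ((N:ℝ) - 2) / (α + 2)))) - Real.log (1/ε))
      (M := 1/(((N:ℝ) - 1 + α) + 1) + (q * ((N:ℝ) - 2) / (α + 2))/(α + 2) + Real.log 2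
        + |Real.log ρ|)
    · filter_upwards [self_mem_nhdsWithin] with ε hε
      rw [hred ε hε, show q * ((N:ℝ) - 2) / 2 = ((N:ℝ) + α)/2 by rw [hqN]]
      ring
    · filter_upwards [Ioo_mem_nhdsGT_of_mem (⟨le_refl (0:ℝ), hρ0⟩ : (0:ℝ) ∈ Ico 0 ρ)]
        with ε hε
      exact boundJ hΦc hΦ0 hΦ1le hΦone hΦz hρ0 hq0 hθpos hs ha hcond hε.1 hε.2
  · -- case (ii)
    intro hgt
    have hqN : (N:ℝ) + α < q * ((N:ℝ) - 2) := (div_lt_iff₀ hN2).mp hgt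
    have hcond : ((N:ℝ) - 1 + α) - (α + 2) * (q * ((N:ℝ) - 2) / (α + 2)) < -1 := by
      rw [hsθ]; linarith
    refine ⟨Cconst N α ^ q * omegaN N *
      ∫ t in Ioi (0:ℝ), t ^ ((N:ℝ) - 1 + α) *
        (1 + t ^ (α + 2)) ^ (-(q * ((N:ℝ) - 2) / (α + 2))), ?_, ?_⟩
    · exact mul_pos (mul_pos hCpos hωpos) (posK0 hs hθpos ha hcond)
    · apply helper_littleO (C := Cconst N α ^ q * omegaN N)
        (G := fun ε => ∫ t in Ioi (0:ℝ), t ^ ((N:ℝ) - 1 + α) * Φ (ε * t) ^ q *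
          (1 + t ^ (α + 2)) ^ (-(q * ((N:ℝ) - 2) / (α + 2))))
      · filter_upwards [self_mem_nhdsWithin] with ε hε
        rw [hred ε hε, subJ hΦ0 hε]
        have hexp : q * ((N:ℝ) - 2) / 2 + (((N:ℝ) - 1 + α) + 1
            - (α + 2) * (q * ((N:ℝ) - 2) / (α + 2))) = (N:ℝ) + α - q * ((N:ℝ) - 2) / 2 := by
          rw [hsθ]; ring
        calc Cconst N α ^ q * omegaN N * ε ^ (q * ((N:ℝ) - 2) / 2) *
              (ε ^ (((N:ℝ) - 1 + α) + 1 - (α + 2) * (q * ((N:ℝ) - 2) / (α + 2))) *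
                ∫ t in Ioi (0:ℝ), t ^ ((N:ℝ) - 1 + α) * Φ (ε * t) ^ q *
                  (1 + t ^ (α + 2)) ^ (-(q * ((N:ℝ) - 2) / (α + 2))))
            = Cconst N α ^ q * omegaN N * (ε ^ (q * ((N:ℝ) - 2) / 2) *
              ε ^ (((N:ℝ) - 1 + α) + 1 - (α + 2) * (q * ((N:ℝ) - 2) / (α + 2)))) *
                ∫ t in Ioi (0:ℝ), t ^ ((N:ℝ) - 1 + α) * Φ (ε * t) ^ q *
                  (1 + t ^ (α + 2)) ^ (-(q * ((N:ℝ) - 2) / (α + 2))) := by ring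
          _ = Cconst N α ^ q * omegaN N * ε ^ ((N:ℝ) + α - q * ((N:ℝ) - 2) / 2) *
                ∫ t in Ioi (0:ℝ), t ^ ((N:ℝ) - 1 + α) * Φ (ε * t) ^ q *
                  (1 + t ^ (α + 2)) ^ (-(q * ((N:ℝ) - 2) / (α + 2))) := by
              rw [← Real.rpow_add hε, hexp]
      · exact limitK hΦc hΦ0 hΦ1le hΦone hρ0 hq0 hθpos hs ha hcond
  · -- case (iii)
    intro hlt
    have hqN : q * ((N:ℝ) - 2) < (N:ℝ) + α := by
      have := (lt_div_iff₀ hN2).mp hlt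
      linarith
    have hcond : -1 < ((N:ℝ) - 1 + α) - (α + 2) * (q * ((N:ℝ) - 2) / (α + 2)) := by
      rw [hsθ]; linarith
    refine ⟨Cconst N α ^ q * omegaN N *
      ∫ r in Ioi (0:ℝ), r ^ ((N:ℝ) - 1 + α) * Φ r ^ q *
        (r ^ (α + 2)) ^ (-(q * ((N:ℝ) - 2) / (α + 2))), ?_, ?_⟩
    · exact mul_pos (mul_pos hCpos hωpos)
        (posJ0 hΦc hΦ0 hΦ1le hΦone hΦz hρ0 hq0 hθpos hcond)
    · apply helper_littleO (C := Cconst N α ^ q * omegaN N)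
        (G := fun ε => ∫ r in Ioi (0:ℝ), r ^ ((N:ℝ) - 1 + α) * Φ r ^ q *
          (ε ^ (α + 2) + r ^ (α + 2)) ^ (-(q * ((N:ℝ) - 2) / (α + 2))))
      · filter_upwards [self_mem_nhdsWithin] with ε hε
        exact hred ε hε
      · exact limitJ hΦc hΦ0 hΦ1le hΦz hρ0 hq0 hθpos hs hcond
end

section
/- Let N ≥ 3, α > −2 and 1 ≤ p < 2* := 2N/(N−2). Then, as ε → 0⁺: (i) if p = N/(N−2), then ∫_Ω U_{ε,α}^p = C_{α,N}^p·ω_N·ε^{N/2}·log(1/ε) + O(ε^{N/2}); (ii) if N/(N−2) < p < 2*, then there is a constant C₃ > 0 with ∫_Ω U_{ε,α}^p = C₃·ε^{N−p(N−2)/2} + o(ε^{N−p(N−2)/2}); (iii) if 1 ≤ p < N/(N−2), then there is a constant C₄ > 0 with ∫_Ω U_{ε,α}^p = C₄·ε^{p(N−2)/2} + o(ε^{p(N−2)/2}). -/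
open MeasureTheory Metric Set Filter

open Real

section Helpers

lemma neg_rpow_le' {q x y : ℝ} (hq : 0 ≤ q) (hx : 0 < x) (hxy : x ≤ y) :
    y ^ (-q) ≤ x ^ (-q) := by
  rw [Real.rpow_neg (hx.trans_le hxy).le, Real.rpow_neg hx.le]
  exact inv_anti₀ (Real.rpow_pos_of_pos hx _) (Real.rpow_le_rpow hx.le hxy hq)

lemma one_sub_rpow_le' {c t : ℝ} (hc : 0 < c) (ht : 0 < t) (ht1 : t ≤ 1) :
    1 - t ^ c ≤ max c 1 * (1 - t) := by
  rcases le_total c 1 with h | h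
  · have h2 : t ^ (1:ℝ) ≤ t ^ c := Real.rpow_le_rpow_of_exponent_ge ht ht1 h
    rw [Real.rpow_one] at h2
    have hm : max c 1 = 1 := max_eq_right h
    nlinarith [sub_nonneg.2 ht1]
  · have hb := one_add_mul_self_le_rpow_one_add (s := t - 1) (by linarith) h
    have he : (1 : ℝ) + (t - 1) = t := by ring
    rw [he] at hb
    have hm : max c 1 = c := max_eq_left h
    nlinarith [sub_nonneg.2 ht1]

lemma Cconst_pos {N : ℕ} (hN : 3 ≤ N) {α : ℝ} (hα : -2 < α) : 0 < Cconst N α := by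
  rw [Cconst]
  apply Real.rpow_pos_of_pos
  have h1 : (0:ℝ) < (N : ℝ) + α := by
    have : (3:ℝ) ≤ (N : ℝ) := by exact_mod_cast hN
    linarith
  have h2 : (0:ℝ) < (N : ℝ) - 2 := by
    have : (3:ℝ) ≤ (N : ℝ) := by exact_mod_cast hN
    linarith
  positivity

lemma omegaN_pos {N : ℕ} (hN : 3 ≤ N) : 0 < omegaN N := by
  haveI : Nonempty (Fin N) := ⟨⟨0, by omega⟩⟩
  rw [omegaN]
  apply mul_pos
  · have : 0 < N := by omega
    exact_mod_cast this
  · exact ENNReal.toReal_pos (Metric.measure_ball_pos volume 0 one_pos).ne'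
      measure_ball_lt_top.ne

end Helpers

section Reduce

lemma reduce (N : ℕ) (hN : 3 ≤ N) (α : ℝ) (F : ℝ → ℝ)
    (hF0 : ∀ r, 1 ≤ r → F r = 0) :
    ∫ x in Omega N α, F ‖x‖ = omegaN N * ∫ r in Ioi (0:ℝ), r ^ ((N:ℝ) - 1) * F r := by
  haveI : Nonempty (Fin N) := ⟨⟨0, by omega⟩⟩
  have h1 : ∫ x in Omega N α, F ‖x‖ = ∫ x in Metric.ball (0 : Euc N) 1, F ‖x‖ := by
    unfold Omega
    split_ifs with h
    · rfl
    · apply setIntegral_congr_set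
      refine diff_ae_eq_self.2 ?_
      exact measure_mono_null inter_subset_right (measure_singleton _)
  have h2 : ∫ x in Metric.ball (0 : Euc N) 1, F ‖x‖ = ∫ x : Euc N, F ‖x‖ := by
    apply setIntegral_eq_integral_of_forall_compl_eq_zero
    intro x hx
    apply hF0
    simpa [mem_ball, dist_zero_right, not_lt] using hx
  have h3 := MeasureTheory.integral_fun_norm_addHaar (volume : Measure (Euc N)) F
  rw [h1, h2, h3]
  have hdim : Module.finrank ℝ (Euc N) = N := finrank_euclideanSpace_fin
  rw [hdim, nsmul_eq_mul, smul_eq_mul, omegaN, mul_assoc]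
  congr 1
  congr 1
  apply setIntegral_congr_fun measurableSet_Ioi
  intro y hy
  simp only [smul_eq_mul]
  rw [← Real.rpow_natCast y (N-1), Nat.cast_sub (by omega), Nat.cast_one]

lemma reduce' (N : ℕ) (hN : 3 ≤ N) (α : ℝ) (hα : -2 < α)
    (ρ : ℝ) (hρ : ρ ∈ Set.Ioo (0 : ℝ) (1 / 2))
    (φ : Euc N → ℝ) (hφrad : IsRadial φ) (hφ01 : ∀ x, φ x ∈ Set.Icc (0 : ℝ) 1)
    (hφ0 : ∀ x : Euc N, 2 * ρ ≤ ‖x‖ → φ x = 0)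
    (p : ℝ) (hp1 : 1 ≤ p) (v : Euc N) (hnv : ∀ r : ℝ, 0 ≤ r → ‖r • v‖ = r)
    (ε : ℝ) (hε : 0 < ε) :
    ∫ x in Omega N α, (φ x * bubbleFn N α ε x) ^ p
      = omegaN N * Cconst N α ^ p * ε ^ (p * ((N:ℝ) - 2) / 2) *
        ∫ r in Ioi (0:ℝ), r ^ ((N:ℝ) - 1) * (φ (r • v)) ^ p *
          (ε ^ (α + 2) + r ^ (α + 2)) ^ (-(p * ((N:ℝ) - 2) / (α + 2))) := by
  set K := Cconst N α with hK
  have hKpos : 0 < K := Cconst_pos hN hα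
  set F : ℝ → ℝ := fun r => (φ (r • v) *
    (K * ε ^ (((N:ℝ) - 2) / 2) * (ε ^ (α + 2) + r ^ (α + 2)) ^ (-(((N:ℝ) - 2) / (α + 2))))) ^ p
    with hF
  have hFeq : ∀ x : Euc N, (φ x * bubbleFn N α ε x) ^ p = F ‖x‖ := by
    intro x
    have h1 : φ x = φ (‖x‖ • v) := hφrad _ _ (by rw [hnv _ (norm_nonneg x)])
    simp only [hF]
    rw [← h1]
    rw [hK]
    simp only [bubbleFn, Cconst]
  have h0 : ∫ x in Omega N α, (φ x * bubbleFn N α ε x) ^ p = ∫ x in Omega N α, F ‖x‖ :=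
    integral_congr_ae (ae_of_all _ fun x => hFeq x)
  have hF0 : ∀ r, 1 ≤ r → F r = 0 := by
    intro r hr
    have : φ (r • v) = 0 := by
      apply hφ0
      rw [hnv r (by linarith)]
      linarith [hρ.2]
    rw [hF]
    simp only [this, zero_mul, Real.zero_rpow (by linarith : p ≠ 0)]
  rw [h0, reduce N hN α F hF0]
  have hkey : ∀ r ∈ Ioi (0:ℝ), r ^ ((N:ℝ) - 1) * F r
      = (K ^ p * ε ^ (p * ((N:ℝ) - 2) / 2)) * (r ^ ((N:ℝ) - 1) * (φ (r • v)) ^ p *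
          (ε ^ (α + 2) + r ^ (α + 2)) ^ (-(p * ((N:ℝ) - 2) / (α + 2)))) := by
    intro r hr
    have hr0 : (0:ℝ) < r := hr
    have ha : (0:ℝ) < α + 2 := by linarith
    have hX : (0:ℝ) < ε ^ (α + 2) + r ^ (α + 2) := by positivity
    have hg0 : 0 ≤ φ (r • v) := (hφ01 _).1
    simp only [hF]
    rw [Real.mul_rpow hg0 (by positivity), Real.mul_rpow (by positivity) (by positivity),
      Real.mul_rpow hKpos.le (by positivity),
      ← Real.rpow_mul hε.le, ← Real.rpow_mul hX.le]
    rw [show ((N:ℝ) - 2) / 2 * p = p * ((N:ℝ) - 2) / 2 by ring,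
      show -(((N:ℝ) - 2) / (α + 2)) * p = -(p * ((N:ℝ) - 2) / (α + 2)) by ring]
    ring
  rw [setIntegral_congr_fun measurableSet_Ioi hkey, MeasureTheory.integral_const_mul]
  ring

end Reduce

section OneD

variable {n a q ρ : ℝ} {G : ℝ → ℝ}

lemma meas1d (ha : 0 < a) (hGc : Continuous G) {ε : ℝ} (hε : 0 ≤ ε) :
    AEStronglyMeasurable (fun r : ℝ => r ^ (n-1) * G r * (ε ^ a + r ^ a) ^ (-q))
      (volume.restrict (Ioi (0:ℝ))) := by
  apply ContinuousOn.aestronglyMeasurable ?_ measurableSet_Ioi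
  apply ContinuousOn.mul
  · apply ContinuousOn.mul
    · exact continuousOn_id.rpow_const fun r hr => Or.inl (ne_of_gt hr)
    · exact hGc.continuousOn
  · apply ContinuousOn.rpow_const
    · exact (continuousOn_const.add (continuousOn_id.rpow_const
        fun r hr => Or.inl (ne_of_gt hr)))
    · intro r hr
      left
      have h1 : (0:ℝ) < r ^ a := Real.rpow_pos_of_pos hr a
      have h2 : (0:ℝ) ≤ ε ^ a := Real.rpow_nonneg hε a
      positivity

lemma meas1d' (ha : 0 < a) (hGc : Continuous G) :
    AEStronglyMeasurable (fun r : ℝ => r ^ (n-1) * G r * r ^ (-(a*q)))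
      (volume.restrict (Ioi (0:ℝ))) := by
  apply ContinuousOn.aestronglyMeasurable ?_ measurableSet_Ioi
  apply ContinuousOn.mul
  · exact ((continuousOn_id.rpow_const fun r hr => Or.inl (ne_of_gt hr)).mul hGc.continuousOn)
  · exact continuousOn_id.rpow_const fun r hr => Or.inl (ne_of_gt hr)

lemma bound_le (hq : 0 < q) {ε r : ℝ} (hr : 0 < r) (hε : 0 ≤ ε) :
    (ε ^ a + r ^ a) ^ (-q) ≤ r ^ (-(a*q)) := by
  have h1 : (0:ℝ) < r ^ a := Real.rpow_pos_of_pos hr a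
  have h2 : (0:ℝ) ≤ ε ^ a := Real.rpow_nonneg hε a
  have := neg_rpow_le' hq.le h1 (by linarith : r ^ a ≤ ε ^ a + r ^ a)
  calc (ε ^ a + r ^ a) ^ (-q) ≤ (r ^ a) ^ (-q) := this
    _ = r ^ (-(a*q)) := by rw [← Real.rpow_mul hr.le]; ring_nf

lemma dom_integrable (hρ : 0 < ρ) (haq : a*q < n) :
    Integrable (indicator (Ioc (0:ℝ) (2*ρ)) (fun r => r ^ (n-1-a*q)))
      (volume.restrict (Ioi (0:ℝ))) := by
  apply Integrable.restrict
  apply IntegrableOn.integrable_indicator ?_ measurableSet_Ioc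
  have h : IntervalIntegrable (fun r : ℝ => r ^ (n-1-a*q)) volume 0 (2*ρ) :=
    intervalIntegral.intervalIntegrable_rpow' (by linarith)
  exact (intervalIntegrable_iff_integrableOn_Ioc_of_le (by linarith)).1 h

/-- pointwise bound for case (iii): for ε ≥ 0, r > 0 -/
lemma ptbound (hq : 0 < q) (hG0 : ∀ r, 0 ≤ G r) (hG1 : ∀ r, G r ≤ 1)
    (hGz : ∀ r, 2*ρ ≤ r → G r = 0) {ε r : ℝ} (hε : 0 ≤ ε) (hr : 0 < r) :
    ‖r ^ (n-1) * G r * (ε ^ a + r ^ a) ^ (-q)‖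
      ≤ indicator (Ioc (0:ℝ) (2*ρ)) (fun r => r ^ (n-1-a*q)) r := by
  have h1 : (0:ℝ) < r ^ a := Real.rpow_pos_of_pos hr a
  have h2 : (0:ℝ) ≤ ε ^ a := Real.rpow_nonneg hε a
  have hXq : (0:ℝ) ≤ (ε ^ a + r ^ a) ^ (-q) := Real.rpow_nonneg (by linarith) _
  have hmm : (0:ℝ) ≤ r ^ (n-1) := Real.rpow_nonneg hr.le _
  rw [Real.norm_eq_abs, abs_of_nonneg (mul_nonneg (mul_nonneg hmm (hG0 r)) hXq)]
  rcases le_or_gt r (2*ρ) with h | h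
  · rw [indicator_of_mem (by exact ⟨hr, h⟩)]
    calc r ^ (n-1) * G r * (ε ^ a + r ^ a) ^ (-q)
        ≤ r ^ (n-1) * 1 * r ^ (-(a*q)) := by
          apply mul_le_mul
          · exact mul_le_mul_of_nonneg_left (hG1 r) hmm
          · exact bound_le hq hr hε
          · exact hXq
          · positivity
      _ = r ^ (n-1-a*q) := by
          rw [mul_one, ← Real.rpow_add hr]; ring_nf
  · rw [indicator_of_notMem (by simp [not_and_or]; intro _; linarith)]
    rw [hGz r h.le]
    simp

/-- pointwise bound for the limit function -/
lemma ptbound0 (hq : 0 < q) (hG0 : ∀ r, 0 ≤ G r) (hG1 : ∀ r, G r ≤ 1)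
    (hGz : ∀ r, 2*ρ ≤ r → G r = 0) {r : ℝ} (hr : 0 < r) :
    ‖r ^ (n-1) * G r * r ^ (-(a*q))‖
      ≤ indicator (Ioc (0:ℝ) (2*ρ)) (fun r => r ^ (n-1-a*q)) r := by
  have hXq : (0:ℝ) ≤ r ^ (-(a*q)) := Real.rpow_nonneg hr.le _
  have hmm : (0:ℝ) ≤ r ^ (n-1) := Real.rpow_nonneg hr.le _
  rw [Real.norm_eq_abs, abs_of_nonneg (mul_nonneg (mul_nonneg hmm (hG0 r)) hXq)]
  rcases le_or_gt r (2*ρ) with h | h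
  · rw [indicator_of_mem (by exact ⟨hr, h⟩)]
    calc r ^ (n-1) * G r * r ^ (-(a*q))
        ≤ r ^ (n-1) * 1 * r ^ (-(a*q)) := by
          apply mul_le_mul_of_nonneg_right
            (mul_le_mul_of_nonneg_left (hG1 r) hmm) hXq
      _ = r ^ (n-1-a*q) := by
          rw [mul_one, ← Real.rpow_add hr]; ring_nf
  · rw [indicator_of_notMem (by simp [not_and_or]; intro _; linarith)]
    rw [hGz r h.le]
    simp

/-- Case (iii) main convergence -/
lemma caseiii (ha : 0 < a) (hq : 0 < q) (hρ : 0 < ρ)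
    (hGc : Continuous G) (hG0 : ∀ r, 0 ≤ G r) (hG1 : ∀ r, G r ≤ 1)
    (hGρ : ∀ r, 0 ≤ r → r ≤ ρ → G r = 1) (hGz : ∀ r, 2*ρ ≤ r → G r = 0)
    (haq : a*q < n) :
    (0 < ∫ r in Ioi (0:ℝ), r ^ (n-1) * G r * r ^ (-(a*q))) ∧
    Tendsto (fun ε : ℝ => ∫ r in Ioi (0:ℝ), r ^ (n-1) * G r * (ε ^ a + r ^ a) ^ (-q))
      (nhdsWithin 0 (Ioi 0))
      (nhds (∫ r in Ioi (0:ℝ), r ^ (n-1) * G r * r ^ (-(a*q)))) := by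
  set b := indicator (Ioc (0:ℝ) (2*ρ)) (fun r : ℝ => r ^ (n-1-a*q)) with hb
  have hbint : Integrable b (volume.restrict (Ioi (0:ℝ))) := dom_integrable hρ haq
  have hf0meas := meas1d' (n := n) (a := a) (q := q) ha hGc
  have hf0bound : ∀ᵐ r ∂(volume.restrict (Ioi (0:ℝ))),
      ‖r ^ (n-1) * G r * r ^ (-(a*q))‖ ≤ b r := by
    rw [ae_restrict_iff' measurableSet_Ioi]
    exact ae_of_all _ fun r hr => ptbound0 hq hG0 hG1 hGz hr
  have hf0int : Integrable (fun r : ℝ => r ^ (n-1) * G r * r ^ (-(a*q)))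
      (volume.restrict (Ioi (0:ℝ))) := Integrable.mono' hbint hf0meas hf0bound
  constructor
  · rw [setIntegral_pos_iff_support_of_nonneg_ae ?pos hf0int]
    case pos =>
      rw [EventuallyLE, ae_restrict_iff' measurableSet_Ioi]
      apply ae_of_all
      intro r hr
      have hr0 : (0:ℝ) < r := hr
      exact mul_nonneg (mul_nonneg (Real.rpow_nonneg hr0.le _) (hG0 r))
        (Real.rpow_nonneg hr0.le _)
    have hsub : Ioo (0:ℝ) ρ ⊆
        (Function.support fun r : ℝ => r ^ (n-1) * G r * r ^ (-(a*q))) ∩ Ioi 0 := by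
      intro r hr
      refine ⟨?_, hr.1⟩
      have h1 : G r = 1 := hGρ r hr.1.le hr.2.le
      simp only [Function.mem_support, h1, mul_one]
      have : (0:ℝ) < r ^ (n-1) * r ^ (-(a*q)) :=
        mul_pos (Real.rpow_pos_of_pos hr.1 _) (Real.rpow_pos_of_pos hr.1 _)
      exact this.ne'
    exact lt_of_lt_of_le (by simp [Real.volume_Ioo, hρ]) (measure_mono hsub)
  · apply tendsto_integral_filter_of_dominated_convergence b
    · apply eventually_of_mem (self_mem_nhdsWithin)
      intro ε hε
      exact meas1d ha hGc (le_of_lt hε)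
    · apply eventually_of_mem (self_mem_nhdsWithin)
      intro ε hε
      rw [ae_restrict_iff' measurableSet_Ioi]
      exact ae_of_all _ fun r hr => ptbound hq hG0 hG1 hGz (le_of_lt hε) hr
    · exact hbint
    · rw [ae_restrict_iff' measurableSet_Ioi]
      apply ae_of_all
      intro r hr
      have hr0 : (0:ℝ) < r := hr
      have hra : (0:ℝ) < r ^ a := Real.rpow_pos_of_pos hr0 a
      have h1 : Tendsto (fun ε : ℝ => ε ^ a) (nhdsWithin 0 (Ioi 0)) (nhds 0) := by
        have := (Real.continuousAt_rpow_const 0 a (Or.inr ha.le)).tendsto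
        rw [Real.zero_rpow ha.ne'] at this
        exact this.mono_left nhdsWithin_le_nhds
      have h2 : Tendsto (fun ε : ℝ => ε ^ a + r ^ a) (nhdsWithin 0 (Ioi 0))
          (nhds (r ^ a)) := by
        have := h1.add (tendsto_const_nhds (x := r ^ a))
        rwa [zero_add] at this
      have h3 : Tendsto (fun ε : ℝ => (ε ^ a + r ^ a) ^ (-q)) (nhdsWithin 0 (Ioi 0))
          (nhds ((r ^ a) ^ (-q))) := by
        have hc := (Real.continuousAt_rpow_const (r ^ a) (-q) (Or.inl hra.ne')).tendsto
        exact hc.comp h2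
      have h4 : (r ^ a) ^ (-q) = r ^ (-(a*q)) := by
        rw [← Real.rpow_mul hr0.le]; ring_nf
      rw [h4] at h3
      exact (h3.const_mul _)

/-- substitution r = ε s for case (ii) -/
lemma subst_eq (hn : 3 ≤ n) (ha : 0 < a) (hq : 0 < q) {ε : ℝ} (hε : 0 < ε) :
    ∫ r in Ioi (0:ℝ), r ^ (n-1) * G r * (ε ^ a + r ^ a) ^ (-q)
      = ε ^ (n - a*q) * ∫ s in Ioi (0:ℝ), s ^ (n-1) * G (ε*s) * (1 + s ^ a) ^ (-q) := by
  set g : ℝ → ℝ := fun r => r ^ (n-1) * G r * (ε ^ a + r ^ a) ^ (-q) with hg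
  have h0 := MeasureTheory.integral_comp_mul_left_Ioi g 0 hε
  rw [mul_zero] at h0
  have h1 : ∫ r in Ioi (0:ℝ), g r = ε • ∫ s in Ioi (0:ℝ), g (ε*s) := by
    rw [h0, smul_smul, mul_inv_cancel₀ hε.ne', one_smul]
  rw [hg] at h1
  simp only at h1
  rw [h1]
  have h2 : ∀ s ∈ Ioi (0:ℝ), (ε*s) ^ (n-1) * G (ε*s) * (ε ^ a + (ε*s) ^ a) ^ (-q)
      = ε ^ (n-1-a*q) * (s ^ (n-1) * G (ε*s) * (1 + s ^ a) ^ (-q)) := by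
    intro s hs
    have hs0 : (0:ℝ) < s := hs
    have e1 : (ε*s) ^ (n-1) = ε ^ (n-1) * s ^ (n-1) := Real.mul_rpow hε.le hs0.le
    have e2 : (ε*s) ^ a = ε ^ a * s ^ a := Real.mul_rpow hε.le hs0.le
    have e3 : ε ^ a + (ε*s) ^ a = ε ^ a * (1 + s ^ a) := by rw [e2]; ring
    have hsa : (0:ℝ) < 1 + s ^ a := by
      have := Real.rpow_pos_of_pos hs0 a; linarith
    have e4 : (ε ^ a * (1 + s ^ a)) ^ (-q) = ε ^ (-(a*q)) * (1 + s ^ a) ^ (-q) := by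
      rw [Real.mul_rpow (Real.rpow_pos_of_pos hε a).le hsa.le, ← Real.rpow_mul hε.le]
      ring_nf
    have e5 : ε ^ (n-1) * ε ^ (-(a*q)) = ε ^ (n-1-a*q) := by
      rw [← Real.rpow_add hε]; ring_nf
    rw [e1, e3, e4, ← e5]
    ring
  have e6 : ε ^ (n - a*q) = ε ^ (1:ℝ) * ε ^ (n-1-a*q) := by
    rw [← Real.rpow_add hε]; ring_nf
  rw [setIntegral_congr_fun measurableSet_Ioi h2, MeasureTheory.integral_const_mul,
    smul_eq_mul, e6, Real.rpow_one, mul_assoc]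

lemma h_integrable (hn : 3 ≤ n) (ha : 0 < a) (hq : 0 < q) (haq : n < a*q) :
    IntegrableOn (fun s : ℝ => s ^ (n-1) * (1 + s ^ a) ^ (-q)) (Ioi (0:ℝ)) := by
  have hmeas : ∀ t : Set ℝ, t ⊆ Ioi 0 → AEStronglyMeasurable
      (fun s : ℝ => s ^ (n-1) * (1 + s ^ a) ^ (-q)) (volume.restrict t) := by
    intro t ht
    apply (ContinuousOn.aestronglyMeasurable ?_ measurableSet_Ioi).mono_measure
      (Measure.restrict_mono ht le_rfl)
    apply ContinuousOn.mul
    · exact continuousOn_id.rpow_const fun r hr => Or.inl (ne_of_gt hr)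
    · apply ContinuousOn.rpow_const
      · exact continuousOn_const.add (continuousOn_id.rpow_const
          fun r hr => Or.inl (ne_of_gt hr))
      · intro r hr
        left
        have := Real.rpow_pos_of_pos (show (0:ℝ) < r from hr) a
        positivity
  have part1 : IntegrableOn (fun s : ℝ => s ^ (n-1) * (1 + s ^ a) ^ (-q)) (Ioc (0:ℝ) 1) := by
    apply Integrable.mono' (g := fun s : ℝ => s ^ (n-1))
    · exact (intervalIntegrable_iff_integrableOn_Ioc_of_le zero_le_one).1
        (intervalIntegral.intervalIntegrable_rpow' (by linarith))
    · exact hmeas _ (Ioc_subset_Ioi_self)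
    · rw [ae_restrict_iff' measurableSet_Ioc]
      apply ae_of_all
      intro s hs
      have hs0 : (0:ℝ) < s := hs.1
      have hsa : (0:ℝ) < s ^ a := Real.rpow_pos_of_pos hs0 a
      have h1 : (1 + s ^ a) ^ (-q) ≤ 1 ^ (-q) := neg_rpow_le' hq.le one_pos (by linarith)
      rw [Real.one_rpow] at h1
      rw [Real.norm_eq_abs, abs_of_nonneg (mul_nonneg (Real.rpow_nonneg hs0.le _)
        (Real.rpow_nonneg (by linarith) _))]
      calc s ^ (n-1) * (1 + s ^ a) ^ (-q) ≤ s ^ (n-1) * 1 :=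
            mul_le_mul_of_nonneg_left h1 (Real.rpow_nonneg hs0.le _)
        _ = s ^ (n-1) := mul_one _
  have part2 : IntegrableOn (fun s : ℝ => s ^ (n-1) * (1 + s ^ a) ^ (-q)) (Ioi (1:ℝ)) := by
    apply Integrable.mono' (g := fun s : ℝ => s ^ (n-1-a*q))
    · exact integrableOn_Ioi_rpow_of_lt (by linarith) one_pos
    · exact hmeas _ (fun s hs => mem_Ioi.2 (lt_trans one_pos hs))
    · rw [ae_restrict_iff' measurableSet_Ioi]
      apply ae_of_all
      intro s hs
      have hs0 : (0:ℝ) < s := lt_trans one_pos hs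
      have hsa : (0:ℝ) < s ^ a := Real.rpow_pos_of_pos hs0 a
      have h1 : (1 + s ^ a) ^ (-q) ≤ (s ^ a) ^ (-q) := neg_rpow_le' hq.le hsa (by linarith)
      have h2 : (s ^ a) ^ (-q) = s ^ (-(a*q)) := by
        rw [← Real.rpow_mul hs0.le]; ring_nf
      rw [Real.norm_eq_abs, abs_of_nonneg (mul_nonneg (Real.rpow_nonneg hs0.le _)
        (Real.rpow_nonneg (by linarith) _))]
      calc s ^ (n-1) * (1 + s ^ a) ^ (-q) ≤ s ^ (n-1) * s ^ (-(a*q)) := by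
            rw [h2] at h1
            exact mul_le_mul_of_nonneg_left h1 (Real.rpow_nonneg hs0.le _)
        _ = s ^ (n-1-a*q) := by rw [← Real.rpow_add hs0]; ring_nf
  have := part1.union part2
  rwa [Ioc_union_Ioi_eq_Ioi zero_le_one] at this

lemma caseii (hn : 3 ≤ n) (ha : 0 < a) (hq : 0 < q) (hρ : 0 < ρ)
    (hGc : Continuous G) (hG0 : ∀ r, 0 ≤ G r) (hG1 : ∀ r, G r ≤ 1)
    (hGρ : ∀ r, 0 ≤ r → r ≤ ρ → G r = 1) (haq : n < a*q) :
    (0 < ∫ s in Ioi (0:ℝ), s ^ (n-1) * (1 + s ^ a) ^ (-q)) ∧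
    Tendsto (fun ε : ℝ => ∫ s in Ioi (0:ℝ), s ^ (n-1) * G (ε*s) * (1 + s ^ a) ^ (-q))
      (nhdsWithin 0 (Ioi 0))
      (nhds (∫ s in Ioi (0:ℝ), s ^ (n-1) * (1 + s ^ a) ^ (-q))) := by
  have hint := h_integrable hn ha hq haq
  constructor
  · rw [setIntegral_pos_iff_support_of_nonneg_ae ?pos hint]
    case pos =>
      rw [EventuallyLE, ae_restrict_iff' measurableSet_Ioi]
      apply ae_of_all
      intro s hs
      have hs0 : (0:ℝ) < s := hs
      have hsa : (0:ℝ) < s ^ a := Real.rpow_pos_of_pos hs0 a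
      exact mul_nonneg (Real.rpow_nonneg hs0.le _) (Real.rpow_nonneg (by linarith) _)
    have hsub : Ioo (0:ℝ) 1 ⊆
        (Function.support fun s : ℝ => s ^ (n-1) * (1 + s ^ a) ^ (-q)) ∩ Ioi 0 := by
      intro s hs
      refine ⟨?_, hs.1⟩
      have hsa : (0:ℝ) < s ^ a := Real.rpow_pos_of_pos hs.1 a
      have : (0:ℝ) < s ^ (n-1) * (1 + s ^ a) ^ (-q) :=
        mul_pos (Real.rpow_pos_of_pos hs.1 _) (Real.rpow_pos_of_pos (by linarith) _)
      exact this.ne'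
    exact lt_of_lt_of_le (by norm_num [Real.volume_Ioo]) (measure_mono hsub)
  · apply tendsto_integral_filter_of_dominated_convergence
      (fun s : ℝ => s ^ (n-1) * (1 + s ^ a) ^ (-q))
    · apply eventually_of_mem (self_mem_nhdsWithin)
      intro ε hε
      apply ContinuousOn.aestronglyMeasurable ?_ measurableSet_Ioi
      apply ContinuousOn.mul
      · apply ContinuousOn.mul
        · exact continuousOn_id.rpow_const fun r hr => Or.inl (ne_of_gt hr)
        · exact (hGc.comp (continuous_const.mul continuous_id)).continuousOn
      · apply ContinuousOn.rpow_const
        · exact continuousOn_const.add (continuousOn_id.rpow_const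
            fun r hr => Or.inl (ne_of_gt hr))
        · intro r hr
          left
          have := Real.rpow_pos_of_pos (show (0:ℝ) < r from hr) a
          positivity
    · apply eventually_of_mem (self_mem_nhdsWithin)
      intro ε hε
      rw [ae_restrict_iff' measurableSet_Ioi]
      apply ae_of_all
      intro s hs
      have hs0 : (0:ℝ) < s := hs
      have hsa : (0:ℝ) < s ^ a := Real.rpow_pos_of_pos hs0 a
      have hb : (0:ℝ) ≤ (1 + s ^ a) ^ (-q) := Real.rpow_nonneg (by linarith) _
      rw [Real.norm_eq_abs, abs_of_nonneg (mul_nonneg (mul_nonneg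
        (Real.rpow_nonneg hs0.le _) (hG0 _)) hb)]
      calc s ^ (n-1) * G (ε*s) * (1 + s ^ a) ^ (-q)
          ≤ s ^ (n-1) * 1 * (1 + s ^ a) ^ (-q) := by
            apply mul_le_mul_of_nonneg_right _ hb
            exact mul_le_mul_of_nonneg_left (hG1 _) (Real.rpow_nonneg hs0.le _)
        _ = s ^ (n-1) * (1 + s ^ a) ^ (-q) := by rw [mul_one]
    · exact hint
    · rw [ae_restrict_iff' measurableSet_Ioi]
      apply ae_of_all
      intro s hs
      have hs0 : (0:ℝ) < s := hs
      have hmem : Ioo (0:ℝ) (ρ/s) ∈ nhdsWithin (0:ℝ) (Ioi 0) :=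
        Ioo_mem_nhdsGT_of_mem ⟨le_refl _, by positivity⟩
      apply Tendsto.congr' ?_ (tendsto_const_nhds)
      apply eventuallyEq_of_mem hmem
      intro ε hε
      have h1 : G (ε*s) = 1 := by
        apply hGρ
        · exact (mul_nonneg hε.1.le hs0.le)
        · have := hε.2
          calc ε * s ≤ (ρ/s) * s := by nlinarith [hε.2]
            _ = ρ := by field_simp
      simp only [h1, mul_one]

lemma casei (hn : 3 ≤ n) (ha : 0 < a) (hρ : 0 < ρ) (hρ2 : ρ < 1/2)
    (hGc : Continuous G) (hG0 : ∀ r, 0 ≤ G r) (hG1 : ∀ r, G r ≤ 1)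
    (hGρ : ∀ r, 0 ≤ r → r ≤ ρ → G r = 1) (hGz : ∀ r, 2*ρ ≤ r → G r = 0)
    (haq : a*q = n) :
    ∃ c : ℝ, ∀ ε : ℝ, 0 < ε → ε < ρ →
      |(∫ r in Ioi (0:ℝ), r ^ (n-1) * G r * (ε ^ a + r ^ a) ^ (-q)) - Real.log (1/ε)| ≤ c := by
  have hq : 0 < q := by
    by_contra h
    push_neg at h
    nlinarith
  refine ⟨|Real.log ρ| + 1/n + 1 + max q 1 / a, ?_⟩
  intro ε hε hερ
  set f : ℝ → ℝ := fun r => r ^ (n-1) * G r * (ε ^ a + r ^ a) ^ (-q) with hf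
  have hεonly : ∀ r : ℝ, 0 < r → (ε ^ a + r ^ a) ^ (-q) ≤ ε ^ (-n) := by
    intro r hr
    have h1 : (0:ℝ) < ε ^ a := Real.rpow_pos_of_pos hε a
    have h2 : (0:ℝ) ≤ r ^ a := Real.rpow_nonneg hr.le a
    calc (ε ^ a + r ^ a) ^ (-q) ≤ (ε ^ a) ^ (-q) := neg_rpow_le' hq.le h1 (by linarith)
      _ = ε ^ (-n) := by rw [← Real.rpow_mul hε.le, ← haq]; ring_nf
  have hfnonneg : ∀ r : ℝ, 0 < r → 0 ≤ f r := by
    intro r hr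
    have h1 : (0:ℝ) < ε ^ a := Real.rpow_pos_of_pos hε a
    have h2 : (0:ℝ) ≤ r ^ a := Real.rpow_nonneg hr.le a
    exact mul_nonneg (mul_nonneg (Real.rpow_nonneg hr.le _) (hG0 r))
      (Real.rpow_nonneg (by linarith) _)
  -- integrability of f on Ioi 0
  have hbint : Integrable (indicator (Ioc (0:ℝ) (2*ρ)) (fun r : ℝ => r ^ (n-1) * ε ^ (-n)))
      (volume.restrict (Ioi (0:ℝ))) := by
    apply Integrable.restrict
    apply IntegrableOn.integrable_indicator ?_ measurableSet_Ioc
    apply Integrable.mul_const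
    exact (intervalIntegrable_iff_integrableOn_Ioc_of_le (by linarith)).1
      (intervalIntegral.intervalIntegrable_rpow' (by linarith))
  have hfint : IntegrableOn f (Ioi (0:ℝ)) := by
    apply Integrable.mono' hbint (meas1d ha hGc hε.le)
    rw [ae_restrict_iff' measurableSet_Ioi]
    apply ae_of_all
    intro r hr
    have hr0 : (0:ℝ) < r := hr
    rw [Real.norm_eq_abs, abs_of_nonneg (hfnonneg r hr0)]
    rcases le_or_gt r (2*ρ) with h | h
    · rw [indicator_of_mem (by exact ⟨hr0, h⟩)]
      calc f r ≤ r ^ (n-1) * 1 * (ε ^ a + r ^ a) ^ (-q) := by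
            apply mul_le_mul_of_nonneg_right _ (Real.rpow_nonneg ?_ _)
            · exact mul_le_mul_of_nonneg_left (hG1 r) (Real.rpow_nonneg hr0.le _)
            · have h1 : (0:ℝ) < ε ^ a := Real.rpow_pos_of_pos hε a
              have h2 : (0:ℝ) ≤ r ^ a := Real.rpow_nonneg hr0.le a
              linarith
        _ ≤ r ^ (n-1) * ε ^ (-n) := by
            rw [mul_one]
            exact mul_le_mul_of_nonneg_left (hεonly r hr0) (Real.rpow_nonneg hr0.le _)
    · rw [indicator_of_notMem (by simp [not_and_or]; intro _; linarith)]
      rw [hf]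
      simp only [hGz r h.le, mul_zero, zero_mul, le_refl]
  -- splitting of the integral
  have hsplit1 : Ioi (0:ℝ) = Ioc 0 ρ ∪ Ioi ρ := (Ioc_union_Ioi_eq_Ioi hρ.le).symm
  have hsplit2 : Ioc (0:ℝ) ρ = Ioc 0 ε ∪ Ioc ε ρ := (Ioc_union_Ioc_eq_Ioc hε.le hερ.le).symm
  have hd1 : Disjoint (Ioc (0:ℝ) ρ) (Ioi ρ) := by
    apply disjoint_left.2
    intro x hx hx'
    exact absurd hx.2 (not_le.2 hx')
  have hd2 : Disjoint (Ioc (0:ℝ) ε) (Ioc ε ρ) := by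
    apply disjoint_left.2
    intro x hx hx'
    exact absurd hx.2 (not_le.2 hx'.1)
  have hI1 : IntegrableOn f (Ioc (0:ℝ) ε) := hfint.mono_set (fun x hx => hx.1)
  have hI2 : IntegrableOn f (Ioc ε ρ) := hfint.mono_set (fun x hx => lt_trans hε hx.1)
  have hI3 : IntegrableOn f (Ioi ρ) := hfint.mono_set (fun x hx => lt_trans hρ hx)
  have hIρ : IntegrableOn f (Ioc (0:ℝ) ρ) := hfint.mono_set (fun x hx => hx.1)
  have heq : ∫ r in Ioi (0:ℝ), f r
      = (∫ r in Ioc (0:ℝ) ε, f r) + (∫ r in Ioc ε ρ, f r) + (∫ r in Ioi ρ, f r) := by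
    rw [hsplit1, setIntegral_union hd1 measurableSet_Ioi hIρ hI3]
    rw [hsplit2, setIntegral_union hd2 measurableSet_Ioc hI1 hI2]
  -- general pointwise upper bound f r ≤ r⁻¹
  have hfler : ∀ r : ℝ, 0 < r → f r ≤ r⁻¹ := by
    intro r hr0
    have hra : (0:ℝ) < r ^ a := Real.rpow_pos_of_pos hr0 a
    have hXa : (0:ℝ) < ε ^ a + r ^ a := by
      have := Real.rpow_pos_of_pos hε a; linarith
    have h1 : (ε ^ a + r ^ a) ^ (-q) ≤ (r ^ a) ^ (-q) :=
      neg_rpow_le' hq.le hra (by linarith [Real.rpow_pos_of_pos hε a])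
    have h2 : (r ^ a) ^ (-q) = r ^ (-n) := by
      rw [← Real.rpow_mul hr0.le, show a * (-q) = -n by rw [← haq]; ring]
    calc f r ≤ r ^ (n-1) * 1 * (ε ^ a + r ^ a) ^ (-q) := by
          apply mul_le_mul_of_nonneg_right _ (Real.rpow_nonneg hXa.le _)
          exact mul_le_mul_of_nonneg_left (hG1 r) (Real.rpow_nonneg hr0.le _)
      _ ≤ r ^ (n-1) * r ^ (-n) := by
          rw [mul_one, ← h2]
          exact mul_le_mul_of_nonneg_left h1 (Real.rpow_nonneg hr0.le _)
      _ = r⁻¹ := by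
          rw [← Real.rpow_add hr0, show n - 1 + -n = -1 by ring, Real.rpow_neg_one]
  -- T1 bounds
  have hT1low : 0 ≤ ∫ r in Ioc (0:ℝ) ε, f r :=
    setIntegral_nonneg measurableSet_Ioc fun r hr => hfnonneg r hr.1
  have hrint : ∫ r in Ioc (0:ℝ) ε, r ^ (n-1) = ε ^ n / n := by
    rw [← intervalIntegral.integral_of_le hε.le,
      integral_rpow (Or.inl (by linarith : (-1:ℝ) < n - 1))]
    rw [show n-1+1 = n by ring, Real.zero_rpow (by linarith : n ≠ 0)]
    ring
  have hT1up : (∫ r in Ioc (0:ℝ) ε, f r) ≤ 1/n := by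
    have hint : IntegrableOn (fun r : ℝ => r ^ (n-1) * ε ^ (-n)) (Ioc (0:ℝ) ε) := by
      apply Integrable.mul_const
      exact (intervalIntegrable_iff_integrableOn_Ioc_of_le hε.le).1
        (intervalIntegral.intervalIntegrable_rpow' (by linarith))
    calc (∫ r in Ioc (0:ℝ) ε, f r) ≤ ∫ r in Ioc (0:ℝ) ε, r ^ (n-1) * ε ^ (-n) := by
          apply setIntegral_mono_on hI1 hint measurableSet_Ioc
          intro r hr
          have hr0 : (0:ℝ) < r := hr.1
          calc f r ≤ r ^ (n-1) * 1 * (ε ^ a + r ^ a) ^ (-q) := by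
                apply mul_le_mul_of_nonneg_right _ (Real.rpow_nonneg ?_ _)
                · exact mul_le_mul_of_nonneg_left (hG1 r) (Real.rpow_nonneg hr0.le _)
                · have h1 : (0:ℝ) < ε ^ a := Real.rpow_pos_of_pos hε a
                  have h2 : (0:ℝ) ≤ r ^ a := Real.rpow_nonneg hr0.le a
                  linarith
            _ ≤ r ^ (n-1) * ε ^ (-n) := by
                rw [mul_one]
                exact mul_le_mul_of_nonneg_left (hεonly r hr0) (Real.rpow_nonneg hr0.le _)
      _ = (∫ r in Ioc (0:ℝ) ε, r ^ (n-1)) * ε ^ (-n) := by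
          rw [MeasureTheory.integral_mul_const]
      _ = ε ^ n / n * ε ^ (-n) := by rw [hrint]
      _ = 1/n := by
          rw [div_mul_eq_mul_div, mul_comm, ← Real.rpow_add hε,
            show -n + n = 0 by ring, Real.rpow_zero]
  -- T2 bounds
  have hL : ∫ r in Ioc ε ρ, (r:ℝ)⁻¹ = Real.log ρ - Real.log ε := by
    rw [← intervalIntegral.integral_of_le hερ.le, integral_inv_of_pos hε hρ,
      Real.log_div hρ.ne' hε.ne']
  have hIinv : IntegrableOn (fun r : ℝ => r⁻¹) (Ioc ε ρ) := by
    apply IntegrableOn.mono_set _ Ioc_subset_Icc_self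
    apply ContinuousOn.integrableOn_Icc
    exact continuousOn_id.inv₀ fun x hx => ne_of_gt (lt_of_lt_of_le hε hx.1)
  have hT2up : (∫ r in Ioc ε ρ, f r) ≤ Real.log ρ - Real.log ε := by
    rw [← hL]
    apply setIntegral_mono_on hI2 hIinv measurableSet_Ioc
    intro r hr
    exact hfler r (lt_trans hε hr.1)
  have hint3 : IntegrableOn (fun r : ℝ => r ^ (-1-a)) (Ioc ε ρ) :=
    (integrableOn_Ioi_rpow_of_lt (by linarith) hε).mono_set Ioc_subset_Ioi_self
  have hmaxnn : (0:ℝ) ≤ max q 1 := le_trans zero_le_one (le_max_right q 1)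
  have hkey2 : ∀ r ∈ Ioc ε ρ, r⁻¹ - max q 1 * ε ^ a * r ^ (-1-a) ≤ f r := by
    intro r hr
    have hr0 : (0:ℝ) < r := lt_trans hε hr.1
    have hra : (0:ℝ) < r ^ a := Real.rpow_pos_of_pos hr0 a
    have hεa : (0:ℝ) < ε ^ a := Real.rpow_pos_of_pos hε a
    set X := ε ^ a + r ^ a with hX
    have hXpos : (0:ℝ) < X := by rw [hX]; linarith
    set t := r ^ a / X with ht
    have ht0 : (0:ℝ) < t := div_pos hra hXpos
    have ht1 : t ≤ 1 := (div_le_one hXpos).2 (by rw [hX]; linarith)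
    have hfr : f r = r⁻¹ * t ^ q := by
      have hG1r : G r = 1 := hGρ r hr0.le hr.2
      have h1 : t ^ q = r ^ n / X ^ q := by
        rw [ht, Real.div_rpow hra.le hXpos.le, ← Real.rpow_mul hr0.le, haq]
      have h2 : r ^ (n-1) = r⁻¹ * r ^ n := by
        rw [← Real.rpow_neg_one r, ← Real.rpow_add hr0, show (-1) + n = n - 1 by ring]
      have h3 : X ^ (-q) = (X ^ q)⁻¹ := Real.rpow_neg hXpos.le q
      rw [hf]
      simp only
      rw [hG1r, mul_one, ← hX, h2, h3, h1, div_eq_mul_inv]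
      ring
    have hone : 1 - t ^ q ≤ max q 1 * (1 - t) := one_sub_rpow_le' hq ht0 ht1
    have h1t : 1 - t = ε ^ a / X := by
      rw [ht]
      field_simp
      rw [hX]
      ring
    have h1t' : ε ^ a / X ≤ ε ^ a * r ^ (-a) := by
      rw [Real.rpow_neg hr0.le, ← div_eq_mul_inv]
      apply div_le_div_of_nonneg_left hεa.le hra
      rw [hX]; linarith
    have hsub : r⁻¹ - f r ≤ max q 1 * ε ^ a * r ^ (-1-a) := by
      calc r⁻¹ - f r = r⁻¹ * (1 - t ^ q) := by rw [hfr]; ring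
        _ ≤ r⁻¹ * (max q 1 * (1 - t)) :=
            mul_le_mul_of_nonneg_left hone (inv_nonneg.2 hr0.le)
        _ ≤ r⁻¹ * (max q 1 * (ε ^ a * r ^ (-a))) := by
            apply mul_le_mul_of_nonneg_left _ (inv_nonneg.2 hr0.le)
            apply mul_le_mul_of_nonneg_left _ hmaxnn
            rw [h1t]
            exact h1t'
        _ = max q 1 * ε ^ a * (r ^ (-1:ℝ) * r ^ (-a)) := by
            rw [Real.rpow_neg_one]
            ring
        _ = max q 1 * ε ^ a * r ^ (-1-a) := by
            rw [← Real.rpow_add hr0, show (-1:ℝ) + -a = -1 - a by ring]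
    linarith
  have hT2low : Real.log ρ - Real.log ε - max q 1 / a ≤ ∫ r in Ioc ε ρ, f r := by
    have e2 : (∫ r in Ioc ε ρ, r ^ (-1-a)) ≤ ε ^ (-a) / a := by
      have hIoi : IntegrableOn (fun r : ℝ => r ^ (-1-a)) (Ioi ε) :=
        integrableOn_Ioi_rpow_of_lt (by linarith) hε
      calc (∫ r in Ioc ε ρ, r ^ (-1-a)) ≤ ∫ r in Ioi ε, r ^ (-1-a) := by
            apply setIntegral_mono_set hIoi ?_ (HasSubset.Subset.eventuallyLE Ioc_subset_Ioi_self)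
            rw [EventuallyLE, ae_restrict_iff' measurableSet_Ioi]
            apply ae_of_all
            intro r hr
            exact Real.rpow_nonneg (le_of_lt (lt_trans hε hr)) _
        _ = -ε ^ (-1-a+1) / (-1-a+1) := integral_Ioi_rpow_of_lt (by linarith) hε
        _ = ε ^ (-a) / a := by
            rw [show (-1-a+1 : ℝ) = -a by ring, neg_div_neg_eq]
    have hlhs_int : IntegrableOn (fun r : ℝ => r⁻¹ - max q 1 * ε ^ a * r ^ (-1-a)) (Ioc ε ρ) :=
      hIinv.sub (hint3.const_mul _)
    have step : (∫ r in Ioc ε ρ, (r⁻¹ - max q 1 * ε ^ a * r ^ (-1-a)))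
        ≤ ∫ r in Ioc ε ρ, f r := by
      apply setIntegral_mono_on hlhs_int hI2 measurableSet_Ioc hkey2
    have expand : (∫ r in Ioc ε ρ, (r⁻¹ - max q 1 * ε ^ a * r ^ (-1-a)))
        = (Real.log ρ - Real.log ε) - max q 1 * ε ^ a * ∫ r in Ioc ε ρ, r ^ (-1-a) := by
      rw [integral_sub hIinv (hint3.const_mul _), hL, MeasureTheory.integral_const_mul]
    have final : max q 1 * ε ^ a * (∫ r in Ioc ε ρ, r ^ (-1-a)) ≤ max q 1 / a := by
      calc max q 1 * ε ^ a * (∫ r in Ioc ε ρ, r ^ (-1-a))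
          ≤ max q 1 * ε ^ a * (ε ^ (-a) / a) := by
            apply mul_le_mul_of_nonneg_left e2
            exact mul_nonneg hmaxnn (Real.rpow_nonneg hε.le _)
        _ = max q 1 * (ε ^ a * ε ^ (-a)) / a := by ring
        _ = max q 1 / a := by
            rw [← Real.rpow_add hε, show a + -a = 0 by ring, Real.rpow_zero, mul_one]
    linarith
  -- T3 bounds
  have hT3low : 0 ≤ ∫ r in Ioi ρ, f r :=
    setIntegral_nonneg measurableSet_Ioi fun r hr => hfnonneg r (lt_trans hρ hr)
  have hT3up : (∫ r in Ioi ρ, f r) ≤ 1 := by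
    have hindint : IntegrableOn (indicator (Ioc ρ (2*ρ)) (fun _ : ℝ => ρ⁻¹)) (Ioi ρ) := by
      apply Integrable.integrableOn
      apply IntegrableOn.integrable_indicator _ measurableSet_Ioc
      exact integrableOn_const measure_Ioc_lt_top.ne
    calc (∫ r in Ioi ρ, f r) ≤ ∫ r in Ioi ρ, indicator (Ioc ρ (2*ρ)) (fun _ : ℝ => ρ⁻¹) r := by
          apply setIntegral_mono_on hI3 hindint measurableSet_Ioi
          intro r hr
          have hr0 : (0:ℝ) < r := lt_trans hρ hr
          rcases le_or_gt r (2*ρ) with h | h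
          · rw [indicator_of_mem (by exact ⟨hr, h⟩)]
            calc f r ≤ r⁻¹ := hfler r hr0
              _ ≤ ρ⁻¹ := by
                  apply inv_anti₀ hρ (le_of_lt hr)
          · rw [indicator_of_notMem (by simp [not_and_or]; intro _; linarith)]
            rw [hf]
            simp only [hGz r h.le, mul_zero, zero_mul, le_refl]
      _ = ∫ r in Ioc ρ (2*ρ), (ρ:ℝ)⁻¹ := by
          rw [integral_indicator measurableSet_Ioc, Measure.restrict_restrict measurableSet_Ioc,
            inter_eq_self_of_subset_left Ioc_subset_Ioi_self]
      _ = (volume (Ioc ρ (2*ρ))).toReal * ρ⁻¹ := by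
          rw [setIntegral_const, smul_eq_mul, measureReal_def]
      _ = 1 := by
          rw [Real.volume_Ioc, ENNReal.toReal_ofReal (by linarith)]
          field_simp
          ring
  -- conclusion
  rw [one_div, Real.log_inv]
  have habs1 := le_abs_self (Real.log ρ)
  have habs2 := neg_abs_le (Real.log ρ)
  have hmaxa : 0 ≤ max q 1 / a := div_nonneg hmaxnn ha.le
  have hn0 : (0:ℝ) < n := by linarith
  have h1n : (0:ℝ) ≤ 1/n := by positivity
  rw [heq]
  rw [abs_le]
  constructor
  · linarith
  · linarith


end OneD

open Asymptotics in
/-- asymptotics of `∫_Ω U_{ε,α}^p` as `ε → 0⁺`. -/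
theorem statement12 (N : ℕ) (hN : 3 ≤ N) (α : ℝ) (hα : -2 < α)
    (ρ : ℝ) (hρ : ρ ∈ Set.Ioo (0 : ℝ) (1 / 2))
    (φ : Euc N → ℝ) (hφsmooth : ContDiff ℝ (⊤ : ℕ∞) φ) (hφcpt : HasCompactSupport φ)
    (hφrad : IsRadial φ) (hφ01 : ∀ x, φ x ∈ Set.Icc (0 : ℝ) 1)
    (hφ1 : ∀ x : Euc N, ‖x‖ ≤ ρ → φ x = 1) (hφ0 : ∀ x : Euc N, 2 * ρ ≤ ‖x‖ → φ x = 0)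
    (p : ℝ) (hp1 : 1 ≤ p) (hp2 : p < 2 * (N : ℝ) / ((N : ℝ) - 2)) :
    (p = (N : ℝ) / ((N : ℝ) - 2) →
      (fun ε : ℝ =>
          (∫ x in Omega N α, (φ x * bubbleFn N α ε x) ^ p) -
            Cconst N α ^ p * omegaN N * ε ^ ((N : ℝ) / 2) * Real.log (1 / ε))
        =O[nhdsWithin (0 : ℝ) (Set.Ioi 0)] fun ε : ℝ => ε ^ ((N : ℝ) / 2)) ∧
    ((N : ℝ) / ((N : ℝ) - 2) < p →
      ∃ C₃ > (0 : ℝ),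
        (fun ε : ℝ =>
            (∫ x in Omega N α, (φ x * bubbleFn N α ε x) ^ p) -
              C₃ * ε ^ ((N : ℝ) - p * ((N : ℝ) - 2) / 2))
          =o[nhdsWithin (0 : ℝ) (Set.Ioi 0)]
            fun ε : ℝ => ε ^ ((N : ℝ) - p * ((N : ℝ) - 2) / 2)) ∧
    (p < (N : ℝ) / ((N : ℝ) - 2) →
      ∃ C₄ > (0 : ℝ),
        (fun ε : ℝ =>
            (∫ x in Omega N α, (φ x * bubbleFn N α ε x) ^ p) -
              C₄ * ε ^ (p * ((N : ℝ) - 2) / 2))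
          =o[nhdsWithin (0 : ℝ) (Set.Ioi 0)]
            fun ε : ℝ => ε ^ (p * ((N : ℝ) - 2) / 2)) := by

  have hn : (3:ℝ) ≤ (N:ℝ) := by exact_mod_cast hN
  have ha : (0:ℝ) < α + 2 := by linarith
  have hm : (0:ℝ) < (N:ℝ) - 2 := by linarith
  have hp0 : (0:ℝ) < p := by linarith
  have hω : 0 < omegaN N := omegaN_pos hN
  have hK : 0 < Cconst N α := Cconst_pos hN hα
  have hKp : 0 < Cconst N α ^ p := Real.rpow_pos_of_pos hK p
  set v : Euc N := EuclideanSpace.single (⟨0, by omega⟩ : Fin N) (1:ℝ) with hv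
  have hnorm : ∀ r : ℝ, ‖r • v‖ = |r| := by
    intro r
    rw [norm_smul, hv, EuclideanSpace.norm_single, norm_one, mul_one, Real.norm_eq_abs]
  have hnv : ∀ r : ℝ, 0 ≤ r → ‖r • v‖ = r := by
    intro r hr
    rw [hnorm, abs_of_nonneg hr]
  set G : ℝ → ℝ := fun r => (φ (r • v)) ^ p with hG
  have hGc : Continuous G := by
    apply Continuous.rpow_const
    · exact hφsmooth.continuous.comp (continuous_id.smul continuous_const)
    · exact fun r => Or.inr hp0.le
  have hG0 : ∀ r, 0 ≤ G r := fun r => Real.rpow_nonneg (hφ01 _).1 _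
  have hG1 : ∀ r, G r ≤ 1 := fun r =>
    Real.rpow_le_one (hφ01 _).1 (hφ01 _).2 hp0.le
  have hGρ : ∀ r, 0 ≤ r → r ≤ ρ → G r = 1 := by
    intro r hr0 hrρ
    have h1 : φ (r • v) = 1 := hφ1 _ (by rw [hnv r hr0]; exact hrρ)
    rw [hG]
    simp only [h1, Real.one_rpow]
  have hGz : ∀ r, 2*ρ ≤ r → G r = 0 := by
    intro r hr
    have hr0 : (0:ℝ) ≤ r := le_trans (by linarith [hρ.1]) hr
    have h1 : φ (r • v) = 0 := hφ0 _ (by rw [hnv r hr0]; exact hr)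
    rw [hG]
    simp only [h1, Real.zero_rpow hp0.ne']
  set q := p * ((N:ℝ) - 2) / (α + 2) with hqdef
  have hq : 0 < q := div_pos (mul_pos hp0 hm) ha
  have haqn : (α+2) * q = p * ((N:ℝ) - 2) := by
    rw [hqdef]
    field_simp
  set Jf : ℝ → ℝ := fun ε => ∫ r in Ioi (0:ℝ), r ^ ((N:ℝ)-1) * G r *
    (ε ^ (α+2) + r ^ (α+2)) ^ (-q) with hJf
  have hred : ∀ ε : ℝ, 0 < ε →
      (∫ x in Omega N α, (φ x * bubbleFn N α ε x) ^ p)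
        = omegaN N * Cconst N α ^ p * ε ^ (p * ((N:ℝ)-2)/2) * Jf ε := by
    intro ε hε
    rw [reduce' N hN α hα ρ hρ φ hφrad hφ01 hφ0 p hp1 v hnv ε hε, hJf]
  refine ⟨?_, ?_, ?_⟩
  · -- case (i): p = N/(N-2)
    intro hpeq
    have haqq : (α+2) * q = (N:ℝ) := by
      rw [haqn, hpeq]
      field_simp
    obtain ⟨c, hc⟩ := casei (G := G) (a := α+2) (q := q) hn ha hρ.1 hρ.2
      hGc hG0 hG1 hGρ hGz haqq
    have hβeq : p * ((N:ℝ)-2)/2 = (N:ℝ)/2 := by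
      rw [hpeq]
      field_simp
    rw [Asymptotics.isBigO_iff]
    refine ⟨omegaN N * Cconst N α ^ p * c, ?_⟩
    filter_upwards [Ioo_mem_nhdsGT_of_mem (Set.mem_Ico.2 ⟨le_refl (0:ℝ), hρ.1⟩)] with ε hε
    have hε0 : (0:ℝ) < ε := hε.1
    have hεN : (0:ℝ) < ε ^ ((N:ℝ)/2) := Real.rpow_pos_of_pos hε0 _
    have hIε := hred ε hε0
    rw [hβeq] at hIε
    calc ‖(∫ x in Omega N α, (φ x * bubbleFn N α ε x) ^ p) -
            Cconst N α ^ p * omegaN N * ε ^ ((N:ℝ)/2) * Real.log (1/ε)‖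
        = (omegaN N * Cconst N α ^ p * ε ^ ((N:ℝ)/2)) * |Jf ε - Real.log (1/ε)| := by
          rw [hIε, Real.norm_eq_abs,
            show omegaN N * Cconst N α ^ p * ε ^ ((N:ℝ)/2) * Jf ε -
              Cconst N α ^ p * omegaN N * ε ^ ((N:ℝ)/2) * Real.log (1/ε)
              = (omegaN N * Cconst N α ^ p * ε ^ ((N:ℝ)/2)) * (Jf ε - Real.log (1/ε)) by ring,
            abs_mul, abs_of_pos (by positivity)]
      _ ≤ (omegaN N * Cconst N α ^ p * ε ^ ((N:ℝ)/2)) * c := by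
          apply mul_le_mul_of_nonneg_left _ (by positivity)
          exact hc ε hε0 hε.2
      _ = omegaN N * Cconst N α ^ p * c * ‖ε ^ ((N:ℝ)/2)‖ := by
          rw [Real.norm_eq_abs, abs_of_pos hεN]
          ring
  · -- case (ii): N/(N-2) < p
    intro hpgt
    have haq : (N:ℝ) < (α+2) * q := by
      rw [haqn]
      exact (div_lt_iff₀ hm).1 hpgt
    obtain ⟨hMpos, htend⟩ := caseii (G := G) (a := α+2) (q := q) hn ha hq hρ.1
      hGc hG0 hG1 hGρ haq
    set M := ∫ s in Ioi (0:ℝ), s ^ ((N:ℝ)-1) * (1 + s ^ (α+2)) ^ (-q) with hM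
    refine ⟨omegaN N * Cconst N α ^ p * M, by positivity, ?_⟩
    have hgf : ∀ᶠ ε : ℝ in nhdsWithin 0 (Ioi 0),
        ε ^ ((N:ℝ) - p * ((N:ℝ)-2)/2) = 0 →
        (∫ x in Omega N α, (φ x * bubbleFn N α ε x) ^ p) -
          omegaN N * Cconst N α ^ p * M * ε ^ ((N:ℝ) - p * ((N:ℝ)-2)/2) = 0 := by
      filter_upwards [self_mem_nhdsWithin] with ε hε h0
      exact absurd h0 (Real.rpow_pos_of_pos hε _).ne'
    rw [Asymptotics.isLittleO_iff_tendsto' hgf]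
    have hlim : Tendsto (fun ε : ℝ => omegaN N * Cconst N α ^ p *
        ((∫ s in Ioi (0:ℝ), s ^ ((N:ℝ)-1) * G (ε*s) * (1 + s ^ (α+2)) ^ (-q)) - M))
        (nhdsWithin 0 (Ioi 0)) (nhds 0) := by
      have := (htend.sub (tendsto_const_nhds (x := M))).const_mul
        (omegaN N * Cconst N α ^ p)
      rwa [sub_self, mul_zero] at this
    apply Tendsto.congr' _ hlim
    filter_upwards [self_mem_nhdsWithin] with ε hε
    have hε0 : (0:ℝ) < ε := hε
    have hJeq := subst_eq (G := G) (n := (N:ℝ)) (a := α+2) (q := q) hn ha hq hε0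
    have hIε := hred ε hε0
    rw [hJf] at hIε
    simp only at hIε
    rw [hJeq] at hIε
    have hexp : ε ^ (p * ((N:ℝ)-2)/2) * ε ^ ((N:ℝ) - (α+2)*q)
        = ε ^ ((N:ℝ) - p * ((N:ℝ)-2)/2) := by
      rw [← Real.rpow_add hε0]
      congr 1
      rw [haqn]
      ring
    rw [eq_div_iff (Real.rpow_pos_of_pos hε0 ((N:ℝ) - p * ((N:ℝ)-2)/2)).ne']
    rw [hIε, ← hexp]
    ring
  · -- case (iii): p < N/(N-2)
    intro hplt
    have haq : (α+2) * q < (N:ℝ) := by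
      rw [haqn]
      exact (lt_div_iff₀ hm).1 hplt
    obtain ⟨hLpos, htend⟩ := caseiii (G := G) (n := (N:ℝ)) (a := α+2) (q := q) ha hq hρ.1
      hGc hG0 hG1 hGρ hGz haq
    set L := ∫ r in Ioi (0:ℝ), r ^ ((N:ℝ)-1) * G r * r ^ (-((α+2)*q)) with hL
    refine ⟨omegaN N * Cconst N α ^ p * L, by positivity, ?_⟩
    have hgf : ∀ᶠ ε : ℝ in nhdsWithin 0 (Ioi 0),
        ε ^ (p * ((N:ℝ)-2)/2) = 0 →
        (∫ x in Omega N α, (φ x * bubbleFn N α ε x) ^ p) -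
          omegaN N * Cconst N α ^ p * L * ε ^ (p * ((N:ℝ)-2)/2) = 0 := by
      filter_upwards [self_mem_nhdsWithin] with ε hε h0
      exact absurd h0 (Real.rpow_pos_of_pos hε _).ne'
    rw [Asymptotics.isLittleO_iff_tendsto' hgf]
    have hlim : Tendsto (fun ε : ℝ => omegaN N * Cconst N α ^ p * (Jf ε - L))
        (nhdsWithin 0 (Ioi 0)) (nhds 0) := by
      have h1 : Tendsto Jf (nhdsWithin 0 (Ioi 0)) (nhds L) := htend
      have := (h1.sub (tendsto_const_nhds (x := L))).const_mul
        (omegaN N * Cconst N α ^ p)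
      rwa [sub_self, mul_zero] at this
    apply Tendsto.congr' _ hlim
    filter_upwards [self_mem_nhdsWithin] with ε hε
    have hε0 : (0:ℝ) < ε := hε
    rw [eq_div_iff (Real.rpow_pos_of_pos hε0 (p * ((N:ℝ)-2)/2)).ne']
    rw [hred ε hε0]
    ring
end

section
/- Let N ≥ 5 be an integer and α > −2. Then there exist constants C₀ > 0, M > 0 and ε₀ > 0 such that for all ε ∈ (0, ε₀): |∫_Ω U_{ε,α}² log(U_{ε,α}²) − C₀·ε²·log(1/ε)| ≤ M·ε², i.e. ∫_Ω U_{ε,α}² log(U_{ε,α}²) = C₀ ε² log(1/ε) + O(ε²) as ε → 0⁺. -/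
set_option maxHeartbeats 2000000


open MeasureTheory Metric Set Filter

namespace S13aux

open MeasureTheory Set

noncomputable section
/-- `G(s) = s² log s²`. -/
def Gfun (s : ℝ) : ℝ := s ^ 2 * Real.log (s ^ 2)
/-- The rescaled profile `U(s) = K (1+s^p)^{-m}`. -/
def Ufun (K p m s : ℝ) : ℝ := K * (1 + s ^ p) ^ (-m)
/-- The bubble profile `W(r) = K ε^t (ε^p + r^p)^{-m}`. -/
def Wfun (K p m t ε r : ℝ) : ℝ := K * ε ^ t * (ε ^ p + r ^ p) ^ (-m)
end

variable {K p m t ε ρ q B u a b s r : ℝ} {n : ℕ} {v : ℝ → ℝ}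

lemma Gfun_zero : Gfun 0 = 0 := by simp [Gfun]

lemma log_le_rpow {x : ℝ} (hx : 0 < x) : Real.log x ≤ 8 * x ^ (8⁻¹ : ℝ) := by
  have h1 : Real.log (x ^ (8⁻¹ : ℝ)) = 8⁻¹ * Real.log x := Real.log_rpow hx _
  have h2 : Real.log (x ^ (8⁻¹ : ℝ)) ≤ x ^ (8⁻¹ : ℝ) :=
    (Real.log_le_sub_one_of_pos (Real.rpow_pos_of_pos hx _)).trans (by linarith)
  linarith

lemma Gfun_abs_le (hB : 1 ≤ B) (hu0 : 0 ≤ u) (huB : u ≤ B) :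
    |Gfun u| ≤ Real.log (B ^ 2) * u ^ 2 + 8 * B ^ ((4:ℝ)⁻¹) * u ^ ((7:ℝ)/4) := by
  have hB0 : (0:ℝ) < B := lt_of_lt_of_le one_pos hB
  rcases eq_or_lt_of_le hu0 with h | hu
  · rw [← h]
    rw [Gfun_zero]
    rw [Real.zero_rpow (by norm_num)]
    simp
  · have hu2 : (0:ℝ) < u ^ 2 := by positivity
    have hBu : (1:ℝ) ≤ B ^ 2 / u ^ 2 := by
      rw [le_div_iff₀ hu2]; nlinarith
    have hlog : Real.log (u ^ 2) = Real.log (B ^ 2) - Real.log (B ^ 2 / u ^ 2) := by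
      rw [Real.log_div (by positivity) (by positivity)]; ring
    have l1 : 0 ≤ Real.log (B ^ 2) := Real.log_nonneg (by nlinarith)
    have l2 : 0 ≤ Real.log (B ^ 2 / u ^ 2) := Real.log_nonneg hBu
    have h1 : |Real.log (u ^ 2)| ≤ Real.log (B ^ 2) + Real.log (B ^ 2 / u ^ 2) := by
      rw [hlog]
      calc |Real.log (B ^ 2) - Real.log (B ^ 2 / u ^ 2)|
          ≤ |Real.log (B ^ 2)| + |Real.log (B ^ 2 / u ^ 2)| := abs_sub _ _
        _ = Real.log (B ^ 2) + Real.log (B ^ 2 / u ^ 2) := by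
            rw [abs_of_nonneg l1, abs_of_nonneg l2]
    have h2 : Real.log (B ^ 2 / u ^ 2) ≤ 8 * (B ^ 2 / u ^ 2) ^ ((8:ℝ)⁻¹) :=
      log_le_rpow (by positivity)
    have h3 : ((B ^ 2 / u ^ 2 : ℝ)) ^ ((8:ℝ)⁻¹) = B ^ ((4:ℝ)⁻¹) / u ^ ((4:ℝ)⁻¹) := by
      rw [Real.div_rpow (by positivity) (by positivity),
        ← Real.rpow_natCast B 2, ← Real.rpow_natCast u 2,
        ← Real.rpow_mul hB0.le, ← Real.rpow_mul hu.le]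
      norm_num
    have h4 : u ^ 2 * (B ^ ((4:ℝ)⁻¹) / u ^ ((4:ℝ)⁻¹)) = B ^ ((4:ℝ)⁻¹) * u ^ ((7:ℝ)/4) := by
      have hu74 : u ^ ((7:ℝ)/4) = u ^ (2:ℝ) / u ^ ((4:ℝ)⁻¹) := by
        rw [← Real.rpow_sub hu]; norm_num
      rw [hu74, ← Real.rpow_natCast u 2]
      push_cast
      field_simp
    have habs : |Gfun u| = u ^ 2 * |Real.log (u ^ 2)| := by
      rw [Gfun, abs_mul, abs_of_nonneg (le_of_lt hu2)]
    rw [habs]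
    calc u ^ 2 * |Real.log (u ^ 2)|
        ≤ u ^ 2 * (Real.log (B ^ 2) + Real.log (B ^ 2 / u ^ 2)) := by
          exact mul_le_mul_of_nonneg_left h1 (le_of_lt hu2)
      _ = Real.log (B ^ 2) * u ^ 2 + u ^ 2 * Real.log (B ^ 2 / u ^ 2) := by ring
      _ ≤ Real.log (B ^ 2) * u ^ 2 + u ^ 2 * (8 * (B ^ 2 / u ^ 2) ^ ((8:ℝ)⁻¹)) := by
          nlinarith [h2, le_of_lt hu2]
      _ = Real.log (B ^ 2) * u ^ 2 + 8 * B ^ ((4:ℝ)⁻¹) * u ^ ((7:ℝ)/4) := by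
          rw [h3]; nlinarith [h4]

lemma Gfun_scale {l u : ℝ} (hl : 0 < l) (hu : 0 < u) :
    Gfun (l * u) = l ^ 2 * Gfun u + l ^ 2 * u ^ 2 * Real.log (l ^ 2) := by
  unfold Gfun
  rw [mul_pow, Real.log_mul (by positivity) (by positivity)]
  ring

lemma one_add_rpow_pos (hs : 0 ≤ s) (hp : 0 < p) : (0:ℝ) < 1 + s ^ p := by
  have := Real.rpow_nonneg hs p; linarith

lemma Ufun_pos (hK : 0 < K) (hp : 0 < p) (hs : 0 ≤ s) : 0 < Ufun K p m s :=
  mul_pos hK (Real.rpow_pos_of_pos (one_add_rpow_pos hs hp) _)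

lemma Ufun_le (hK : 0 < K) (hp : 0 < p) (hm : 0 ≤ m) (hs : 0 ≤ s) : Ufun K p m s ≤ K := by
  have h1 : (1 + s ^ p) ^ (-m) ≤ 1 :=
    Real.rpow_le_one_of_one_le_of_nonpos (by nlinarith [Real.rpow_nonneg hs p]) (by linarith)
  calc Ufun K p m s ≤ K * 1 := by
        exact mul_le_mul_of_nonneg_left h1 hK.le
    _ = K := mul_one K

lemma Ufun_tail (hK : 0 < K) (hp : 0 < p) (hm : 0 ≤ m) (hs : 0 < s) :
    Ufun K p m s ≤ K * s ^ (-(p * m)) := by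
  have h1 : (1 + s ^ p) ^ (-m) ≤ (s ^ p) ^ (-m) :=
    Real.rpow_le_rpow_of_nonpos (Real.rpow_pos_of_pos hs p) (by linarith) (by linarith)
  have h2 : ((s:ℝ) ^ p) ^ (-m) = s ^ (-(p * m)) := by
    rw [← Real.rpow_mul hs.le]; ring_nf
  rw [← h2]
  exact mul_le_mul_of_nonneg_left h1 hK.le

lemma Wfun_pos (hK : 0 < K) (hp : 0 < p) (hε : 0 < ε) (hr : 0 ≤ r) :
    0 < Wfun K p m t ε r := by
  have h : (0:ℝ) < ε ^ p + r ^ p := by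
    have := Real.rpow_nonneg hr p
    have := Real.rpow_pos_of_pos hε p
    linarith
  exact mul_pos (mul_pos hK (Real.rpow_pos_of_pos hε t)) (Real.rpow_pos_of_pos h _)

lemma Wfun_measurable : Measurable (Wfun K p m t ε) := by
  unfold Wfun; measurability

lemma Wfun_scale (hp : 0 < p) (hε : 0 < ε) (hs : 0 ≤ s) :
    Wfun K p m t ε (ε * s) = ε ^ (t - p * m) * Ufun K p m s := by
  unfold Wfun Ufun
  have h1 : (ε * s) ^ p = ε ^ p * s ^ p := Real.mul_rpow hε.le hs
  have h2 : ε ^ p + ε ^ p * s ^ p = ε ^ p * (1 + s ^ p) := by ring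
  rw [h1, h2, Real.mul_rpow (Real.rpow_nonneg hε.le p) (one_add_rpow_pos hs hp).le]
  have h3 : ((ε:ℝ) ^ p) ^ (-m) = ε ^ (-(p * m)) := by
    rw [← Real.rpow_mul hε.le]; ring_nf
  have h4 : ε ^ t * ε ^ (-(p * m)) = ε ^ (t - p * m) := by
    rw [← Real.rpow_add hε]; ring_nf
  rw [h3]
  rw [← h4]
  ring

lemma Wfun_tail (hK : 0 < K) (hp : 0 < p) (hm : 0 ≤ m) (hε : 0 < ε) (hr : 0 < r) :
    Wfun K p m t ε r ≤ K * ε ^ t * r ^ (-(p * m)) := by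
  have h1 : (ε ^ p + r ^ p) ^ (-m) ≤ (r ^ p) ^ (-m) :=
    Real.rpow_le_rpow_of_nonpos (Real.rpow_pos_of_pos hr p)
      (by nlinarith [Real.rpow_pos_of_pos hε p]) (by linarith)
  have h2 : ((r:ℝ) ^ p) ^ (-m) = r ^ (-(p * m)) := by
    rw [← Real.rpow_mul hr.le]; ring_nf
  rw [← h2]
  exact mul_le_mul_of_nonneg_left h1 (by positivity)

lemma integrableOn_model (hp : 0 < p) (hm : 0 < m) (hK : 0 < K) (hq : 0 ≤ q)
    (hexp : (n:ℝ) - q * (p * m) < -1) :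
    IntegrableOn (fun s => s ^ n * Ufun K p m s ^ q) (Ioi (0:ℝ)) := by
  have hmeas : Measurable fun s : ℝ => s ^ n * Ufun K p m s ^ q := by
    unfold Ufun; measurability
  rw [← Ioc_union_Ioi_eq_Ioi (zero_le_one (α := ℝ))]
  refine IntegrableOn.union ?_ ?_
  · refine Integrable.mono' ((integrableOn_const (C := K ^ q) measure_Ioc_lt_top.ne))
      hmeas.aestronglyMeasurable ?_
    refine (ae_restrict_iff' measurableSet_Ioc).2 (Filter.Eventually.of_forall fun s hs => ?_)
    have hs0 : 0 < s := hs.1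
    have hU0 : 0 ≤ Ufun K p m s := (Ufun_pos hK hp hs0.le).le
    have h1 : Ufun K p m s ^ q ≤ K ^ q := Real.rpow_le_rpow hU0 (Ufun_le hK hp hm.le hs0.le) hq
    have h2 : s ^ n ≤ 1 := pow_le_one₀ hs0.le hs.2
    rw [Real.norm_eq_abs, abs_of_nonneg (by positivity)]
    calc s ^ n * Ufun K p m s ^ q ≤ 1 * K ^ q :=
          mul_le_mul h2 h1 (Real.rpow_nonneg hU0 q) zero_le_one
      _ = K ^ q := one_mul _
  · refine Integrable.mono' ((integrableOn_Ioi_rpow_of_lt hexp one_pos).const_mul (K ^ q))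
      hmeas.aestronglyMeasurable ?_
    refine (ae_restrict_iff' measurableSet_Ioi).2 (Filter.Eventually.of_forall fun s hs => ?_)
    have hs0 : (0:ℝ) < s := lt_trans one_pos hs
    have hU0 : 0 ≤ Ufun K p m s := (Ufun_pos hK hp hs0.le).le
    have h1 : Ufun K p m s ^ q ≤ (K * s ^ (-(p * m))) ^ q :=
      Real.rpow_le_rpow hU0 (Ufun_tail hK hp hm.le hs0) hq
    have h2 : (K * s ^ (-(p * m))) ^ q = K ^ q * s ^ (-(p * m) * q) := by
      rw [Real.mul_rpow hK.le (Real.rpow_nonneg hs0.le _), ← Real.rpow_mul hs0.le]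
    have h3 : s ^ n * (K ^ q * s ^ (-(p * m) * q)) = K ^ q * s ^ ((n:ℝ) - q * (p * m)) := by
      rw [← Real.rpow_natCast s n, ← mul_assoc, mul_comm (s ^ ((n:ℕ):ℝ)) (K ^ q), mul_assoc,
        ← Real.rpow_add hs0]
      ring_nf
    rw [Real.norm_eq_abs, abs_of_nonneg (by positivity)]
    calc s ^ n * Ufun K p m s ^ q ≤ s ^ n * (K ^ q * s ^ (-(p * m) * q)) := by
          rw [← h2]
          exact mul_le_mul_of_nonneg_left h1 (by positivity)
      _ = K ^ q * s ^ ((n:ℝ) - q * (p * m)) := h3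

lemma integrableOn_modelG (hp : 0 < p) (hm : 0 < m) (hK : 0 < K)
    (he1 : (n:ℝ) - 2 * (p * m) < -1) (he2 : (n:ℝ) - (7/4) * (p * m) < -1) :
    IntegrableOn (fun s => s ^ n * Gfun (Ufun K p m s)) (Ioi (0:ℝ)) := by
  set B := K + 1 with hBdef
  have hB : 1 ≤ B := by linarith
  have hmeas : Measurable fun s : ℝ => s ^ n * Gfun (Ufun K p m s) := by
    unfold Ufun Gfun; measurability
  have hint : Integrable (fun s => Real.log (B ^ 2) * (s ^ n * Ufun K p m s ^ (2:ℝ)) +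
      8 * B ^ ((4:ℝ)⁻¹) * (s ^ n * Ufun K p m s ^ ((7:ℝ)/4)))
      (volume.restrict (Ioi (0:ℝ))) := by
    exact ((integrableOn_model hp hm hK (by norm_num) (by linarith)).const_mul _).add
      ((integrableOn_model hp hm hK (by norm_num) (by linarith)).const_mul _)
  refine Integrable.mono' hint hmeas.aestronglyMeasurable ?_
  refine (ae_restrict_iff' measurableSet_Ioi).2 (Filter.Eventually.of_forall fun s hs => ?_)
  have hs0 : (0:ℝ) < s := hs
  have hU0 : 0 ≤ Ufun K p m s := (Ufun_pos hK hp hs0.le).le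
  have hUB : Ufun K p m s ≤ B := (Ufun_le hK hp hm.le hs0.le).trans (by linarith)
  have h1 := Gfun_abs_le hB hU0 hUB
  rw [Real.norm_eq_abs, abs_mul, abs_of_nonneg (by positivity : (0:ℝ) ≤ s ^ n)]
  have h2 : Ufun K p m s ^ (2:ℝ) = Ufun K p m s ^ (2:ℕ) := Real.rpow_natCast _ 2
  calc s ^ n * |Gfun (Ufun K p m s)|
      ≤ s ^ n * (Real.log (B ^ 2) * Ufun K p m s ^ 2 +
          8 * B ^ ((4:ℝ)⁻¹) * Ufun K p m s ^ ((7:ℝ)/4)) :=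
        mul_le_mul_of_nonneg_left h1 (by positivity)
    _ = Real.log (B ^ 2) * (s ^ n * Ufun K p m s ^ (2:ℝ)) +
        8 * B ^ ((4:ℝ)⁻¹) * (s ^ n * Ufun K p m s ^ ((7:ℝ)/4)) := by
        rw [h2]; ring


/-- The tail estimate on `Ioi ρ`. -/
lemma tail_estimate
    (hp : 0 < p) (hm : 0 < m) (hK : 0 < K) (hB : 1 ≤ B)
    (ht : 0 < t) (hρ : 0 < ρ) (hε : 0 < ε) (hε1 : ε ≤ 1)
    (he1 : (n:ℝ) - 2 * (p * m) < -1) (he2 : (n:ℝ) - (7/4) * (p * m) < -1)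
    (h2t : 2 ≤ 2 * t) (h2t' : 2 ≤ 7/4 * t)
    (hWB : K * ε ^ t * ρ ^ (-(p * m)) ≤ B)
    (hv : Measurable v) (hv0 : ∀ r ∈ Ioi ρ, 0 ≤ v r)
    (hvW : ∀ r ∈ Ioi ρ, v r ≤ Wfun K p m t ε r) :
    IntegrableOn (fun r => r ^ n * Gfun (v r)) (Ioi ρ) ∧
    |∫ r in Ioi ρ, r ^ n * Gfun (v r)| ≤
      (Real.log (B ^ 2) * K ^ 2 * (∫ r in Ioi ρ, r ^ ((n:ℝ) - 2 * (p * m))) +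
       8 * B ^ ((4:ℝ)⁻¹) * K ^ ((7:ℝ)/4) * (∫ r in Ioi ρ, r ^ ((n:ℝ) - 7/4 * (p * m)))) * ε ^ 2 := by
  have hmeas : Measurable fun r : ℝ => r ^ n * Gfun (v r) := by
    unfold Gfun; measurability
  have hε2 : ∀ c : ℝ, 2 ≤ c * t → ε ^ (c * t) ≤ ε ^ (2:ℕ) := by
    intro c hc
    have h := Real.rpow_le_rpow_of_exponent_ge hε hε1 hc
    calc ε ^ (c * t) ≤ ε ^ (2:ℝ) := h
      _ = ε ^ (2:ℕ) := Real.rpow_natCast ε 2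
  -- pointwise domination
  have hpt : ∀ r ∈ Ioi ρ, |r ^ n * Gfun (v r)| ≤
      (Real.log (B ^ 2) * K ^ 2 * r ^ ((n:ℝ) - 2 * (p * m)) +
        8 * B ^ ((4:ℝ)⁻¹) * K ^ ((7:ℝ)/4) * r ^ ((n:ℝ) - 7/4 * (p * m))) * ε ^ 2 := by
    intro r hr
    have hr0 : (0:ℝ) < r := hρ.trans hr
    have hWr : Wfun K p m t ε r ≤ K * ε ^ t * r ^ (-(p * m)) :=
      Wfun_tail hK hp hm.le hε hr0
    have hrρ : r ^ (-(p * m)) ≤ ρ ^ (-(p * m)) :=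
      Real.rpow_le_rpow_of_nonpos hρ (le_of_lt hr) (by nlinarith)
    have hvB : v r ≤ B := by
      refine ((hvW r hr).trans hWr).trans (le_trans ?_ hWB)
      exact mul_le_mul_of_nonneg_left hrρ (by positivity)
    have hv0' : 0 ≤ v r := hv0 r hr
    have hG := Gfun_abs_le hB hv0' hvB
    -- v r ≤ K ε^t r^{-pm}
    have hvW' : v r ≤ K * ε ^ t * r ^ (-(p * m)) := (hvW r hr).trans hWr
    have hsq : v r ^ 2 ≤ (K * ε ^ t * r ^ (-(p * m))) ^ 2 := by
      exact pow_le_pow_left₀ hv0' hvW' 2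
    have h74 : v r ^ ((7:ℝ)/4) ≤ (K * ε ^ t * r ^ (-(p * m))) ^ ((7:ℝ)/4) :=
      Real.rpow_le_rpow hv0' hvW' (by norm_num)
    -- expand the powers
    have hh2 : (ε ^ t) ^ (2:ℕ) = ε ^ (2 * t) := by
      rw [← Real.rpow_natCast (ε ^ t) 2, ← Real.rpow_mul hε.le]; ring_nf
    have hh3 : (r ^ (-(p * m))) ^ (2:ℕ) = r ^ (-(2 * (p * m))) := by
      rw [← Real.rpow_natCast (r ^ (-(p * m))) 2, ← Real.rpow_mul hr0.le]; ring_nf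
    have hh4 : r ^ n = r ^ ((n:ℕ):ℝ) := (Real.rpow_natCast r n).symm
    have hh5 : r ^ ((n:ℕ):ℝ) * r ^ (-(2 * (p * m))) = r ^ ((n:ℝ) - 2 * (p * m)) := by
      rw [← Real.rpow_add hr0]; ring_nf
    have e1 : r ^ n * (K * ε ^ t * r ^ (-(p * m))) ^ 2 =
        K ^ 2 * ε ^ (2 * t) * r ^ ((n:ℝ) - 2 * (p * m)) := by
      calc r ^ n * (K * ε ^ t * r ^ (-(p * m))) ^ 2
          = K ^ 2 * ε ^ (2 * t) * (r ^ ((n:ℕ):ℝ) * r ^ (-(2 * (p * m)))) := by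
            rw [← hh2, ← hh3, ← hh4]; ring
        _ = K ^ 2 * ε ^ (2 * t) * r ^ ((n:ℝ) - 2 * (p * m)) := by rw [hh5]
    have gg2 : (ε ^ t) ^ ((7:ℝ)/4) = ε ^ (7/4 * t) := by
      rw [← Real.rpow_mul hε.le]; ring_nf
    have gg3 : (r ^ (-(p * m))) ^ ((7:ℝ)/4) = r ^ (-(7/4 * (p * m))) := by
      rw [← Real.rpow_mul hr0.le]; ring_nf
    have gg5 : r ^ ((n:ℕ):ℝ) * r ^ (-(7/4 * (p * m))) = r ^ ((n:ℝ) - 7/4 * (p * m)) := by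
      rw [← Real.rpow_add hr0]; ring_nf
    have e2 : r ^ n * (K * ε ^ t * r ^ (-(p * m))) ^ ((7:ℝ)/4) =
        K ^ ((7:ℝ)/4) * ε ^ (7/4 * t) * r ^ ((n:ℝ) - 7/4 * (p * m)) := by
      calc r ^ n * (K * ε ^ t * r ^ (-(p * m))) ^ ((7:ℝ)/4)
          = r ^ ((n:ℕ):ℝ) * (K ^ ((7:ℝ)/4) * ε ^ (7/4 * t) * r ^ (-(7/4 * (p * m)))) := by
            rw [Real.mul_rpow (by positivity) (Real.rpow_nonneg hr0.le _),
              Real.mul_rpow hK.le (Real.rpow_nonneg hε.le _), gg2, gg3,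
              ← Real.rpow_natCast r n]
        _ = K ^ ((7:ℝ)/4) * ε ^ (7/4 * t) * (r ^ ((n:ℕ):ℝ) * r ^ (-(7/4 * (p * m)))) := by ring
        _ = _ := by rw [gg5]
    have hrn : (0:ℝ) ≤ r ^ n := by positivity
    rw [abs_mul, abs_of_nonneg hrn]
    have step1 : r ^ n * |Gfun (v r)| ≤
        Real.log (B ^ 2) * (r ^ n * v r ^ 2) + 8 * B ^ ((4:ℝ)⁻¹) * (r ^ n * v r ^ ((7:ℝ)/4)) := by
      calc r ^ n * |Gfun (v r)| ≤
          r ^ n * (Real.log (B ^ 2) * v r ^ 2 + 8 * B ^ ((4:ℝ)⁻¹) * v r ^ ((7:ℝ)/4)) :=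
            mul_le_mul_of_nonneg_left hG hrn
        _ = _ := by ring
    have hlogB : 0 ≤ Real.log (B ^ 2) := Real.log_nonneg (by nlinarith)
    have step2 : Real.log (B ^ 2) * (r ^ n * v r ^ 2) ≤
        Real.log (B ^ 2) * K ^ 2 * r ^ ((n:ℝ) - 2 * (p * m)) * ε ^ 2 := by
      have : r ^ n * v r ^ 2 ≤ K ^ 2 * ε ^ (2 * t) * r ^ ((n:ℝ) - 2 * (p * m)) := by
        rw [← e1]; exact mul_le_mul_of_nonneg_left hsq hrn
      have h2 : K ^ 2 * ε ^ (2 * t) * r ^ ((n:ℝ) - 2 * (p * m)) ≤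
          K ^ 2 * ε ^ (2:ℕ) * r ^ ((n:ℝ) - 2 * (p * m)) := by
        have := hε2 2 h2t
        have hrp : (0:ℝ) ≤ r ^ ((n:ℝ) - 2 * (p * m)) := Real.rpow_nonneg hr0.le _
        exact mul_le_mul_of_nonneg_right
          (mul_le_mul_of_nonneg_left (hε2 2 h2t) (by positivity)) hrp
      calc Real.log (B ^ 2) * (r ^ n * v r ^ 2)
          ≤ Real.log (B ^ 2) * (K ^ 2 * ε ^ (2:ℕ) * r ^ ((n:ℝ) - 2 * (p * m))) := by
            exact mul_le_mul_of_nonneg_left (this.trans h2) hlogB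
        _ = Real.log (B ^ 2) * K ^ 2 * r ^ ((n:ℝ) - 2 * (p * m)) * ε ^ 2 := by ring
    have step3 : 8 * B ^ ((4:ℝ)⁻¹) * (r ^ n * v r ^ ((7:ℝ)/4)) ≤
        8 * B ^ ((4:ℝ)⁻¹) * K ^ ((7:ℝ)/4) * r ^ ((n:ℝ) - 7/4 * (p * m)) * ε ^ 2 := by
      have hb0 : (0:ℝ) ≤ 8 * B ^ ((4:ℝ)⁻¹) := by positivity
      have : r ^ n * v r ^ ((7:ℝ)/4) ≤ K ^ ((7:ℝ)/4) * ε ^ (7/4 * t) * r ^ ((n:ℝ) - 7/4 * (p * m)) := by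
        rw [← e2]; exact mul_le_mul_of_nonneg_left h74 hrn
      have h2 : K ^ ((7:ℝ)/4) * ε ^ (7/4 * t) * r ^ ((n:ℝ) - 7/4 * (p * m)) ≤
          K ^ ((7:ℝ)/4) * ε ^ (2:ℕ) * r ^ ((n:ℝ) - 7/4 * (p * m)) := by
        have := hε2 (7/4) h2t'
        have hrp : (0:ℝ) ≤ r ^ ((n:ℝ) - 7/4 * (p * m)) := Real.rpow_nonneg hr0.le _
        exact mul_le_mul_of_nonneg_right
          (mul_le_mul_of_nonneg_left (hε2 (7/4) h2t') (Real.rpow_nonneg hK.le _)) hrp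
      calc 8 * B ^ ((4:ℝ)⁻¹) * (r ^ n * v r ^ ((7:ℝ)/4))
          ≤ 8 * B ^ ((4:ℝ)⁻¹) * (K ^ ((7:ℝ)/4) * ε ^ (2:ℕ) * r ^ ((n:ℝ) - 7/4 * (p * m))) :=
            mul_le_mul_of_nonneg_left (this.trans h2) hb0
        _ = 8 * B ^ ((4:ℝ)⁻¹) * K ^ ((7:ℝ)/4) * r ^ ((n:ℝ) - 7/4 * (p * m)) * ε ^ 2 := by ring
    calc r ^ n * |Gfun (v r)| ≤ _ := step1
      _ ≤ _ := add_le_add step2 step3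
      _ = (Real.log (B ^ 2) * K ^ 2 * r ^ ((n:ℝ) - 2 * (p * m)) +
            8 * B ^ ((4:ℝ)⁻¹) * K ^ ((7:ℝ)/4) * r ^ ((n:ℝ) - 7/4 * (p * m))) * ε ^ 2 := by ring
  -- the dominating function is integrable
  have hDint : Integrable (fun r => (Real.log (B ^ 2) * K ^ 2 * r ^ ((n:ℝ) - 2 * (p * m)) +
      8 * B ^ ((4:ℝ)⁻¹) * K ^ ((7:ℝ)/4) * r ^ ((n:ℝ) - 7/4 * (p * m))) * ε ^ 2)
      (volume.restrict (Ioi ρ)) := by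
    refine Integrable.mul_const ?_ _
    exact ((integrableOn_Ioi_rpow_of_lt he1 hρ).const_mul _).add
      ((integrableOn_Ioi_rpow_of_lt he2 hρ).const_mul _)
  have hint : IntegrableOn (fun r => r ^ n * Gfun (v r)) (Ioi ρ) := by
    refine Integrable.mono' hDint hmeas.aestronglyMeasurable ?_
    refine (ae_restrict_iff' measurableSet_Ioi).2 (Filter.Eventually.of_forall fun r hr => ?_)
    rw [Real.norm_eq_abs]
    exact hpt r hr
  refine ⟨hint, ?_⟩
  have := norm_integral_le_of_norm_le hDint
      ((ae_restrict_iff' measurableSet_Ioi).2 (Filter.Eventually.of_forall fun r hr => by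
        rw [Real.norm_eq_abs]; exact hpt r hr))
  rw [Real.norm_eq_abs] at this
  refine this.trans ?_
  rw [integral_mul_const]
  have hJ := integral_add ((integrableOn_Ioi_rpow_of_lt he1 hρ).const_mul
      (Real.log (B ^ 2) * K ^ 2))
    ((integrableOn_Ioi_rpow_of_lt he2 hρ).const_mul (8 * B ^ ((4:ℝ)⁻¹) * K ^ ((7:ℝ)/4)))
  rw [hJ, integral_const_mul, integral_const_mul]


/-- The rescaling identity for the main term. -/
lemma main_identity
    (hp : 0 < p) (hm : 0 < m) (hK : 0 < K) (hε : 0 < ε)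
    (hpm : p * m = 2 * t) (hn : (n:ℝ) = 2 * t + 1)
    (hInt1 : IntegrableOn (fun s => s ^ n * Gfun (Ufun K p m s)) (Ioi (0:ℝ)))
    (hInt2 : IntegrableOn (fun s => s ^ n * (Ufun K p m s) ^ 2) (Ioi (0:ℝ))) :
    (∫ r in Ioi (0:ℝ), r ^ n * Gfun (Wfun K p m t ε r))
      = ε ^ 2 * ((∫ s in Ioi (0:ℝ), s ^ n * Gfun (Ufun K p m s))
          + 2 * t * Real.log (1/ε) * (∫ s in Ioi (0:ℝ), s ^ n * (Ufun K p m s) ^ 2)) ∧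
    IntegrableOn (fun r => r ^ n * Gfun (Wfun K p m t ε r)) (Ioi (0:ℝ)) := by
  set g : ℝ → ℝ := fun r => r ^ n * Gfun (Wfun K p m t ε r) with hg
  set h : ℝ → ℝ := fun s => s ^ n * Gfun (Ufun K p m s)
      + (2 * t * Real.log (1/ε)) * (s ^ n * (Ufun K p m s) ^ 2) with hh
  have hth : 0 < t := by nlinarith
  -- pointwise identity  g (ε * s) = ε * h s  for s > 0
  have hptwise : ∀ s ∈ Ioi (0:ℝ), g (ε * s) = ε * h s := by
    intro s hs
    have hs0 : (0:ℝ) < s := hs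
    have hU : 0 < Ufun K p m s := Ufun_pos hK hp hs0.le
    have hl : (0:ℝ) < ε ^ (-t) := Real.rpow_pos_of_pos hε _
    have hW : Wfun K p m t ε (ε * s) = ε ^ (-t) * Ufun K p m s := by
      rw [Wfun_scale hp hε hs0.le, hpm, show t - 2 * t = -t by ring]
    have hG : Gfun (Wfun K p m t ε (ε * s)) =
        (ε ^ (-t)) ^ 2 * Gfun (Ufun K p m s)
          + (ε ^ (-t)) ^ 2 * (Ufun K p m s) ^ 2 * Real.log ((ε ^ (-t)) ^ 2) := by
      rw [hW]; exact Gfun_scale hl hU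
    have hl2 : (ε ^ (-t)) ^ (2:ℕ) = ε ^ (-(2*t)) := by
      rw [← Real.rpow_natCast (ε ^ (-t)) 2, ← Real.rpow_mul hε.le]; ring_nf
    have hlog : Real.log ((ε ^ (-t)) ^ (2:ℕ)) = 2 * t * Real.log (1/ε) := by
      rw [hl2, Real.log_rpow hε, one_div, Real.log_inv]; ring
    -- (ε s)^n = ε^n s^n ; ε^n * ε^{-2t} = ε
    have hen : (ε:ℝ) ^ (n:ℕ) * ε ^ (-(2*t)) = ε := by
      rw [← Real.rpow_natCast ε n, ← Real.rpow_add hε, hn]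
      norm_num
    show (ε * s) ^ n * Gfun (Wfun K p m t ε (ε * s)) = ε * h s
    rw [mul_pow, hG, hlog, hl2]
    simp only [hh]
    have expand : ε ^ n * s ^ n * (ε ^ (-(2*t)) * Gfun (Ufun K p m s)
          + ε ^ (-(2*t)) * (Ufun K p m s) ^ 2 * (2 * t * Real.log (1/ε)))
        = (ε ^ n * ε ^ (-(2*t))) * (s ^ n * Gfun (Ufun K p m s)
          + (2 * t * Real.log (1/ε)) * (s ^ n * (Ufun K p m s) ^ 2)) := by ring
    calc ε ^ n * s ^ n * (ε ^ (-(2*t)) * Gfun (Ufun K p m s)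
          + ε ^ (-(2*t)) * (Ufun K p m s) ^ 2 * (2 * t * Real.log (1/ε)))
        = (ε ^ n * ε ^ (-(2*t))) * (s ^ n * Gfun (Ufun K p m s)
          + (2 * t * Real.log (1/ε)) * (s ^ n * (Ufun K p m s) ^ 2)) := expand
      _ = ε * (s ^ n * Gfun (Ufun K p m s)
          + (2 * t * Real.log (1/ε)) * (s ^ n * (Ufun K p m s) ^ 2)) := by rw [hen]
  have hh_int : IntegrableOn h (Ioi (0:ℝ)) := by
    exact hInt1.add (hInt2.const_mul _)
  -- integrability of g
  have hcomp_int : IntegrableOn (fun x => g (ε * x)) (Ioi (0:ℝ)) := by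
    refine (integrable_congr ?_).2 (hh_int.const_mul ε)
    refine (ae_restrict_iff' measurableSet_Ioi).2 (Filter.Eventually.of_forall fun s hs => ?_)
    exact hptwise s hs
  have hg_int : IntegrableOn g (Ioi (0:ℝ)) := by
    have := (integrableOn_Ioi_comp_mul_left_iff g 0 hε).1 hcomp_int
    rwa [mul_zero] at this
  refine ⟨?_, hg_int⟩
  have hcv := integral_comp_mul_left_Ioi g 0 hε
  rw [mul_zero] at hcv
  have hcomp_val : (∫ x in Ioi (0:ℝ), g (ε * x)) = ε * ∫ s in Ioi (0:ℝ), h s := by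
    rw [setIntegral_congr_fun measurableSet_Ioi (fun s hs => hptwise s hs)]
    exact integral_const_mul ε h
  have hval : (∫ r in Ioi (0:ℝ), g r) = ε * (ε * ∫ s in Ioi (0:ℝ), h s) := by
    rw [← hcomp_val, hcv, smul_eq_mul]
    field_simp
  rw [hval]
  have hgoal : (∫ s in Ioi (0:ℝ), h s) = (∫ s in Ioi (0:ℝ), s ^ n * Gfun (Ufun K p m s))
      + 2 * t * Real.log (1/ε) * (∫ s in Ioi (0:ℝ), s ^ n * (Ufun K p m s) ^ 2) := by
    rw [hh]
    rw [integral_add hInt1 (hInt2.const_mul _)]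
    rw [integral_const_mul]
  rw [hgoal]; ring

/-- Positivity of the `b` integral. -/
lemma b_pos (hp : 0 < p) (hm : 0 < m) (hK : 0 < K)
    (hInt2 : IntegrableOn (fun s => s ^ n * (Ufun K p m s) ^ 2) (Ioi (0:ℝ))) :
    0 < ∫ s in Ioi (0:ℝ), s ^ n * (Ufun K p m s) ^ 2 := by
  set c0 : ℝ := (K * (1 + 2 ^ p) ^ (-m)) ^ 2 with hc0
  have h2p : (0:ℝ) < 2 ^ p := Real.rpow_pos_of_pos two_pos p
  have hc0pos : 0 < c0 := by
    have : (0:ℝ) < K * (1 + 2 ^ p) ^ (-m) :=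
      mul_pos hK (Real.rpow_pos_of_pos (by linarith) _)
    positivity
  have hnonneg : ∀ s ∈ Ioi (0:ℝ), 0 ≤ s ^ n * (Ufun K p m s) ^ 2 := by
    intro s hs
    have : (0:ℝ) < s := hs
    positivity
  have hsub : Ioc (1:ℝ) 2 ⊆ Ioi (0:ℝ) := fun x hx => lt_trans one_pos hx.1
  have hlower : ∀ s ∈ Ioc (1:ℝ) 2, c0 ≤ s ^ n * (Ufun K p m s) ^ 2 := by
    intro s hs
    have hs1 : (1:ℝ) < s := hs.1
    have hs0 : (0:ℝ) < s := lt_trans one_pos hs1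
    have hU : K * (1 + 2 ^ p) ^ (-m) ≤ Ufun K p m s := by
      unfold Ufun
      refine mul_le_mul_of_nonneg_left ?_ hK.le
      refine Real.rpow_le_rpow_of_nonpos (by linarith [Real.rpow_nonneg hs0.le p]) ?_ (by linarith)
      have : s ^ p ≤ 2 ^ p := Real.rpow_le_rpow hs0.le hs.2 (le_of_lt hp)
      linarith
    have hsn : (1:ℝ) ≤ s ^ n := one_le_pow₀ hs1.le
    have hUpos : 0 < K * (1 + 2 ^ p) ^ (-m) :=
      mul_pos hK (Real.rpow_pos_of_pos (by linarith) _)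
    calc c0 = 1 * (K * (1 + 2 ^ p) ^ (-m)) ^ 2 := by rw [one_mul]
      _ ≤ s ^ n * (Ufun K p m s) ^ 2 := by
          refine mul_le_mul hsn (pow_le_pow_left₀ hUpos.le hU 2) (by positivity) ?_
          exact le_trans zero_le_one hsn
  have hstep : c0 * 1 ≤ ∫ s in Ioc (1:ℝ) 2, s ^ n * (Ufun K p m s) ^ 2 := by
    have hconst : (∫ _ in Ioc (1:ℝ) 2, c0) = c0 * 1 := by
      simp [Real.volume_Ioc]
      norm_num
    rw [← hconst]
    refine setIntegral_mono_on (integrableOn_const measure_Ioc_lt_top.ne)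
      (hInt2.mono_set hsub) measurableSet_Ioc hlower
  have hmono : (∫ s in Ioc (1:ℝ) 2, s ^ n * (Ufun K p m s) ^ 2)
      ≤ ∫ s in Ioi (0:ℝ), s ^ n * (Ufun K p m s) ^ 2 := by
    refine setIntegral_mono_set hInt2 ?_ (HasSubset.Subset.eventuallyLE hsub)
    refine (ae_restrict_iff' measurableSet_Ioi).2 (Filter.Eventually.of_forall hnonneg)
  linarith


end S13aux

/-- for `N ≥ 5`, `∫_Ω U_{ε,α}² log U_{ε,α}² = C₀ ε² log(1/ε) + O(ε²)`. -/
theorem statement13 (N : ℕ) (hN : 5 ≤ N) (α : ℝ) (hα : -2 < α)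
    (ρ : ℝ) (hρ : ρ ∈ Set.Ioo (0 : ℝ) (1 / 2))
    (φ : Euc N → ℝ) (hφsmooth : ContDiff ℝ (⊤ : ℕ∞) φ) (hφcpt : HasCompactSupport φ)
    (hφrad : IsRadial φ) (hφ01 : ∀ x, φ x ∈ Set.Icc (0 : ℝ) 1)
    (hφ1 : ∀ x : Euc N, ‖x‖ ≤ ρ → φ x = 1) (hφ0 : ∀ x : Euc N, 2 * ρ ≤ ‖x‖ → φ x = 0) :
    ∃ C₀ > (0 : ℝ), ∃ M > (0 : ℝ), ∃ ε₀ > (0 : ℝ), ∀ ε ∈ Set.Ioo (0 : ℝ) ε₀,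
      |(∫ x in Omega N α,
          (φ x * bubbleFn N α ε x) ^ 2 * Real.log ((φ x * bubbleFn N α ε x) ^ 2)) -
        C₀ * ε ^ 2 * Real.log (1 / ε)| ≤ M * ε ^ 2 := by
  classical
  have hρ0 : 0 < ρ := hρ.1
  have hρhalf : ρ < 1/2 := hρ.2
  have hN0 : 0 < N := by omega
  have hNR : (5:ℝ) ≤ (N:ℝ) := by exact_mod_cast hN
  set p : ℝ := α + 2 with hpdef
  have hp : 0 < p := by rw [hpdef]; linarith
  set m : ℝ := ((N:ℝ) - 2) / p with hmdef
  set t : ℝ := ((N:ℝ) - 2) / 2 with htdef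
  set K : ℝ := Cconst N α with hKdef
  have hK : 0 < K := by
    rw [hKdef, Cconst]
    apply Real.rpow_pos_of_pos
    nlinarith
  have hpm : p * m = (N:ℝ) - 2 := mul_div_cancel₀ _ (ne_of_gt hp)
  have h2t : 2 * t = (N:ℝ) - 2 := by rw [htdef]; ring
  have hm : 0 < m := div_pos (by linarith) hp
  have htpos : 0 < t := by rw [htdef]; linarith
  set n : ℕ := N - 1 with hndef
  have hncast : ((n:ℕ):ℝ) = (N:ℝ) - 1 := by
    rw [hndef]
    push_cast [Nat.cast_sub (by omega : 1 ≤ N)]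
    ring
  have he1 : (n:ℝ) - 2 * (p * m) < -1 := by rw [hncast, hpm]; linarith
  have he2 : (n:ℝ) - (7/4) * (p * m) < -1 := by rw [hncast, hpm]; linarith
  have h2t2 : 2 ≤ 2 * t := by rw [h2t]; linarith
  have h2t74 : 2 ≤ 7/4 * t := by rw [htdef]; linarith
  have hn21 : (n:ℝ) = 2 * t + 1 := by rw [hncast, h2t]; ring
  have hpm2t : p * m = 2 * t := by rw [hpm, h2t]
  set B : ℝ := K + 1 with hBdef
  have hB : 1 ≤ B := by rw [hBdef]; linarith
  -- the radial profile of φ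
  set e : Euc N := EuclideanSpace.single (⟨0, hN0⟩ : Fin N) (1:ℝ) with hedef
  have hne : ‖e‖ = 1 := by rw [hedef, EuclideanSpace.norm_single]; norm_num
  set ψ : ℝ → ℝ := fun r => φ (r • e) with hψdef
  have hnormsmul : ∀ r : ℝ, 0 ≤ r → ‖r • e‖ = r := by
    intro r hr
    rw [norm_smul, hne, mul_one, Real.norm_eq_abs, abs_of_nonneg hr]
  have hψx : ∀ x : Euc N, φ x = ψ ‖x‖ := by
    intro x
    exact hφrad x (‖x‖ • e) (by rw [hnormsmul _ (norm_nonneg x)])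
  have hψ1 : ∀ r : ℝ, 0 ≤ r → r ≤ ρ → ψ r = 1 := by
    intro r h0 h1
    exact hφ1 _ (by rw [hnormsmul _ h0]; exact h1)
  have hψ0 : ∀ r : ℝ, 2 * ρ ≤ r → ψ r = 0 := by
    intro r h2r
    have h0 : 0 ≤ r := le_trans (by linarith) h2r
    exact hφ0 _ (by rw [hnormsmul _ h0]; exact h2r)
  have hψmem : ∀ r : ℝ, ψ r ∈ Set.Icc (0:ℝ) 1 := fun r => hφ01 _
  have hψcont : Continuous ψ := hφsmooth.continuous.comp (continuous_id.smul continuous_const)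
  have hbub : ∀ (ε : ℝ) (x : Euc N), bubbleFn N α ε x = S13aux.Wfun K p m t ε ‖x‖ :=
    fun ε x => rfl
  -- nontriviality and volume
  haveI : Nontrivial (Euc N) :=
    ⟨⟨e, 0, fun h => by rw [h, norm_zero] at hne; norm_num at hne⟩⟩
  set V : ℝ := (volume (Metric.ball (0:Euc N) 1)).toReal with hVdef
  have hV : 0 < V := ENNReal.toReal_pos (measure_ball_pos volume 0 one_pos).ne'
    measure_ball_lt_top.ne
  -- radial reduction
  have hreduce : ∀ ε : ℝ, 0 < ε →
      (∫ x in Omega N α,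
          (φ x * bubbleFn N α ε x) ^ 2 * Real.log ((φ x * bubbleFn N α ε x) ^ 2))
        = (N:ℝ) * V *
            ∫ r in Ioi (0:ℝ), r ^ n * S13aux.Gfun (ψ r * S13aux.Wfun K p m t ε r) := by
    intro ε hε
    have hOmega : volume.restrict (Omega N α) = volume.restrict (Metric.ball (0:Euc N) 1) := by
      rw [Omega]
      split_ifs
      · rfl
      · exact Measure.restrict_congr_set (diff_null_ae_eq_self (measure_singleton 0))
    have hout : ∀ x : Euc N, x ∉ Metric.ball (0:Euc N) 1 →
        (φ x * bubbleFn N α ε x) ^ 2 * Real.log ((φ x * bubbleFn N α ε x) ^ 2) = 0 := by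
      intro x hx
      have h1 : (1:ℝ) ≤ ‖x‖ := by
        have := Metric.mem_ball.not.1 hx
        rw [dist_zero_right] at this
        linarith [not_lt.1 this]
      have hzero : φ x = 0 := hφ0 x (by linarith)
      rw [hzero, zero_mul]
      norm_num
    have hfn : (fun x : Euc N =>
        (φ x * bubbleFn N α ε x) ^ 2 * Real.log ((φ x * bubbleFn N α ε x) ^ 2))
        = fun x : Euc N =>
            (fun r : ℝ => S13aux.Gfun (ψ r * S13aux.Wfun K p m t ε r)) ‖x‖ := by
      funext x
      rw [hψx x, hbub]
      rfl
    calc (∫ x in Omega N α,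
            (φ x * bubbleFn N α ε x) ^ 2 * Real.log ((φ x * bubbleFn N α ε x) ^ 2))
        = ∫ x in Metric.ball (0:Euc N) 1,
            (φ x * bubbleFn N α ε x) ^ 2 * Real.log ((φ x * bubbleFn N α ε x) ^ 2) := by
          rw [hOmega]
      _ = ∫ x : Euc N,
            (φ x * bubbleFn N α ε x) ^ 2 * Real.log ((φ x * bubbleFn N α ε x) ^ 2) :=
          setIntegral_eq_integral_of_forall_compl_eq_zero hout
      _ = ∫ x : Euc N, (fun r : ℝ => S13aux.Gfun (ψ r * S13aux.Wfun K p m t ε r)) ‖x‖ := by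
          rw [hfn]
      _ = (N:ℝ) * V *
            ∫ r in Ioi (0:ℝ), r ^ n * S13aux.Gfun (ψ r * S13aux.Wfun K p m t ε r) := by
          rw [MeasureTheory.integral_fun_norm_addHaar volume
            (fun r : ℝ => S13aux.Gfun (ψ r * S13aux.Wfun K p m t ε r))]
          simp only [finrank_euclideanSpace_fin, nsmul_eq_mul, smul_eq_mul, ← hndef, ← hVdef]
          rw [mul_assoc]
          rfl
  -- model integrals
  have hInt1 : IntegrableOn (fun s => s ^ n * S13aux.Gfun (S13aux.Ufun K p m s)) (Ioi (0:ℝ)) :=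
    S13aux.integrableOn_modelG hp hm hK he1 he2
  have hInt2 : IntegrableOn (fun s => s ^ n * (S13aux.Ufun K p m s) ^ 2) (Ioi (0:ℝ)) := by
    have h := S13aux.integrableOn_model (n := n) hp hm hK (q := 2) (by norm_num) (by
      norm_num
      exact he1)
    refine h.congr_fun (fun s _ => ?_) measurableSet_Ioi
    simp only [Real.rpow_two]
  set a : ℝ := ∫ s in Ioi (0:ℝ), s ^ n * S13aux.Gfun (S13aux.Ufun K p m s) with hadef
  set b : ℝ := ∫ s in Ioi (0:ℝ), s ^ n * (S13aux.Ufun K p m s) ^ 2 with hbdef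
  have hbpos : 0 < b := S13aux.b_pos hp hm hK hInt2
  -- tail constants
  set J1 : ℝ := ∫ r in Ioi ρ, r ^ ((n:ℝ) - 2 * (p * m)) with hJ1def
  set J2 : ℝ := ∫ r in Ioi ρ, r ^ ((n:ℝ) - 7/4 * (p * m)) with hJ2def
  have hJ1 : 0 ≤ J1 := setIntegral_nonneg measurableSet_Ioi
    (fun r hr => Real.rpow_nonneg (le_of_lt (lt_trans hρ0 hr)) _)
  have hJ2 : 0 ≤ J2 := setIntegral_nonneg measurableSet_Ioi
    (fun r hr => Real.rpow_nonneg (le_of_lt (lt_trans hρ0 hr)) _)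
  set Ct : ℝ := Real.log (B ^ 2) * K ^ 2 * J1 + 8 * B ^ ((4:ℝ)⁻¹) * K ^ ((7:ℝ)/4) * J2
    with hCtdef
  have hCt : 0 ≤ Ct := by
    have hlogB : 0 ≤ Real.log (B ^ 2) := Real.log_nonneg (one_le_pow₀ hB)
    have h1 : 0 ≤ Real.log (B ^ 2) * K ^ 2 * J1 := by positivity
    have h2 : 0 ≤ 8 * B ^ ((4:ℝ)⁻¹) * K ^ ((7:ℝ)/4) * J2 := by positivity
    rw [hCtdef]; linarith
  -- the constants of the theorem
  refine ⟨(N:ℝ) * V * (2 * t * b), by positivity, (N:ℝ) * V * (|a| + 2 * Ct) + 1, by positivity,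
    ρ ^ 2, by positivity, ?_⟩
  rintro ε ⟨hε, hερ⟩
  have hε1 : ε ≤ 1 := by nlinarith only [hε, hερ, hρ0, hρhalf]
  -- the bound  K ε^t ρ^{-pm} ≤ B
  have hWB : K * ε ^ t * ρ ^ (-(p * m)) ≤ B := by
    have h1 : ε ^ t ≤ (ρ ^ 2) ^ (t:ℝ) := Real.rpow_le_rpow hε.le hερ.le htpos.le
    have h2 : ((ρ ^ 2 : ℝ)) ^ (t:ℝ) = ρ ^ (p * m) := by
      rw [← Real.rpow_natCast ρ 2, ← Real.rpow_mul hρ0.le, hpm2t]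
      norm_num
    have h3 : ρ ^ (p * m) * ρ ^ (-(p * m)) = 1 := by
      rw [← Real.rpow_add hρ0]
      norm_num
    have hρpow : 0 < ρ ^ (-(p * m)) := Real.rpow_pos_of_pos hρ0 _
    calc K * ε ^ t * ρ ^ (-(p * m)) ≤ K * ρ ^ (p * m) * ρ ^ (-(p * m)) := by
          have := h1.trans (le_of_eq h2)
          exact mul_le_mul_of_nonneg_right (mul_le_mul_of_nonneg_left this hK.le) hρpow.le
      _ = K * (ρ ^ (p * m) * ρ ^ (-(p * m))) := by ring
      _ = K := by rw [h3, mul_one]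
      _ ≤ B := by rw [hBdef]; linarith only []
  -- measurability of the cutoff times bubble
  have hWmeas : Measurable (S13aux.Wfun K p m t ε) := S13aux.Wfun_measurable
  have hψWmeas : Measurable (fun r => ψ r * S13aux.Wfun K p m t ε r) :=
    hψcont.measurable.mul hWmeas
  -- tail estimates
  have htail1 := S13aux.tail_estimate (n := n) hp hm hK hB htpos hρ0 hε hε1 he1 he2 h2t2 h2t74
    hWB hWmeas (fun r hr => (S13aux.Wfun_pos hK hp hε (le_of_lt (lt_trans hρ0 hr))).le)
    (fun r _ => le_rfl)
  have htail2 := S13aux.tail_estimate (n := n) hp hm hK hB htpos hρ0 hε hε1 he1 he2 h2t2 h2t74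
    hWB hψWmeas
    (fun r hr => mul_nonneg (hψmem r).1
      (S13aux.Wfun_pos hK hp hε (le_of_lt (lt_trans hρ0 hr))).le)
    (fun r hr => by
      have hWpos := S13aux.Wfun_pos (K := K) (p := p) (m := m) (t := t) hK hp hε
        (le_of_lt (lt_trans hρ0 hr))
      calc ψ r * S13aux.Wfun K p m t ε r ≤ 1 * S13aux.Wfun K p m t ε r :=
            mul_le_mul_of_nonneg_right (hψmem r).2 hWpos.le
        _ = _ := one_mul _)
  -- main identity
  have hmain := S13aux.main_identity (n := n) hp hm hK hε hpm2t hn21 hInt1 hInt2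
  -- splitting
  have hEq : EqOn (fun r => r ^ n * S13aux.Gfun (ψ r * S13aux.Wfun K p m t ε r))
      (fun r => r ^ n * S13aux.Gfun (S13aux.Wfun K p m t ε r)) (Ioc 0 ρ) := by
    intro r hr
    simp only
    rw [hψ1 r hr.1.le hr.2, one_mul]
  have hFIoc : IntegrableOn (fun r => r ^ n * S13aux.Gfun (S13aux.Wfun K p m t ε r))
      (Ioc 0 ρ) := hmain.2.mono_set Ioc_subset_Ioi_self
  have hFullIoc : IntegrableOn (fun r => r ^ n * S13aux.Gfun (ψ r * S13aux.Wfun K p m t ε r))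
      (Ioc 0 ρ) := hFIoc.congr_fun (fun r hr => (hEq hr).symm) measurableSet_Ioc
  have hsplitFull : (∫ r in Ioi (0:ℝ), r ^ n * S13aux.Gfun (ψ r * S13aux.Wfun K p m t ε r))
      = (∫ r in Ioc (0:ℝ) ρ, r ^ n * S13aux.Gfun (ψ r * S13aux.Wfun K p m t ε r))
        + ∫ r in Ioi ρ, r ^ n * S13aux.Gfun (ψ r * S13aux.Wfun K p m t ε r) := by
    rw [← setIntegral_union (Ioc_disjoint_Ioi le_rfl) measurableSet_Ioi hFullIoc htail2.1,
      Ioc_union_Ioi_eq_Ioi hρ0.le]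
  have hsplitF : (∫ r in Ioi (0:ℝ), r ^ n * S13aux.Gfun (S13aux.Wfun K p m t ε r))
      = (∫ r in Ioc (0:ℝ) ρ, r ^ n * S13aux.Gfun (S13aux.Wfun K p m t ε r))
        + ∫ r in Ioi ρ, r ^ n * S13aux.Gfun (S13aux.Wfun K p m t ε r) := by
    rw [← setIntegral_union (Ioc_disjoint_Ioi le_rfl) measurableSet_Ioi hFIoc htail1.1,
      Ioc_union_Ioi_eq_Ioi hρ0.le]
  have hIocEq : (∫ r in Ioc (0:ℝ) ρ, r ^ n * S13aux.Gfun (ψ r * S13aux.Wfun K p m t ε r))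
      = ∫ r in Ioc (0:ℝ) ρ, r ^ n * S13aux.Gfun (S13aux.Wfun K p m t ε r) :=
    setIntegral_congr_fun measurableSet_Ioc hEq
  -- put everything together
  set R1 : ℝ := ∫ r in Ioi ρ, r ^ n * S13aux.Gfun (S13aux.Wfun K p m t ε r) with hR1def
  set R2 : ℝ := ∫ r in Ioi ρ, r ^ n * S13aux.Gfun (ψ r * S13aux.Wfun K p m t ε r) with hR2def
  have hR1 : |R1| ≤ Ct * ε ^ 2 := htail1.2
  have hR2 : |R2| ≤ Ct * ε ^ 2 := htail2.2
  have hS : (∫ r in Ioi (0:ℝ), r ^ n * S13aux.Gfun (ψ r * S13aux.Wfun K p m t ε r))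
      = ε ^ 2 * (a + 2 * t * Real.log (1/ε) * b) - R1 + R2 := by
    rw [hsplitFull, hIocEq]
    have : (∫ r in Ioc (0:ℝ) ρ, r ^ n * S13aux.Gfun (S13aux.Wfun K p m t ε r))
        = ε ^ 2 * (a + 2 * t * Real.log (1/ε) * b) - R1 := by
      have := hsplitF
      rw [hmain.1] at this
      rw [← hadef, ← hbdef] at this
      linarith only [this]
    rw [this]
  rw [hreduce ε hε, hS]
  -- final computation
  have habs : |(N:ℝ) * V * (ε ^ 2 * (a + 2 * t * Real.log (1/ε) * b) - R1 + R2)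
      - (N:ℝ) * V * (2 * t * b) * ε ^ 2 * Real.log (1/ε)|
      = ((N:ℝ) * V) * |ε ^ 2 * a - R1 + R2| := by
    rw [show (N:ℝ) * V * (ε ^ 2 * (a + 2 * t * Real.log (1/ε) * b) - R1 + R2)
        - (N:ℝ) * V * (2 * t * b) * ε ^ 2 * Real.log (1/ε)
        = ((N:ℝ) * V) * (ε ^ 2 * a - R1 + R2) from by ring, abs_mul,
      abs_of_pos (show (0:ℝ) < (N:ℝ) * V by positivity)]
  rw [habs]
  have htriangle : |ε ^ 2 * a - R1 + R2| ≤ |a| * ε ^ 2 + Ct * ε ^ 2 + Ct * ε ^ 2 := by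
    have h1 : |ε ^ 2 * a - R1 + R2| ≤ |ε ^ 2 * a - R1| + |R2| := abs_add_le _ _
    have h2 : |ε ^ 2 * a - R1| ≤ |ε ^ 2 * a| + |R1| := abs_sub _ _
    have h3 : |ε ^ 2 * a| = |a| * ε ^ 2 := by
      rw [abs_mul, abs_of_nonneg (by positivity : (0:ℝ) ≤ ε ^ 2), mul_comm]
    linarith only [h1, h2, h3, hR1, hR2]
  calc ((N:ℝ) * V) * |ε ^ 2 * a - R1 + R2|
      ≤ ((N:ℝ) * V) * (|a| * ε ^ 2 + Ct * ε ^ 2 + Ct * ε ^ 2) :=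
        mul_le_mul_of_nonneg_left htriangle (by positivity)
    _ = ((N:ℝ) * V * (|a| + 2 * Ct)) * ε ^ 2 := by ring
    _ ≤ ((N:ℝ) * V * (|a| + 2 * Ct) + 1) * ε ^ 2 :=
        mul_le_mul_of_nonneg_right (le_add_of_nonneg_right zero_le_one) (by positivity)
end
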